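/- arXiv:2010.13065 — 10 statements merged into one kernel-verified Lean document; each statement's English description precedes it below -/
import Mathlib

section
/- Let 0 ≤ σ ≤ β with σ + β > 1, and let ε > 0. Define γ = σ + β − 1 if β < 1, γ = σ − ε if β = 1, and γ = σ if β > 1. Then there exists a constant C (depending only on σ, β, ε) such that for all x ∈ ℝ, ∫_ℝ ⟨y − x⟩^{−σ} ⟨y⟩^{−β} dy ≤ C ⟨x⟩^{−γ}. -/
open MeasureTheory

namespace JBAux

open Set



lemma one_le_base (t : ℝ) : (1:ℝ) ≤ 1 + t ^ 2 := by nlinarith [sq_nonneg t]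
lemma base_pos (t : ℝ) : (0:ℝ) < 1 + t ^ 2 := lt_of_lt_of_le one_pos (one_le_base t)

lemma jb_nonneg (t s : ℝ) : 0 ≤ (1 + t ^ 2) ^ s := Real.rpow_nonneg (base_pos t).le _

lemma min_trick {u v : ℝ} (hu : 1 ≤ u) (hv : 1 ≤ v) {a b : ℝ} (ha : 0 ≤ a) (hb : 0 ≤ b) :
    u ^ (-a) * v ^ (-b) ≤ u ^ (-(a + b)) + v ^ (-(a + b)) := by
  have hu0 : (0:ℝ) < u := lt_of_lt_of_le one_pos hu
  have hv0 : (0:ℝ) < v := lt_of_lt_of_le one_pos hv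
  rcases le_total u v with h | h
  · have h1 : v ^ (-b) ≤ u ^ (-b) := Real.rpow_le_rpow_of_nonpos hu0 h (by linarith)
    have h2 : u ^ (-a) * v ^ (-b) ≤ u ^ (-a) * u ^ (-b) :=
      mul_le_mul_of_nonneg_left h1 (Real.rpow_nonneg hu0.le _)
    have h3 : u ^ (-a) * u ^ (-b) = u ^ (-(a + b)) := by
      rw [← Real.rpow_add hu0]; congr 1; ring
    nlinarith [Real.rpow_nonneg hv0.le (-(a + b))]
  · have h1 : u ^ (-a) ≤ v ^ (-a) := Real.rpow_le_rpow_of_nonpos hv0 h (by linarith)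
    have h2 : u ^ (-a) * v ^ (-b) ≤ v ^ (-a) * v ^ (-b) :=
      mul_le_mul_of_nonneg_right h1 (Real.rpow_nonneg hv0.le _)
    have h3 : v ^ (-a) * v ^ (-b) = v ^ (-(a + b)) := by
      rw [← Real.rpow_add hv0]; congr 1; ring
    nlinarith [Real.rpow_nonneg hu0.le (-(a + b))]

lemma extract' {A c t s : ℝ} (hA : 0 < A) (hc : 0 < c) (hs : 0 ≤ s) (ht : A / c ≤ t) :
    t ^ (-(s / 2)) ≤ c ^ (s / 2) * A ^ (-(s / 2)) := by
  have h0 : (0:ℝ) < A / c := by positivity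
  have h1 : t ^ (-(s / 2)) ≤ (A / c) ^ (-(s / 2)) :=
    Real.rpow_le_rpow_of_nonpos h0 ht (neg_nonpos.mpr (by positivity))
  have h2 : (A / c) ^ (-(s / 2)) = c ^ (s / 2) * A ^ (-(s / 2)) := by
    rw [Real.div_rpow hA.le hc.le, Real.rpow_neg hc.le, div_eq_mul_inv, inv_inv]; ring
  linarith

-- the continuous function fact
lemma cont_jb (c s : ℝ) : Continuous fun y : ℝ => (1 + (y - c) ^ 2) ^ (-(s / 2)) := by
  apply Continuous.rpow_const (by continuity)
  intro y
  exact Or.inl (base_pos (y - c)).ne'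

lemma integrable_jb {p : ℝ} (hp : 1 < p) :
    Integrable (fun y : ℝ => (1 + y ^ 2) ^ (-(p / 2))) := by
  have hint : Integrable (fun y : ℝ => (2:ℝ) ^ (p / 2) * (1 + ‖y‖) ^ (-p)) := by
    apply Integrable.const_mul
    apply integrable_one_add_norm (E := ℝ)
    simpa using hp
  apply hint.mono'
  · have := cont_jb 0 p
    simp only [sub_zero] at this
    exact this.aestronglyMeasurable
  · filter_upwards with y
    rw [Real.norm_eq_abs, abs_of_nonneg (jb_nonneg y _)]
    have h1 : ((1:ℝ) + ‖y‖) ^ 2 / 2 ≤ 1 + y ^ 2 := by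
      rw [Real.norm_eq_abs]
      nlinarith [sq_nonneg (1 - |y|), sq_abs y, abs_nonneg y]
    have h2 := extract' (A := (1 + ‖y‖) ^ 2) (c := 2) (t := 1 + y ^ 2) (s := p)
      (by positivity) (by norm_num) (by linarith) h1
    refine h2.trans (le_of_eq ?_)
    congr 1
    rw [← Real.rpow_natCast (1 + ‖y‖) 2, ← Real.rpow_mul (by positivity)]
    congr 1
    push_cast
    ring





lemma cover (x y : ℝ) : x ^ 2 / 4 ≤ (y - x) ^ 2 ∨ x ^ 2 / 4 ≤ y ^ 2 := by
  rcases le_or_gt (x ^ 2 / 4) ((y - x) ^ 2) with h | h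
  · exact Or.inl h
  · right; nlinarith [sq_nonneg (y - x), sq_nonneg y, sq_nonneg (y + x), sq_nonneg (y - x/2), sq_nonneg (y + x/2), sq_nonneg (3*x/2 - y)]

lemma pointwise_bound {σ β g : ℝ} (hσ0 : 0 ≤ σ) (hσβ : σ ≤ β) (hg0 : 0 ≤ g) (hgσ : g ≤ σ)
    (x y : ℝ) :
    (1 + (y - x) ^ 2) ^ (-σ / 2) * (1 + y ^ 2) ^ (-β / 2) ≤
      4 ^ (g / 2) * (1 + x ^ 2) ^ (-(g / 2)) *
        ((1 + (y - x) ^ 2) ^ (-((σ + β - g) / 2)) + (1 + y ^ 2) ^ (-((σ + β - g) / 2))) := by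
  set u := 1 + (y - x) ^ 2 with hu
  set v := 1 + y ^ 2 with hv
  have hu1 : (1:ℝ) ≤ u := one_le_base _
  have hv1 : (1:ℝ) ≤ v := one_le_base _
  have hu0 : (0:ℝ) < u := base_pos _
  have hv0 : (0:ℝ) < v := base_pos _
  have hA : (0:ℝ) < 1 + x ^ 2 := base_pos _
  have hc4 : (0:ℝ) < 4 := by norm_num
  have hsum : ∀ w : ℝ, 0 < w → w ^ (-σ / 2) = w ^ (-(g / 2)) * w ^ (-((σ - g) / 2)) := by
    intro w hw
    rw [← Real.rpow_add hw]; congr 1; ring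
  have hsumβ : ∀ w : ℝ, 0 < w → w ^ (-β / 2) = w ^ (-(g / 2)) * w ^ (-((β - g) / 2)) := by
    intro w hw
    rw [← Real.rpow_add hw]; congr 1; ring
  rcases cover x y with hc | hc
  · -- (y-x)^2 large
    have hAc : (1 + x ^ 2) / 4 ≤ u := by rw [hu]; nlinarith
    have e1 : u ^ (-(g / 2)) ≤ 4 ^ (g / 2) * (1 + x ^ 2) ^ (-(g / 2)) :=
      extract' hA hc4 hg0 hAc
    have e2 : u ^ (-((σ - g) / 2)) * v ^ (-(β / 2)) ≤
        u ^ (-((σ + β - g) / 2)) + v ^ (-((σ + β - g) / 2)) := by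
      have := min_trick hu1 hv1 (a := (σ - g)/2) (b := β/2)
        (by linarith) (by linarith)
      rw [show ((σ - g)/2 + β/2) = (σ + β - g)/2 by ring] at this
      exact this
    calc u ^ (-σ / 2) * v ^ (-β / 2)
        = u ^ (-(g / 2)) * (u ^ (-((σ - g) / 2)) * v ^ (-(β / 2))) := by
          rw [hsum u hu0, show (-β/2) = (-(β/2)) by ring]; ring
      _ ≤ (4 ^ (g / 2) * (1 + x ^ 2) ^ (-(g / 2))) *
            (u ^ (-((σ + β - g) / 2)) + v ^ (-((σ + β - g) / 2))) := by
          apply mul_le_mul e1 e2 (by positivity) (by positivity)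
  · -- y^2 large
    have hAc : (1 + x ^ 2) / 4 ≤ v := by rw [hv]; nlinarith
    have e1 : v ^ (-(g / 2)) ≤ 4 ^ (g / 2) * (1 + x ^ 2) ^ (-(g / 2)) :=
      extract' hA hc4 hg0 hAc
    have e2 : u ^ (-(σ / 2)) * v ^ (-((β - g) / 2)) ≤
        u ^ (-((σ + β - g) / 2)) + v ^ (-((σ + β - g) / 2)) := by
      have := min_trick hu1 hv1 (a := σ/2) (b := (β - g)/2)
        (by linarith) (by linarith)
      rw [show (σ/2 + (β - g)/2) = (σ + β - g)/2 by ring] at this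
      exact this
    calc u ^ (-σ / 2) * v ^ (-β / 2)
        = v ^ (-(g / 2)) * (u ^ (-(σ / 2)) * v ^ (-((β - g) / 2))) := by
          rw [hsumβ v hv0, show (-σ/2) = (-(σ/2)) by ring]; ring
      _ ≤ (4 ^ (g / 2) * (1 + x ^ 2) ^ (-(g / 2))) *
            (u ^ (-((σ + β - g) / 2)) + v ^ (-((σ + β - g) / 2))) := by
          apply mul_le_mul e1 e2 (by positivity) (by positivity)

lemma lem1 {σ β g : ℝ} (hσ0 : 0 ≤ σ) (hσβ : σ ≤ β) (hg0 : 0 ≤ g) (hgσ : g ≤ σ)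
    (hP : 1 < σ + β - g) :
    ∃ C > 0, ∀ x : ℝ,
      (∫ y : ℝ, (1 + (y - x) ^ 2) ^ (-σ / 2) * (1 + y ^ 2) ^ (-β / 2)) ≤
        C * (1 + x ^ 2) ^ (-(g / 2)) := by
  set P := σ + β - g with hPdef
  have hKint : Integrable (fun y : ℝ => (1 + y ^ 2) ^ (-(P / 2))) := integrable_jb hP
  set K := ∫ y : ℝ, (1 + y ^ 2) ^ (-(P / 2)) with hK
  have hK0 : 0 ≤ K := integral_nonneg fun y => jb_nonneg y _
  refine ⟨4 ^ (g / 2) * (2 * K + 1), by positivity, fun x => ?_⟩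
  have hA : (0:ℝ) < 1 + x ^ 2 := base_pos _
  have h1 : Integrable (fun y : ℝ => (1 + (y - x) ^ 2) ^ (-(P / 2))) :=
    hKint.comp_sub_right x
  have hRHSint : Integrable (fun y : ℝ =>
      4 ^ (g / 2) * (1 + x ^ 2) ^ (-(g / 2)) *
        ((1 + (y - x) ^ 2) ^ (-(P / 2)) + (1 + y ^ 2) ^ (-(P / 2)))) :=
    (h1.add hKint).const_mul _
  have hFmeas : AEStronglyMeasurable
      (fun y : ℝ => (1 + (y - x) ^ 2) ^ (-σ / 2) * (1 + y ^ 2) ^ (-β / 2)) volume := by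
    apply Continuous.aestronglyMeasurable
    have c1 := cont_jb x σ
    have c2 := cont_jb 0 β
    simp only [sub_zero] at c2
    have : Continuous fun y : ℝ => (1 + (y - x) ^ 2) ^ (-(σ / 2)) * (1 + y ^ 2) ^ (-(β / 2)) :=
      c1.mul c2
    simpa [neg_div] using this
  have hptw := fun y => pointwise_bound hσ0 hσβ hg0 hgσ x y
  have hFint : Integrable
      (fun y : ℝ => (1 + (y - x) ^ 2) ^ (-σ / 2) * (1 + y ^ 2) ^ (-β / 2)) := by
    apply hRHSint.mono' hFmeas
    filter_upwards with y
    rw [Real.norm_eq_abs, abs_of_nonneg (mul_nonneg (jb_nonneg _ _) (jb_nonneg _ _))]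
    exact hptw y
  have hmono := integral_mono hFint hRHSint hptw
  refine hmono.trans ?_
  rw [MeasureTheory.integral_const_mul, integral_add h1 hKint,
    integral_sub_right_eq_self (fun y : ℝ => (1 + y ^ 2) ^ (-(P / 2))) x]
  have hAg : (0:ℝ) ≤ (1 + x ^ 2) ^ (-(g / 2)) := jb_nonneg x _
  have h4 : (0:ℝ) < 4 ^ (g / 2) := by positivity
  calc 4 ^ (g / 2) * (1 + x ^ 2) ^ (-(g / 2)) * (K + K)
      ≤ 4 ^ (g / 2) * (1 + x ^ 2) ^ (-(g / 2)) * (2 * K + 1) := by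
        apply mul_le_mul_of_nonneg_left (by linarith) (by positivity)
    _ = 4 ^ (g / 2) * (2 * K + 1) * (1 + x ^ 2) ^ (-(g / 2)) := by ring





-- pointwise comparison with pure power, for positive y
lemma jb_le_rpow {y b : ℝ} (hy : 0 < y) (hb : 0 ≤ b) :
    (1 + y ^ 2) ^ (-(b / 2)) ≤ y ^ (-b) := by
  have h1 : (1 + y ^ 2) ^ (-(b / 2)) ≤ (y ^ 2) ^ (-(b / 2)) := by
    apply Real.rpow_le_rpow_of_nonpos (by positivity) (by nlinarith)
      (neg_nonpos.mpr (by positivity))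
  refine h1.trans (le_of_eq ?_)
  rw [← Real.rpow_natCast y 2, ← Real.rpow_mul hy.le]
  congr 1
  push_cast
  ring

lemma jb_cont0 (s : ℝ) : Continuous fun y : ℝ => (1 + y ^ 2) ^ (-(s / 2)) := by
  have := cont_jb 0 s
  simpa using this

lemma S_half {b : ℝ} (hb0 : 0 ≤ b) (hb1 : b < 1) {R : ℝ} (hR : 0 ≤ R) :
    ∫ y in Icc (0:ℝ) R, (1 + y ^ 2) ^ (-(b / 2)) ≤ R ^ (1 - b) / (1 - b) := by
  rw [integral_Icc_eq_integral_Ioc]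
  have hint : IntegrableOn (fun y : ℝ => y ^ (-b)) (Ioc 0 R) :=
    (intervalIntegral.intervalIntegrable_rpow' (by linarith)).1
  have hmono : ∀ y ∈ Ioc (0:ℝ) R, (1 + y ^ 2) ^ (-(b / 2)) ≤ y ^ (-b) :=
    fun y hy => jb_le_rpow hy.1 hb0
  have h1 := setIntegral_mono_on
    ((jb_cont0 b).integrableOn_Icc.mono_set Ioc_subset_Icc_self)
    hint measurableSet_Ioc hmono
  refine h1.trans (le_of_eq ?_)
  rw [← intervalIntegral.integral_of_le hR,
    integral_rpow (Or.inl (by linarith))]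
  rw [Real.zero_rpow (by linarith : -b + 1 ≠ 0)]
  rw [show (-b + 1) = 1 - b by ring]
  ring

lemma S_bound {b : ℝ} (hb0 : 0 ≤ b) (hb1 : b < 1) {R : ℝ} (hR : 0 ≤ R) :
    ∫ y in Icc (-R) R, (1 + y ^ 2) ^ (-(b / 2)) ≤ 2 * (R ^ (1 - b) / (1 - b)) := by
  have hsplit : Icc (-R) R = Icc (-R) 0 ∪ Ioc 0 R :=
    (Icc_union_Ioc_eq_Icc (by linarith) hR).symm
  have hdisj : Disjoint (Icc (-R) (0:ℝ)) (Ioc 0 R) := by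
    rw [Set.disjoint_left]
    rintro a ⟨_, h2⟩ ⟨h3, _⟩
    linarith
  have hi1 : IntegrableOn (fun y : ℝ => (1 + y ^ 2) ^ (-(b / 2))) (Icc (-R) 0) :=
    (jb_cont0 b).integrableOn_Icc
  have hi2 : IntegrableOn (fun y : ℝ => (1 + y ^ 2) ^ (-(b / 2))) (Ioc 0 R) :=
    (jb_cont0 b).integrableOn_Icc.mono_set Ioc_subset_Icc_self
  rw [hsplit, setIntegral_union hdisj measurableSet_Ioc hi1 hi2]
  have hneg : ∫ y in Icc (-R) (0:ℝ), (1 + y ^ 2) ^ (-(b / 2)) =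
      ∫ y in Icc (0:ℝ) R, (1 + y ^ 2) ^ (-(b / 2)) := by
    have h := intervalIntegral.integral_comp_neg (a := (0:ℝ)) (b := R)
      (f := fun y : ℝ => (1 + y ^ 2) ^ (-(b / 2)))
    simp only [neg_sq, neg_zero] at h
    rw [integral_Icc_eq_integral_Ioc, integral_Icc_eq_integral_Ioc,
      ← intervalIntegral.integral_of_le (by linarith : -R ≤ 0),
      ← intervalIntegral.integral_of_le hR]
    exact h.symm
  have hIoc : ∫ y in Ioc (0:ℝ) R, (1 + y ^ 2) ^ (-(b / 2)) =
      ∫ y in Icc (0:ℝ) R, (1 + y ^ 2) ^ (-(b / 2)) := (integral_Icc_eq_integral_Ioc).symm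
  rw [hneg, hIoc]
  have := S_half hb0 hb1 hR
  linarith

lemma T_half {p : ℝ} (hp : 1 < p) {R : ℝ} (hR : 0 < R) :
    ∫ y in Ioi R, (1 + y ^ 2) ^ (-(p / 2)) ≤ R ^ (1 - p) / (p - 1) := by
  have hint : IntegrableOn (fun y : ℝ => y ^ (-p)) (Ioi R) :=
    integrableOn_Ioi_rpow_of_lt (by linarith) hR
  have hjint : IntegrableOn (fun y : ℝ => (1 + y ^ 2) ^ (-(p / 2))) (Ioi R) :=
    (integrable_jb hp).integrableOn
  have hmono : ∀ y ∈ Ioi R, (1 + y ^ 2) ^ (-(p / 2)) ≤ y ^ (-p) :=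
    fun y hy => jb_le_rpow (hR.trans hy) (by linarith)
  have h1 := setIntegral_mono_on hjint hint measurableSet_Ioi hmono
  refine h1.trans (le_of_eq ?_)
  rw [integral_Ioi_rpow_of_lt (by linarith : -p < -1) hR]
  rw [show (-p + 1) = -(p - 1) by ring, show (1 - p) = -(p - 1) by ring]
  rw [neg_div, div_neg, neg_neg]

lemma T_bound {p : ℝ} (hp : 1 < p) {R : ℝ} (hR : 0 < R) :
    ∫ y in {y : ℝ | R ≤ |y|}, (1 + y ^ 2) ^ (-(p / 2)) ≤ 2 * (R ^ (1 - p) / (p - 1)) := by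
  have hset : {y : ℝ | R ≤ |y|} = Iic (-R) ∪ Ici R := by
    ext y
    simp only [mem_setOf_eq, mem_union, mem_Iic, mem_Ici, le_abs]
    constructor
    · rintro (h | h)
      · exact Or.inr h
      · exact Or.inl (by linarith)
    · rintro (h | h)
      · exact Or.inr (by linarith)
      · exact Or.inl h
  have hdisj : Disjoint (Iic (-R)) (Ici R) := by
    rw [Set.disjoint_left]
    intro a h1 h2
    simp only [mem_Iic] at h1
    simp only [mem_Ici] at h2
    linarith
  have hjint : Integrable (fun y : ℝ => (1 + y ^ 2) ^ (-(p / 2))) := integrable_jb hp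
  rw [hset, setIntegral_union hdisj measurableSet_Ici hjint.integrableOn hjint.integrableOn]
  have hneg : ∫ y in Iic (-R), (1 + y ^ 2) ^ (-(p / 2)) =
      ∫ y in Ioi R, (1 + y ^ 2) ^ (-(p / 2)) := by
    have h := integral_comp_neg_Iic (-R) (fun y : ℝ => (1 + y ^ 2) ^ (-(p / 2)))
    simp only [neg_sq, neg_neg] at h
    exact h
  have hIci : ∫ y in Ici R, (1 + y ^ 2) ^ (-(p / 2)) =
      ∫ y in Ioi R, (1 + y ^ 2) ^ (-(p / 2)) := integral_Ici_eq_integral_Ioi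
  rw [hneg, hIci]
  have := T_half hp hR
  linarith





lemma shift_integral (F : ℝ → ℝ) (c : ℝ) (S : Set ℝ) (hS : MeasurableSet S) :
    ∫ y in (fun y => y - c) ⁻¹' S, F (y - c) = ∫ z in S, F z := by
  have hS' : MeasurableSet ((fun y : ℝ => y - c) ⁻¹' S) :=
    hS.preimage (measurable_sub_const c)
  calc ∫ y in (fun y => y - c) ⁻¹' S, F (y - c)
      = ∫ y, ((fun y : ℝ => y - c) ⁻¹' S).indicator (fun y => F (y - c)) y :=
        (integral_indicator hS').symm
    _ = ∫ y, S.indicator F (y - c) := by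
        refine integral_congr_ae (Filter.Eventually.of_forall fun y => ?_)
        by_cases h : y - c ∈ S <;>
          simp [Set.indicator_apply, Set.mem_preimage, h]
    _ = ∫ z, S.indicator F z := integral_sub_right_eq_self (fun y : ℝ => S.indicator F y) c
    _ = ∫ z in S, F z := integral_indicator hS

-- the tail bound for shifted bracket
lemma T_shift {p : ℝ} (hp : 1 < p) {R : ℝ} (hR : 0 < R) (x : ℝ) :
    ∫ y in {y : ℝ | R ≤ |y - x|}, (1 + (y - x) ^ 2) ^ (-(p / 2)) ≤
      2 * (R ^ (1 - p) / (p - 1)) := by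
  have hS : MeasurableSet {z : ℝ | R ≤ |z|} :=
    (isClosed_le continuous_const continuous_abs).measurableSet
  have hpre : {y : ℝ | R ≤ |y - x|} = (fun y : ℝ => y - x) ⁻¹' {z : ℝ | R ≤ |z|} := rfl
  rw [hpre, shift_integral (fun z : ℝ => (1 + z ^ 2) ^ (-(p / 2))) x _ hS]
  exact T_bound hp hR

lemma D_shift (s : ℝ) (R x : ℝ) :
    ∫ y in Icc (x - R) (x + R), (1 + (y - x) ^ 2) ^ (-(s / 2)) =
      ∫ z in Icc (-R) R, (1 + z ^ 2) ^ (-(s / 2)) := by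
  have hpre : Icc (x - R) (x + R) = (fun y : ℝ => y - x) ⁻¹' Icc (-R) R := by
    ext y
    simp only [mem_Icc, mem_preimage]
    constructor <;> intro h <;> constructor <;> linarith [h.1, h.2]
  rw [hpre, shift_integral (fun z : ℝ => (1 + z ^ 2) ^ (-(s / 2))) x _ measurableSet_Icc]





lemma abs_le_sqrtA (x : ℝ) : |x| ≤ (1 + x ^ 2) ^ ((1:ℝ) / 2) := by
  have h := Real.rpow_le_rpow (sq_nonneg x) (show x ^ 2 ≤ 1 + x ^ 2 by linarith)
    (by norm_num : (0:ℝ) ≤ 1 / 2)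
  have h2 : (x ^ 2) ^ ((1:ℝ) / 2) = |x| := by
    rw [← sq_abs x, ← Real.rpow_natCast |x| 2, ← Real.rpow_mul (abs_nonneg x)]
    push_cast
    norm_num
  rwa [h2] at h

lemma sq_rpow_half {R s : ℝ} (hR : 0 ≤ R) : (R ^ 2) ^ (-(s / 2)) = R ^ (-s) := by
  rw [← Real.rpow_natCast R 2, ← Real.rpow_mul hR]
  congr 1
  push_cast
  ring

set_option maxHeartbeats 1600000 in
lemma lem2 {σ β : ℝ} (hσ0 : 0 ≤ σ) (hσβ : σ ≤ β) (hβ1 : β < 1) (hsum : 1 < σ + β) :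
    ∃ C > 0, ∀ x : ℝ, 1 ≤ |x| →
      (∫ y : ℝ, (1 + (y - x) ^ 2) ^ (-σ / 2) * (1 + y ^ 2) ^ (-β / 2)) ≤
        C * (1 + x ^ 2) ^ (-(σ + β - 1) / 2) := by
  have hσ1 : σ < 1 := lt_of_le_of_lt hσβ hβ1
  have hβ0 : 0 ≤ β := le_trans hσ0 hσβ
  have hγ0 : (0:ℝ) < σ + β - 1 := by linarith
  have hp1 : 1 < σ + β := hsum
  have h1β : (0:ℝ) < 1 - β := by linarith
  have h1σ : (0:ℝ) < 1 - σ := by linarith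
  have hc1 : (0:ℝ) < 4 ^ (σ / 2) * (2 / (1 - β)) :=
    mul_pos (Real.rpow_pos_of_pos (by norm_num) _) (div_pos (by norm_num) h1β)
  have hc2 : (0:ℝ) < 4 ^ (β / 2) * (2 / (1 - σ)) :=
    mul_pos (Real.rpow_pos_of_pos (by norm_num) _) (div_pos (by norm_num) h1σ)
  have hc3 : (0:ℝ) < 8 ^ ((σ + β - 1) / 2) * (4 / (σ + β - 1)) :=
    mul_pos (Real.rpow_pos_of_pos (by norm_num) _) (div_pos (by norm_num) hγ0)
  refine ⟨4 ^ (σ / 2) * (2 / (1 - β)) + 4 ^ (β / 2) * (2 / (1 - σ)) +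
      8 ^ ((σ + β - 1) / 2) * (4 / (σ + β - 1)), by linarith, fun x hx => ?_⟩
  simp only [neg_div]
  set A := 1 + x ^ 2 with hAdef
  have hA : (0:ℝ) < A := base_pos x
  have hA1 : (1:ℝ) ≤ A := one_le_base x
  set R := |x| / 2 with hRdef
  have hR0 : (0:ℝ) < R := by rw [hRdef]; linarith
  have hx2 : (1:ℝ) ≤ x ^ 2 := by nlinarith [sq_abs x, abs_nonneg x]
  have hRA8 : A / 8 ≤ R ^ 2 := by
    rw [hAdef, hRdef, div_pow]
    have := sq_abs x
    norm_num
    linarith [sq_abs x, hx2]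
  have hRleA : R ≤ A ^ ((1:ℝ) / 2) := by
    have h1 : R ≤ |x| := by rw [hRdef]; linarith
    exact h1.trans (by rw [hAdef]; exact abs_le_sqrtA x)
  set c1x := 4 ^ (σ / 2) * A ^ (-(σ / 2)) with hc1xdef
  set c2x := 4 ^ (β / 2) * A ^ (-(β / 2)) with hc2xdef
  have hc1x0 : (0:ℝ) ≤ c1x :=
    mul_nonneg (Real.rpow_nonneg (by norm_num) _) (Real.rpow_nonneg hA.le _)
  have hc2x0 : (0:ℝ) ≤ c2x :=
    mul_nonneg (Real.rpow_nonneg (by norm_num) _) (Real.rpow_nonneg hA.le _)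
  set SE : Set ℝ := {y | R ≤ |y - x|} ∩ {y | R ≤ |y|} with hSEdef
  have mE1 : MeasurableSet {y : ℝ | R ≤ |y - x|} :=
    (isClosed_le continuous_const ((continuous_id.sub continuous_const).abs)).measurableSet
  have mE2 : MeasurableSet {y : ℝ | R ≤ |y|} :=
    (isClosed_le continuous_const continuous_abs).measurableSet
  have mE : MeasurableSet SE := mE1.inter mE2
  set g1 : ℝ → ℝ := fun y => c1x * (1 + y ^ 2) ^ (-(β / 2)) with hg1def
  set g2 : ℝ → ℝ := fun y => c2x * (1 + (y - x) ^ 2) ^ (-(σ / 2)) with hg2def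
  set g3 : ℝ → ℝ :=
    fun y => (1 + (y - x) ^ 2) ^ (-((σ + β) / 2)) + (1 + y ^ 2) ^ (-((σ + β) / 2)) with hg3def
  -- pointwise cover bound
  have hcover : ∀ y : ℝ,
      (1 + (y - x) ^ 2) ^ (-(σ / 2)) * (1 + y ^ 2) ^ (-(β / 2)) ≤
        (Icc (-R) R).indicator g1 y + (Icc (x - R) (x + R)).indicator g2 y +
          SE.indicator g3 y := by
    intro y
    have hn1 : 0 ≤ (Icc (-R) R).indicator g1 y :=
      Set.indicator_nonneg (fun t _ => mul_nonneg hc1x0 (jb_nonneg t _)) y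
    have hn2 : 0 ≤ (Icc (x - R) (x + R)).indicator g2 y :=
      Set.indicator_nonneg (fun t _ => mul_nonneg hc2x0 (jb_nonneg (t - x) _)) y
    have hn3 : 0 ≤ SE.indicator g3 y :=
      Set.indicator_nonneg (fun t _ => add_nonneg (jb_nonneg (t - x) _) (jb_nonneg t _)) y
    by_cases hyA : y ∈ Icc (-R) R
    · have hyabs : |y| ≤ R := abs_le.mpr ⟨hyA.1, hyA.2⟩
      have habs2 : R ≤ |y - x| := by
        have h := abs_sub_abs_le_abs_sub x y
        rw [abs_sub_comm x y] at h
        rw [hRdef] at hyabs ⊢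
        linarith
      have hsq : R ^ 2 ≤ (y - x) ^ 2 := by
        have h2 := pow_le_pow_left₀ hR0.le habs2 2
        rwa [sq_abs] at h2
      have hbase : A / 4 ≤ 1 + (y - x) ^ 2 := by
        rw [hAdef]
        rw [hRdef, div_pow] at hsq
        linarith [sq_abs x]
      have hext : (1 + (y - x) ^ 2) ^ (-(σ / 2)) ≤ c1x :=
        extract' hA (by norm_num) hσ0 hbase
      have hFg1 : (1 + (y - x) ^ 2) ^ (-(σ / 2)) * (1 + y ^ 2) ^ (-(β / 2)) ≤ g1 y :=
        mul_le_mul_of_nonneg_right hext (jb_nonneg y _)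
      rw [Set.indicator_of_mem hyA]
      linarith
    · by_cases hyD : y ∈ Icc (x - R) (x + R)
      · have hyx : |y - x| ≤ R := by
          rw [mem_Icc] at hyD
          rw [abs_le]
          constructor <;> linarith [hyD.1, hyD.2]
        have habs : R ≤ |y| := by
          have h := abs_sub_abs_le_abs_sub x y
          rw [abs_sub_comm x y] at h
          rw [hRdef] at hyx ⊢
          linarith
        have hsq : R ^ 2 ≤ y ^ 2 := by
          have h2 := pow_le_pow_left₀ hR0.le habs 2
          rwa [sq_abs] at h2
        have hbase : A / 4 ≤ 1 + y ^ 2 := by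
          rw [hAdef]
          rw [hRdef, div_pow] at hsq
          linarith [sq_abs x]
        have hext : (1 + y ^ 2) ^ (-(β / 2)) ≤ c2x :=
          extract' hA (by norm_num) hβ0 hbase
        have hFg2 : (1 + (y - x) ^ 2) ^ (-(σ / 2)) * (1 + y ^ 2) ^ (-(β / 2)) ≤ g2 y := by
          have h := mul_le_mul_of_nonneg_left hext (jb_nonneg (y - x) (-(σ / 2)))
          simp only [hg2def]
          linarith [h]
        rw [Set.indicator_of_mem hyD]
        linarith
      · have hy1 : R ≤ |y - x| := by
          by_contra h
          push_neg at h
          refine hyD ?_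
          rw [mem_Icc]
          have h2 := abs_le.mp h.le
          constructor <;> linarith [h2.1, h2.2]
        have hy2 : R ≤ |y| := by
          by_contra h
          push_neg at h
          refine hyA ?_
          have h2 := abs_le.mp h.le
          rw [mem_Icc]
          constructor <;> linarith [h2.1, h2.2]
        have hyE : y ∈ SE := ⟨hy1, hy2⟩
        have hFg3 : (1 + (y - x) ^ 2) ^ (-(σ / 2)) * (1 + y ^ 2) ^ (-(β / 2)) ≤ g3 y := by
          have h := min_trick (one_le_base (y - x)) (one_le_base y)
            (a := σ / 2) (b := β / 2) (by linarith) (by linarith)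
          rw [show σ / 2 + β / 2 = (σ + β) / 2 by ring] at h
          exact h
        rw [Set.indicator_of_mem hyE]
        linarith
  -- integrability
  have hg1int : Integrable ((Icc (-R) R).indicator g1) := by
    rw [integrable_indicator_iff measurableSet_Icc]
    exact (continuous_const.mul (jb_cont0 β)).integrableOn_Icc
  have hg2int : Integrable ((Icc (x - R) (x + R)).indicator g2) := by
    rw [integrable_indicator_iff measurableSet_Icc]
    exact (continuous_const.mul (cont_jb x σ)).integrableOn_Icc
  have ht1int : Integrable (fun y : ℝ => (1 + (y - x) ^ 2) ^ (-((σ + β) / 2))) :=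
    (integrable_jb hp1).comp_sub_right x
  have hg3glob : Integrable g3 := ht1int.add (integrable_jb hp1)
  have hg3int : Integrable (SE.indicator g3) := hg3glob.indicator mE
  have hGint : Integrable (fun y : ℝ =>
      (Icc (-R) R).indicator g1 y + (Icc (x - R) (x + R)).indicator g2 y +
        SE.indicator g3 y) := (hg1int.add hg2int).add hg3int
  have hFmeas : AEStronglyMeasurable
      (fun y : ℝ => (1 + (y - x) ^ 2) ^ (-(σ / 2)) * (1 + y ^ 2) ^ (-(β / 2))) volume :=
    ((cont_jb x σ).mul (jb_cont0 β)).aestronglyMeasurable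
  have hFint : Integrable
      (fun y : ℝ => (1 + (y - x) ^ 2) ^ (-(σ / 2)) * (1 + y ^ 2) ^ (-(β / 2))) := by
    apply hGint.mono' hFmeas
    filter_upwards with y
    rw [Real.norm_eq_abs, abs_of_nonneg (mul_nonneg (jb_nonneg _ _) (jb_nonneg _ _))]
    exact hcover y
  have hmono := integral_mono hFint hGint hcover
  have h12 : Integrable (fun a : ℝ =>
      (Icc (-R) R).indicator g1 a + (Icc (x - R) (x + R)).indicator g2 a) :=
    hg1int.add hg2int
  have heq : (∫ a : ℝ, ((Icc (-R) R).indicator g1 a + (Icc (x - R) (x + R)).indicator g2 a +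
      SE.indicator g3 a)) = (∫ y in Icc (-R) R, g1 y) + (∫ y in Icc (x - R) (x + R), g2 y) +
      ∫ y in SE, g3 y := by
    rw [integral_add h12 hg3int, integral_add hg1int hg2int,
      integral_indicator measurableSet_Icc, integral_indicator measurableSet_Icc,
      integral_indicator mE]
  rw [heq] at hmono
  -- bound the three pieces
  have hI1 : ∫ y in Icc (-R) R, g1 y ≤
      (4 ^ (σ / 2) * (2 / (1 - β))) * A ^ (-((σ + β - 1) / 2)) := by
    have h0 : ∫ y in Icc (-R) R, g1 y =
        c1x * ∫ y in Icc (-R) R, (1 + y ^ 2) ^ (-(β / 2)) := by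
      rw [hg1def]
      exact MeasureTheory.integral_const_mul c1x _
    have h1 := S_bound hβ0 hβ1 hR0.le
    have hRb : R ^ (1 - β) ≤ A ^ ((1 - β) / 2) := by
      have h2 : R ^ (1 - β) ≤ (A ^ ((1:ℝ) / 2)) ^ (1 - β) :=
        Real.rpow_le_rpow hR0.le hRleA (by linarith)
      rwa [← Real.rpow_mul hA.le, show (1:ℝ) / 2 * (1 - β) = (1 - β) / 2 by ring] at h2
    have key : A ^ (-(σ / 2)) * R ^ (1 - β) ≤ A ^ (-((σ + β - 1) / 2)) := by
      calc A ^ (-(σ / 2)) * R ^ (1 - β) ≤ A ^ (-(σ / 2)) * A ^ ((1 - β) / 2) :=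
            mul_le_mul_of_nonneg_left hRb (Real.rpow_nonneg hA.le _)
        _ = A ^ (-((σ + β - 1) / 2)) := by
            rw [← Real.rpow_add hA]; congr 1; ring
    calc ∫ y in Icc (-R) R, g1 y
        ≤ c1x * (2 * (R ^ (1 - β) / (1 - β))) := by
          rw [h0]; exact mul_le_mul_of_nonneg_left h1 hc1x0
      _ = (4 ^ (σ / 2) * (2 / (1 - β))) * (A ^ (-(σ / 2)) * R ^ (1 - β)) := by
          rw [hc1xdef]; ring
      _ ≤ (4 ^ (σ / 2) * (2 / (1 - β))) * A ^ (-((σ + β - 1) / 2)) :=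
          mul_le_mul_of_nonneg_left key (le_of_lt hc1)
  have hI2 : ∫ y in Icc (x - R) (x + R), g2 y ≤
      (4 ^ (β / 2) * (2 / (1 - σ))) * A ^ (-((σ + β - 1) / 2)) := by
    have h0 : ∫ y in Icc (x - R) (x + R), g2 y =
        c2x * ∫ y in Icc (-R) R, (1 + y ^ 2) ^ (-(σ / 2)) := by
      rw [hg2def]
      rw [MeasureTheory.integral_const_mul c2x _]
      rw [D_shift σ R x]
    have h1 := S_bound hσ0 hσ1 hR0.le
    have hRb : R ^ (1 - σ) ≤ A ^ ((1 - σ) / 2) := by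
      have h2 : R ^ (1 - σ) ≤ (A ^ ((1:ℝ) / 2)) ^ (1 - σ) :=
        Real.rpow_le_rpow hR0.le hRleA (by linarith)
      rwa [← Real.rpow_mul hA.le, show (1:ℝ) / 2 * (1 - σ) = (1 - σ) / 2 by ring] at h2
    have key : A ^ (-(β / 2)) * R ^ (1 - σ) ≤ A ^ (-((σ + β - 1) / 2)) := by
      calc A ^ (-(β / 2)) * R ^ (1 - σ) ≤ A ^ (-(β / 2)) * A ^ ((1 - σ) / 2) :=
            mul_le_mul_of_nonneg_left hRb (Real.rpow_nonneg hA.le _)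
        _ = A ^ (-((σ + β - 1) / 2)) := by
            rw [← Real.rpow_add hA]; congr 1; ring
    calc ∫ y in Icc (x - R) (x + R), g2 y
        ≤ c2x * (2 * (R ^ (1 - σ) / (1 - σ))) := by
          rw [h0]; exact mul_le_mul_of_nonneg_left h1 hc2x0
      _ = (4 ^ (β / 2) * (2 / (1 - σ))) * (A ^ (-(β / 2)) * R ^ (1 - σ)) := by
          rw [hc2xdef]; ring
      _ ≤ (4 ^ (β / 2) * (2 / (1 - σ))) * A ^ (-((σ + β - 1) / 2)) :=
          mul_le_mul_of_nonneg_left key (le_of_lt hc2)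
  have hI3 : ∫ y in SE, g3 y ≤
      (8 ^ ((σ + β - 1) / 2) * (4 / (σ + β - 1))) * A ^ (-((σ + β - 1) / 2)) := by
    have hsplit : ∫ y in SE, g3 y =
        (∫ y in SE, (1 + (y - x) ^ 2) ^ (-((σ + β) / 2))) +
          ∫ y in SE, (1 + y ^ 2) ^ (-((σ + β) / 2)) := by
      rw [hg3def]
      exact integral_add ht1int.integrableOn (integrable_jb hp1).integrableOn
    have hs1 : ∫ y in SE, (1 + (y - x) ^ 2) ^ (-((σ + β) / 2)) ≤
        ∫ y in {y : ℝ | R ≤ |y - x|}, (1 + (y - x) ^ 2) ^ (-((σ + β) / 2)) := by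
      apply setIntegral_mono_set ht1int.integrableOn
      · filter_upwards with y
        exact jb_nonneg (y - x) _
      · exact HasSubset.Subset.eventuallyLE inter_subset_left
    have hs2 : ∫ y in SE, (1 + y ^ 2) ^ (-((σ + β) / 2)) ≤
        ∫ y in {y : ℝ | R ≤ |y|}, (1 + y ^ 2) ^ (-((σ + β) / 2)) := by
      apply setIntegral_mono_set (integrable_jb hp1).integrableOn
      · filter_upwards with y
        exact jb_nonneg y _
      · exact HasSubset.Subset.eventuallyLE inter_subset_right
    have hT1 := T_shift hp1 hR0 x
    have hT2 := T_bound hp1 hR0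
    have hRγ : R ^ (1 - (σ + β)) ≤ 8 ^ ((σ + β - 1) / 2) * A ^ (-((σ + β - 1) / 2)) := by
      rw [show (1 - (σ + β)) = -(σ + β - 1) by ring, ← sq_rpow_half hR0.le]
      exact extract' hA (by norm_num) hγ0.le hRA8
    have hfinal : 4 * (R ^ (1 - (σ + β)) / (σ + β - 1)) ≤
        (8 ^ ((σ + β - 1) / 2) * (4 / (σ + β - 1))) * A ^ (-((σ + β - 1) / 2)) := by
      have h4 : (0:ℝ) ≤ 4 / (σ + β - 1) := le_of_lt (div_pos (by norm_num) hγ0)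
      calc 4 * (R ^ (1 - (σ + β)) / (σ + β - 1))
          = (4 / (σ + β - 1)) * R ^ (1 - (σ + β)) := by ring
        _ ≤ (4 / (σ + β - 1)) * (8 ^ ((σ + β - 1) / 2) * A ^ (-((σ + β - 1) / 2))) :=
            mul_le_mul_of_nonneg_left hRγ h4
        _ = (8 ^ ((σ + β - 1) / 2) * (4 / (σ + β - 1))) * A ^ (-((σ + β - 1) / 2)) := by
            ring
    rw [hsplit]
    linarith
  have hsum3 : (4 ^ (σ / 2) * (2 / (1 - β)) + 4 ^ (β / 2) * (2 / (1 - σ)) +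
      8 ^ ((σ + β - 1) / 2) * (4 / (σ + β - 1))) * A ^ (-((σ + β - 1) / 2)) =
      (4 ^ (σ / 2) * (2 / (1 - β))) * A ^ (-((σ + β - 1) / 2)) +
      (4 ^ (β / 2) * (2 / (1 - σ))) * A ^ (-((σ + β - 1) / 2)) +
      (8 ^ ((σ + β - 1) / 2) * (4 / (σ + β - 1))) * A ^ (-((σ + β - 1) / 2)) := by ring
  rw [hsum3]
  linarith




end JBAux

open JBAux in
/-- **A convolution estimate for Japanese brackets.**
If `0 ≤ σ ≤ β`, `σ + β > 1` and `ε > 0`, then with `γ = σ + β − 1` if `β < 1`,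
`γ = σ − ε` if `β = 1`, and `γ = σ` if `β > 1`, one has
`∫ ⟨y − x⟩^{−σ} ⟨y⟩^{−β} dy ≤ C ⟨x⟩^{−γ}` uniformly in `x`,
where `⟨x⟩ = (1 + x²)^{1/2}`. -/
theorem stmt1 (σ β ε : ℝ) (hσ : 0 ≤ σ) (hσβ : σ ≤ β) (hsum : 1 < σ + β) (hε : 0 < ε) :
    ∃ C > 0, ∀ x : ℝ,
      (∫ y : ℝ, (1 + (y - x) ^ 2) ^ (-σ / 2) * (1 + y ^ 2) ^ (-β / 2)) ≤
        C * (1 + x ^ 2) ^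
          (-(if β < 1 then σ + β - 1 else if β = 1 then σ - ε else σ) / 2) := by
  rcases lt_trichotomy β 1 with hβ | hβ | hβ
  · -- β < 1
    simp only [if_pos hβ]
    obtain ⟨C₀, hC₀, h0⟩ := lem1 (g := 0) hσ hσβ le_rfl hσ (by linarith)
    obtain ⟨C₁, hC₁, h1⟩ := lem2 hσ hσβ hβ hsum
    have h0' : ∀ x : ℝ,
        (∫ y : ℝ, (1 + (y - x) ^ 2) ^ (-σ / 2) * (1 + y ^ 2) ^ (-β / 2)) ≤ C₀ := by
      intro x
      have := h0 x
      norm_num at this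
      exact this
    set c2 : ℝ := 2 ^ ((σ + β - 1) / 2) with hc2def
    have hc2pos : 0 < c2 := Real.rpow_pos_of_pos (by norm_num) _
    refine ⟨C₁ + C₀ * c2, by positivity, fun x => ?_⟩
    have hAγ : 0 ≤ (1 + x ^ 2) ^ (-(σ + β - 1) / 2) := jb_nonneg x _
    rcases le_or_gt 1 |x| with hx | hx
    · have h := h1 x hx
      have hexp : (C₁ + C₀ * c2) * (1 + x ^ 2) ^ (-(σ + β - 1) / 2) =
          C₁ * (1 + x ^ 2) ^ (-(σ + β - 1) / 2) +
          C₀ * c2 * (1 + x ^ 2) ^ (-(σ + β - 1) / 2) := by ring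
      have hterm : 0 ≤ C₀ * c2 * (1 + x ^ 2) ^ (-(σ + β - 1) / 2) := by positivity
      linarith
    · have hA2 : (1 + x ^ 2) ^ ((σ + β - 1) / 2) ≤ c2 := by
        rw [hc2def]
        apply Real.rpow_le_rpow (base_pos x).le (by nlinarith [abs_nonneg x, sq_abs x])
          (by linarith)
      have h2 : 1 ≤ c2 * (1 + x ^ 2) ^ (-(σ + β - 1) / 2) := by
        have hzero : (1 + x ^ 2) ^ ((σ + β - 1) / 2) *
            (1 + x ^ 2) ^ (-(σ + β - 1) / 2) = 1 := by
          rw [← Real.rpow_add (base_pos x)]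
          rw [show (σ + β - 1) / 2 + -(σ + β - 1) / 2 = 0 by ring, Real.rpow_zero]
        calc (1:ℝ) = (1 + x ^ 2) ^ ((σ + β - 1) / 2) *
              (1 + x ^ 2) ^ (-(σ + β - 1) / 2) := hzero.symm
          _ ≤ c2 * (1 + x ^ 2) ^ (-(σ + β - 1) / 2) :=
              mul_le_mul_of_nonneg_right hA2 hAγ
      have h3 := h0' x
      have hexp : (C₁ + C₀ * c2) * (1 + x ^ 2) ^ (-(σ + β - 1) / 2) =
          C₁ * (1 + x ^ 2) ^ (-(σ + β - 1) / 2) +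
          C₀ * (c2 * (1 + x ^ 2) ^ (-(σ + β - 1) / 2)) := by ring
      have hterm : 0 ≤ C₁ * (1 + x ^ 2) ^ (-(σ + β - 1) / 2) := by positivity
      nlinarith [mul_le_mul_of_nonneg_left h2 hC₀.le]
  · -- β = 1
    subst hβ
    rw [if_neg (by norm_num), if_pos rfl]
    have hσpos : 0 < σ := by linarith
    set e : ℝ := min ε (σ / 2) with hedef
    have he0 : 0 < e := lt_min hε (by linarith)
    have heσ : e ≤ σ / 2 := min_le_right _ _
    have heε : e ≤ ε := min_le_left _ _
    obtain ⟨C, hC, h⟩ := lem1 (g := σ - e) hσ hσβ (by linarith) (by linarith) (by linarith)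
    refine ⟨C, hC, fun x => ?_⟩
    refine (h x).trans ?_
    apply mul_le_mul_of_nonneg_left _ hC.le
    apply Real.rpow_le_rpow_of_exponent_le (one_le_base x)
    linarith
  · -- β > 1
    rw [if_neg (by linarith), if_neg (by linarith)]
    obtain ⟨C, hC, h⟩ := lem1 (g := σ) hσ hσβ hσ le_rfl (by linarith)
    refine ⟨C, hC, fun x => ?_⟩
    refine (h x).trans (le_of_eq ?_)
    rw [neg_div]
end

section
/- Let 1 < α < 2 and ε > 0. There exist constants c ∈ (0,1) and C > 0, depending only on α and ε, such that for every real N ≥ 1, all integers k₂ ≠ k₃ with |k₂| ≤ cN and |k₃| ≤ cN, and every μ ∈ ℝ: #{k₁ ∈ ℤ : N/2 < |k₁| ≤ N and |Φ_{k₁,k₂,k₃} − μ| ≤ N^ε} ≤ C N^ε (1 + N^{2−α}/(1 + |k₂ − k₃|)). In particular the bound is uniform in μ. -/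
/-- The resonance function `Φ_{k₁,k₂,k₃} = |k₁|^α − |k₂|^α + |k₃|^α − |k₁−k₂+k₃|^α`. -/
noncomputable def resPhi (α : ℝ) (k₁ k₂ k₃ : ℤ) : ℝ :=
  |(k₁ : ℝ)| ^ α - |(k₂ : ℝ)| ^ α + |(k₃ : ℝ)| ^ α - |((k₁ - k₂ + k₃ : ℤ) : ℝ)| ^ α

/-!
For `k₁ > 0` and `m = k₂ - k₃`, `Φ_{k₁,k₂,k₃}` is, up to a constant independent of `k₁`, the
value at `t = k₁` of `g(t) = t^α - (t - m)^α`. On `(N/2, N]` we have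
`|g'(t)| = α |t^(α-1) - (t-m)^(α-1)| ≥ α(α-1)(2N)^(α-2) |m|` by concavity of `t^(α-1)`, so by the
mean value theorem the `k₁` with `Φ` in a window of width `2N^ε` span an interval of length
`≲ N^ε N^(2-α) / |m|`. Negative `k₁` reduce to positive ones through
`Φ_{-k₁,k₂,k₃} = Φ_{k₁,-k₂,-k₃}`.
-/

open Real Set

lemma mul_rpow_sub_one_mul_sub_le {p x y : ℝ} (hp₀ : 0 ≤ p) (hp₁ : p ≤ 1) (hx : 0 < x)
    (hy : 0 ≤ y) : p * x ^ (p - 1) * (x - y) ≤ x ^ p - y ^ p := by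
  have hbern := rpow_one_add_le_one_add_mul_self (s := y / x - 1)
    (by linarith [div_nonneg hy hx.le]) hp₀ hp₁
  rw [add_sub_cancel, div_rpow hy hx.le, div_le_iff₀ (rpow_pos_of_pos hx p)] at hbern
  have hxp : x ^ p = x ^ (p - 1) * x := by rw [rpow_sub_one hx.ne', div_mul_cancel₀ _ hx.ne']
  have hexpand : (1 + p * (y / x - 1)) * x ^ p = x ^ p - p * x ^ (p - 1) * (x - y) := by
    rw [hxp]; field_simp; ring
  linarith

lemma mul_rpow_sub_one_mul_abs_sub_le {p x y X : ℝ} (hp₀ : 0 ≤ p) (hp₁ : p ≤ 1) (hx : 0 < x)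
    (hy : 0 < y) (hxX : x ≤ X) (hyX : y ≤ X) : p * X ^ (p - 1) * |x - y| ≤ |x ^ p - y ^ p| := by
  wlog hyx : y ≤ x generalizing x y
  · rw [abs_sub_comm, abs_sub_comm (x ^ p)]
    exact this hy hx hyX hxX (le_of_not_ge hyx)
  have hXx : X ^ (p - 1) ≤ x ^ (p - 1) := rpow_le_rpow_of_nonpos hx hxX (by linarith)
  rw [abs_of_nonneg (sub_nonneg.2 hyx),
    abs_of_nonneg (sub_nonneg.2 (rpow_le_rpow hy.le hyx hp₀))]
  calc p * X ^ (p - 1) * (x - y) ≤ p * x ^ (p - 1) * (x - y) := by gcongr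
    _ ≤ x ^ p - y ^ p := mul_rpow_sub_one_mul_sub_le hp₀ hp₁ hx hy.le

lemma mul_sub_le_abs_sub_of_le_abs_deriv {f f' : ℝ → ℝ} {a b δ : ℝ} (hab : a ≤ b)
    (hf : ∀ t ∈ Icc a b, HasDerivAt f (f' t) t) (hδ : ∀ t ∈ Ioo a b, δ ≤ |f' t|) :
    δ * (b - a) ≤ |f b - f a| := by
  rcases hab.eq_or_lt with rfl | hlt
  · simp
  obtain ⟨ξ, hξ, hslope⟩ := exists_hasDerivAt_eq_slope f f' hlt
    (fun t ht ↦ (hf t ht).continuousAt.continuousWithinAt)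
    (fun t ht ↦ hf t (Ioo_subset_Icc_self ht))
  rw [eq_div_iff (sub_pos.2 hlt).ne'] at hslope
  rw [← hslope, abs_mul, abs_of_pos (sub_pos.2 hlt)]
  exact mul_le_mul_of_nonneg_right (hδ ξ hξ) (sub_pos.2 hlt).le

lemma mul_sub_le_abs_rpow_sub_rpow_shift {α m a b X : ℝ} (hα₁ : 1 < α) (hα₂ : α ≤ 2)
    (ha : 0 < a) (hma : m < a) (hab : a ≤ b) (hbX : b ≤ X) (hbmX : b - m ≤ X) :
    α * (α - 1) * X ^ (α - 2) * |m| * (b - a)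
      ≤ |(b ^ α - (b - m) ^ α) - (a ^ α - (a - m) ^ α)| := by
  refine mul_sub_le_abs_sub_of_le_abs_deriv (f := fun t ↦ t ^ α - (t - m) ^ α)
    (f' := fun t ↦ α * t ^ (α - 1) - α * (t - m) ^ (α - 1)) hab (fun t ht ↦ ?_)
    (fun t ht ↦ ?_)
  · have hshift := ((hasDerivAt_id' t).sub_const m).rpow_const (p := α)
      (Or.inl (by linarith [ht.1]))
    exact (hasDerivAt_rpow_const (Or.inl (by linarith [ht.1]))).sub (by simpa using hshift)
  · have hbound := mul_rpow_sub_one_mul_abs_sub_le (p := α - 1) (x := t) (y := t - m) (X := X)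
      (by linarith) (by linarith) (by linarith [ht.1]) (by linarith [ht.1])
      (by linarith [ht.2]) (by linarith [ht.2])
    rw [sub_sub_cancel, show α - 1 - 1 = α - 2 by ring] at hbound
    rw [← mul_sub, abs_mul, abs_of_pos (by linarith : (0 : ℝ) < α)]
    calc α * (α - 1) * X ^ (α - 2) * |m| = α * ((α - 1) * X ^ (α - 2) * |m|) := by ring
      _ ≤ α * |t ^ (α - 1) - (t - m) ^ (α - 1)| := by gcongr

lemma Int.finite_and_ncard_le_of_abs_sub_le {S : Set ℤ} {L : ℝ} (hL : 0 ≤ L)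
    (h : ∀ k ∈ S, ∀ k' ∈ S, |(k : ℝ) - k'| ≤ L) : S.Finite ∧ (S.ncard : ℝ) ≤ 2 * L + 1 := by
  rcases S.eq_empty_or_nonempty with rfl | ⟨k₀, hk₀⟩
  · simp only [finite_empty, ncard_empty, CharP.cast_eq_zero, true_and]
    linarith
  set n : ℕ := ⌊L⌋₊
  have hsub : S ⊆ Icc (k₀ - n) (k₀ + n) := by
    intro k hk
    have hdist : (k - k₀).natAbs ≤ n := Nat.le_floor (by
      simpa only [Nat.cast_natAbs, Int.cast_abs, Int.cast_sub] using h k hk k₀ hk₀)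
    constructor <;> omega
  have hIcc : (Icc (k₀ - n) (k₀ + n)).ncard = 2 * n + 1 := by
    rw [← Finset.coe_Icc, ncard_coe_finset, Int.card_Icc]
    omega
  refine ⟨(finite_Icc _ _).subset hsub, ?_⟩
  calc (S.ncard : ℝ) ≤ ((2 * n + 1 : ℕ) : ℝ) := by
        exact_mod_cast hIcc ▸ ncard_le_ncard hsub (finite_Icc _ _)
    _ ≤ 2 * L + 1 := by push_cast; linarith [Nat.floor_le hL]

lemma resPhi_neg_left (α : ℝ) (k₁ k₂ k₃ : ℤ) : resPhi α (-k₁) k₂ k₃ = resPhi α k₁ (-k₂) (-k₃) := by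
  simp only [resPhi, Int.cast_neg, Int.cast_add, Int.cast_sub, abs_neg]
  rw [← abs_neg (-(k₁ : ℝ) - k₂ + k₃)]
  ring_nf

lemma resPhi_sub_resPhi {α : ℝ} {k k' k₂ k₃ : ℤ} (hk : 0 < k) (hk' : 0 < k') (hmk : k₂ - k₃ < k)
    (hmk' : k₂ - k₃ < k') :
    resPhi α k k₂ k₃ - resPhi α k' k₂ k₃ =
      ((k : ℝ) ^ α - (k - ((k₂ - k₃ : ℤ) : ℝ)) ^ α) -
        ((k' : ℝ) ^ α - (k' - ((k₂ - k₃ : ℤ) : ℝ)) ^ α) := by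
  have hpos : ∀ j : ℤ, k₂ - k₃ < j → |((j - k₂ + k₃ : ℤ) : ℝ)| = j - ((k₂ - k₃ : ℤ) : ℝ) := by
    intro j hj
    rw [abs_of_pos (by exact_mod_cast (by omega : 0 < j - k₂ + k₃))]
    push_cast
    ring
  simp only [resPhi, hpos k hmk, hpos k' hmk', abs_of_pos (Int.cast_pos.2 hk),
    abs_of_pos (Int.cast_pos.2 hk')]
  ring

def resonanceWindow (α N μ w : ℝ) (k₂ k₃ : ℤ) : Set ℤ :=
  {k₁ | N / 2 < k₁ ∧ (k₁ : ℝ) ≤ N ∧ |resPhi α k₁ k₂ k₃ - μ| ≤ w}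

lemma rpow_two_mul_le {N s : ℝ} (hN : 0 ≤ N) (hs₁ : s ≤ 1) :
    (2 * N) ^ s ≤ 2 * N ^ s := by
  rw [mul_rpow zero_le_two hN]
  gcongr
  simpa using rpow_le_rpow_of_exponent_le one_le_two hs₁

lemma sub_le_of_mem_resonanceWindow {α N μ w : ℝ} {k₂ k₃ k k' : ℤ} (hα₁ : 1 < α) (hα₂ : α ≤ 2)
    (hN : 0 < N) (hne : k₂ ≠ k₃) (hm : |((k₂ - k₃ : ℤ) : ℝ)| ≤ N / 2)
    (hk : k ∈ resonanceWindow α N μ w k₂ k₃) (hk' : k' ∈ resonanceWindow α N μ w k₂ k₃)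
    (hkk' : k ≤ k') :
    (k' - k : ℝ) ≤ 4 * w * N ^ (2 - α) / (α * (α - 1) * |((k₂ - k₃ : ℤ) : ℝ)|) := by
  obtain ⟨hk₁, hk₂, hkμ⟩ := hk
  obtain ⟨hk'₁, hk'₂, hk'μ⟩ := hk'
  set m : ℝ := ((k₂ - k₃ : ℤ) : ℝ)
  have hm₀ : 0 < |m| := abs_pos.2 (by simpa [m, sub_eq_zero] using hne)
  have hmk : m < k := by linarith [le_abs_self m]
  have hmk' : m < k' := by linarith [le_abs_self m]
  have hA : 0 < α * (α - 1) := mul_pos (by linarith) (by linarith)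
  have hrate := mul_sub_le_abs_rpow_sub_rpow_shift (X := 2 * N) hα₁ hα₂
    (by linarith : (0 : ℝ) < k) hmk (Int.cast_le.2 hkk') (by linarith) (by linarith [neg_abs_le m])
  rw [← resPhi_sub_resPhi (by exact_mod_cast (by linarith : (0 : ℝ) < k'))
    (by exact_mod_cast (by linarith : (0 : ℝ) < k)) (Int.cast_lt.1 hmk')
    (Int.cast_lt.1 hmk), show α - 2 = -(2 - α) by ring, rpow_neg (by positivity)] at hrate
  have hwindow : |resPhi α k' k₂ k₃ - resPhi α k k₂ k₃| ≤ 2 * w := by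
    rw [abs_le] at hkμ hk'μ ⊢
    constructor <;> linarith
  have hgap : (k' - k : ℝ) ≤ 2 * w * (2 * N) ^ (2 - α) / (α * (α - 1) * |m|) := by
    rw [le_div_iff₀ (by positivity)]
    have := hrate.trans hwindow
    field_simp at this
    linarith
  calc (k' - k : ℝ) ≤ 2 * w * (2 * N) ^ (2 - α) / (α * (α - 1) * |m|) := hgap
    _ ≤ 2 * w * (2 * N ^ (2 - α)) / (α * (α - 1) * |m|) := by
        gcongr
        · linarith [abs_nonneg (resPhi α k k₂ k₃ - μ)]
        · exact rpow_two_mul_le hN.le (by linarith)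
    _ = 4 * w * N ^ (2 - α) / (α * (α - 1) * |m|) := by ring

lemma finite_and_ncard_resonanceWindow_le {α N μ w : ℝ} {k₂ k₃ : ℤ} (hα₁ : 1 < α)
    (hα₂ : α ≤ 2) (hN : 0 < N) (hw : 0 ≤ w) (hne : k₂ ≠ k₃)
    (hm : |((k₂ - k₃ : ℤ) : ℝ)| ≤ N / 2) :
    (resonanceWindow α N μ w k₂ k₃).Finite ∧
      ((resonanceWindow α N μ w k₂ k₃).ncard : ℝ) ≤
        8 * w * N ^ (2 - α) / (α * (α - 1) * |((k₂ - k₃ : ℤ) : ℝ)|) + 1 := by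
  have hA : 0 < α * (α - 1) := mul_pos (by linarith) (by linarith)
  have hL : 0 ≤ 4 * w * N ^ (2 - α) / (α * (α - 1) * |((k₂ - k₃ : ℤ) : ℝ)|) := by positivity
  refine (Int.finite_and_ncard_le_of_abs_sub_le hL fun k hk k' hk' ↦ ?_).imp_right
    fun h ↦ h.trans_eq (by ring)
  rcases le_total k k' with hkk' | hk'k
  · rw [abs_sub_comm, abs_of_nonneg (sub_nonneg.2 (Int.cast_le.2 hkk'))]
    exact sub_le_of_mem_resonanceWindow hα₁ hα₂ hN hne hm hk hk' hkk'
  · rw [abs_of_nonneg (sub_nonneg.2 (Int.cast_le.2 hk'k))]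
    exact sub_le_of_mem_resonanceWindow hα₁ hα₂ hN hne hm hk' hk hk'k

open Pointwise in
lemma setOf_subset_resonanceWindow_union (α N μ w : ℝ) (k₂ k₃ : ℤ) :
    {k₁ : ℤ | N / 2 < |(k₁ : ℝ)| ∧ |(k₁ : ℝ)| ≤ N ∧ |resPhi α k₁ k₂ k₃ - μ| ≤ w} ⊆
      resonanceWindow α N μ w k₂ k₃ ∪ -resonanceWindow α N μ w (-k₂) (-k₃) := by
  rintro k ⟨hk₁, hk₂, hkμ⟩
  rcases le_or_gt 0 k with hk | hk
  · rw [abs_of_nonneg (Int.cast_nonneg hk)] at hk₁ hk₂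
    exact Or.inl ⟨hk₁, hk₂, hkμ⟩
  · rw [abs_of_neg (Int.cast_lt_zero.2 hk)] at hk₁ hk₂
    refine Or.inr ⟨by simpa using hk₁, by simpa using hk₂, ?_⟩
    rwa [resPhi_neg_left, neg_neg, neg_neg]

lemma two_mul_div_add_one_le_mul_one_add_div {A u v m : ℝ} (hA : 0 < A) (hu : 1 ≤ u)
    (hv : 0 ≤ v) (hm : 1 ≤ m) :
    2 * (8 * u * v / (A * m) + 1) ≤ (2 + 32 / A) * u * (1 + v / (1 + m)) := by
  have hhalf : 8 * u * v / (A * m) ≤ 16 * u * v / (A * (1 + m)) := by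
    rw [div_le_div_iff₀ (by positivity) (by positivity)]
    nlinarith [mul_nonneg (mul_nonneg (mul_nonneg (by linarith : 0 ≤ u) hv) hA.le)
      (by linarith : 0 ≤ m - 1)]
  have hsplit : (2 + 32 / A) * u * (1 + v / (1 + m)) =
      (2 + 32 / A) * u + 2 * u * v / (1 + m) + 2 * (16 * u * v / (A * (1 + m))) := by
    field_simp
    ring
  have hu' : 2 ≤ (2 + 32 / A) * u := by nlinarith [div_pos (by norm_num : (0 : ℝ) < 32) hA]
  have hrest : 0 ≤ 2 * u * v / (1 + m) := by positivity
  linarith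

/-- **Counting lemma (high-low-low regime).**
For `1 < α < 2` and `ε > 0` there are `c ∈ (0,1)` and `C > 0` such that for all `N ≥ 1`,
all `k₂ ≠ k₃` with `|k₂|, |k₃| ≤ cN`, and all `μ ∈ ℝ`:
`#{k₁ : N/2 < |k₁| ≤ N, |Φ_{k₁,k₂,k₃} − μ| ≤ N^ε} ≤ C N^ε (1 + N^{2−α}/(1+|k₂−k₃|))`. -/
theorem stmt3 (α ε : ℝ) (hα₁ : 1 < α) (hα₂ : α < 2) (hε : 0 < ε) :
    ∃ c ∈ Set.Ioo (0 : ℝ) 1, ∃ C > 0, ∀ N : ℝ, 1 ≤ N → ∀ k₂ k₃ : ℤ, k₂ ≠ k₃ →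
      |(k₂ : ℝ)| ≤ c * N → |(k₃ : ℝ)| ≤ c * N → ∀ μ : ℝ,
      (({k₁ : ℤ | N / 2 < |(k₁ : ℝ)| ∧ |(k₁ : ℝ)| ≤ N ∧
          |resPhi α k₁ k₂ k₃ - μ| ≤ N ^ ε}.ncard : ℝ)) ≤
        C * N ^ ε * (1 + N ^ (2 - α) / (1 + |((k₂ - k₃ : ℤ) : ℝ)|)) := by
  have hA : 0 < α * (α - 1) := mul_pos (by linarith) (by linarith)
  refine ⟨1 / 4, ⟨by norm_num, by norm_num⟩, 2 + 32 / (α * (α - 1)), by positivity, ?_⟩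
  intro N hN k₂ k₃ hne hk₂ hk₃ μ
  have hN₀ : 0 < N := by linarith
  have hm : |((k₂ - k₃ : ℤ) : ℝ)| ≤ N / 2 := by
    push_cast
    linarith [abs_sub (k₂ : ℝ) k₃]
  have hm_neg : |((-k₂ - -k₃ : ℤ) : ℝ)| = |((k₂ - k₃ : ℤ) : ℝ)| := by
    rw [← abs_neg]
    push_cast
    ring_nf
  obtain ⟨hfin, hcard⟩ := finite_and_ncard_resonanceWindow_le (μ := μ) hα₁ hα₂.le hN₀
    (rpow_nonneg hN₀.le ε) hne hm
  obtain ⟨hfin_neg, hcard_neg⟩ := finite_and_ncard_resonanceWindow_le (μ := μ) hα₁ hα₂.le hN₀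
    (rpow_nonneg hN₀.le ε) (neg_injective.ne hne) (hm_neg.trans_le hm)
  rw [hm_neg] at hcard_neg
  set W := resonanceWindow α N μ (N ^ ε) k₂ k₃
  set W_neg := resonanceWindow α N μ (N ^ ε) (-k₂) (-k₃)
  have hunion : ((W ∪ -W_neg).ncard : ℝ) ≤ W.ncard + W_neg.ncard := by
    exact_mod_cast (ncard_union_le W (-W_neg)).trans_eq (by rw [ncard_neg])
  calc _ ≤ ((W ∪ -W_neg).ncard : ℝ) := by
        exact_mod_cast ncard_le_ncard (setOf_subset_resonanceWindow_union α N μ (N ^ ε) k₂ k₃)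
          (hfin.union hfin_neg.neg)
    _ ≤ 2 * (8 * N ^ ε * N ^ (2 - α) / (α * (α - 1) * |((k₂ - k₃ : ℤ) : ℝ)|) + 1) := by
        linarith
    _ ≤ _ := two_mul_div_add_one_le_mul_one_add_div hA (one_le_rpow hN hε.le)
        (rpow_nonneg hN₀.le _) (by exact_mod_cast Int.one_le_abs (sub_ne_zero.2 hne))
end

section
/- Let 1 < α < 2 and ε > 0. There exists a constant C > 0, depending only on α and ε, such that for every real N ≥ 1, all integers k₂ ≠ k₃ with |k₂| ≤ 4N and |k₃| ≤ 4N, and every μ ∈ ℝ: #{k₁ ∈ ℤ : N/2 < |k₁| ≤ N and |Φ_{k₁,k₂,k₃} − μ| ≤ N^ε} ≤ C N^ε (1 + N^{2−α}/(1 + |k₂ − k₃|)). In particular the bound is uniform in μ. -/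
open Set

section AbsRpow

variable {p R : ℝ}

lemma rpow_sub_one_sub_mul_monotoneOn (hp₁ : 1 < p) (hp₂ : p ≤ 2) :
    MonotoneOn (fun x : ℝ => x ^ (p - 1) - (p - 1) * R ^ (p - 2) * x) (Icc 0 R) := by
  refine monotoneOn_of_hasDerivWithinAt_nonneg (f' := fun x => (p - 1) * x ^ (p - 2) -
    (p - 1) * R ^ (p - 2)) (convex_Icc 0 R) ?_ ?_ ?_
  · exact ((continuous_id.rpow_const fun _ => Or.inr (by linarith)).sub
      (continuous_const.mul continuous_id)).continuousOn
  · intro x hx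
    rw [interior_Icc] at hx
    have h := (Real.hasDerivAt_rpow_const (p := p - 1) (Or.inl hx.1.ne')).sub
      ((hasDerivAt_id x).const_mul ((p - 1) * R ^ (p - 2)))
    rw [show p - 1 - 1 = p - 2 by ring, mul_one] at h
    exact h.hasDerivWithinAt
  · intro x hx
    rw [interior_Icc] at hx
    have : R ^ (p - 2) ≤ x ^ (p - 2) := Real.rpow_le_rpow_of_nonpos hx.1 hx.2.le (by linarith)
    nlinarith

lemma abs_rpow_mul_self_sub_mul_monotoneOn (hp₁ : 1 < p) (hp₂ : p ≤ 2) :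
    MonotoneOn (fun x : ℝ => |x| ^ (p - 2) * x - (p - 1) * R ^ (p - 2) * x) (Icc (-R) R) := by
  set φ := fun x : ℝ => |x| ^ (p - 2) * x - (p - 1) * R ^ (p - 2) * x
  have hφ_odd : ∀ x, φ (-x) = -φ x := fun x => by simp only [φ, abs_neg]; ring
  have hpos : MonotoneOn φ (Icc 0 R) := by
    refine (rpow_sub_one_sub_mul_monotoneOn hp₁ hp₂).congr fun x hx => ?_
    simp only [φ, abs_of_nonneg hx.1]
    rw [← Real.rpow_add_one' hx.1 (by linarith), show p - 2 + 1 = p - 1 by ring]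
  -- `φ` is not differentiable at `0`; the negative half follows from the positive one by oddness.
  have hneg : MonotoneOn φ (Icc (-R) 0) := by
    intro a ha b hb hab
    have := hpos ⟨neg_nonneg.2 hb.2, neg_le.1 hb.1⟩ ⟨neg_nonneg.2 ha.2, neg_le.1 ha.1⟩
      (neg_le_neg hab)
    rw [hφ_odd, hφ_odd] at this
    linarith
  rcases lt_or_ge R 0 with hR | hR
  · rw [Icc_eq_empty (by linarith)]; exact fun a ha => by simp at ha
  rw [← Icc_union_Icc_eq_Icc (neg_nonpos.2 hR) hR]
  exact hneg.union_right hpos (isGreatest_Icc (neg_nonpos.2 hR)) (isLeast_Icc hR)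

lemma mul_abs_sub_le_abs_sub_abs_rpow_mul_self (hp₁ : 1 < p) (hp₂ : p ≤ 2) {x y : ℝ}
    (hx : |x| ≤ R) (hy : |y| ≤ R) :
    (p - 1) * R ^ (p - 2) * |y - x| ≤ |(|y| ^ (p - 2) * y - |x| ^ (p - 2) * x)| := by
  wlog hxy : x ≤ y generalizing x y with H
  · rw [abs_sub_comm, abs_sub_comm (_ * y)]; exact H hy hx (le_of_not_ge hxy)
  have := abs_rpow_mul_self_sub_mul_monotoneOn (R := R) hp₁ hp₂ (abs_le.1 hx) (abs_le.1 hy) hxy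
  have hslope : 0 ≤ (p - 1) * R ^ (p - 2) * (y - x) :=
    mul_nonneg (mul_nonneg (by linarith) (Real.rpow_nonneg ((abs_nonneg x).trans hx) _))
      (by linarith)
  rw [abs_of_nonneg (sub_nonneg.2 hxy), abs_of_nonneg (by linarith)]
  linarith

lemma mul_abs_sub_le_abs_sub_abs_rpow_shift (hp₁ : 1 < p) (hp₂ : p ≤ 2) {m a b : ℝ}
    (ha : |a| ≤ R) (hb : |b| ≤ R) :
    p * (p - 1) * (R + |m|) ^ (p - 2) * |m| * |b - a| ≤
      |(|b| ^ p - |b - m| ^ p) - (|a| ^ p - |a - m| ^ p)| := by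
  wlog hab : a < b generalizing a b with H
  · rcases (not_lt.1 hab).eq_or_lt with rfl | hba
    · simp
    rw [abs_sub_comm, abs_sub_comm (_ - _)]; exact H hb ha hba
  set F := fun u : ℝ => |u| ^ p - |u - m| ^ p
  set g := fun u : ℝ => |u| ^ (p - 2) * u
  have hF : ∀ u, HasDerivAt F (p * (g u - g (u - m))) u := fun u => by
    have h := (hasDerivAt_abs_rpow u hp₁).sub
      ((hasDerivAt_abs_rpow (u - m) hp₁).comp u ((hasDerivAt_id u).sub_const m))
    exact h.congr_deriv (by simp only [g]; ring)
  obtain ⟨c, hc, hslope⟩ := exists_hasDerivAt_eq_slope F _ hab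
    (fun u _ => (hF u).continuousAt.continuousWithinAt) (fun u _ => hF u)
  have hcR : |c| ≤ R := abs_le.2 ⟨(abs_le.1 ha).1.trans hc.1.le, hc.2.le.trans (abs_le.1 hb).2⟩
  have hg := mul_abs_sub_le_abs_sub_abs_rpow_mul_self (R := R + |m|) hp₁ hp₂
    (x := c - m) (y := c) ((abs_sub _ _).trans (by linarith)) (by linarith [abs_nonneg m])
  rw [sub_sub_cancel] at hg
  have hFba : F b - F a = p * (g c - g (c - m)) * (b - a) := by
    rw [hslope, div_mul_cancel₀ _ (sub_ne_zero.2 hab.ne')]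
  change _ ≤ |F b - F a|
  rw [hFba, abs_mul, abs_mul, abs_of_pos (by linarith : (0:ℝ) < p)]
  have := mul_le_mul_of_nonneg_left hg (by linarith : (0:ℝ) ≤ p)
  exact mul_le_mul_of_nonneg_right (by linarith) (abs_nonneg _)

end AbsRpow

lemma ncard_le_of_forall_sub_le {T : Set ℤ} {D : ℝ} (hD : 0 ≤ D)
    (h : ∀ a ∈ T, ∀ b ∈ T, (a : ℝ) - b ≤ D) : (T.ncard : ℝ) ≤ D + 1 := by
  rcases T.eq_empty_or_nonempty with rfl | ⟨a, ha⟩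
  · simp only [ncard_empty, Nat.cast_zero]; linarith
  have hfloor : ∀ a ∈ T, ∀ b ∈ T, a - b ≤ ⌊D⌋ := fun a ha b hb =>
    Int.le_floor.2 (by push_cast; exact h a ha b hb)
  obtain ⟨a₀, ha₀, hmin⟩ := Int.exists_least_of_bdd (P := (· ∈ T))
    ⟨a - ⌊D⌋, fun b hb => by linarith [hfloor a ha b hb]⟩ ⟨a, ha⟩
  have hsub : T ⊆ Icc a₀ (a₀ + ⌊D⌋) := fun b hb => ⟨hmin b hb, by linarith [hfloor b hb a₀ ha₀]⟩
  have hcard : ((Icc a₀ (a₀ + ⌊D⌋)).ncard : ℤ) = ⌊D⌋ + 1 := by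
    rw [← Finset.coe_Icc, ncard_coe_finset, Int.card_Icc,
      Int.toNat_of_nonneg (by linarith [Int.floor_nonneg.2 hD])]
    ring
  calc (T.ncard : ℝ) ≤ (Icc a₀ (a₀ + ⌊D⌋)).ncard := by
        exact_mod_cast ncard_le_ncard hsub (finite_Icc _ _)
    _ = ⌊D⌋ + 1 := by exact_mod_cast hcard
    _ ≤ D + 1 := by linarith [Int.floor_le D]

lemma ncard_le_of_mul_abs_sub_le_abs_sub {T : Set ℤ} {f : ℤ → ℝ} {L μ δ : ℝ} (hL : 0 < L)
    (hδ : 0 ≤ δ) (hf : ∀ a ∈ T, ∀ b ∈ T, L * |(a : ℝ) - b| ≤ |f a - f b|)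
    (hμ : ∀ a ∈ T, |f a - μ| ≤ δ) : (T.ncard : ℝ) ≤ 2 * δ / L + 1 := by
  refine ncard_le_of_forall_sub_le (by positivity) fun a ha b hb => ?_
  rw [le_div_iff₀ hL]
  calc ((a : ℝ) - b) * L ≤ L * |(a : ℝ) - b| := by nlinarith [le_abs_self ((a : ℝ) - b)]
    _ ≤ |f a - f b| := hf a ha b hb
    _ ≤ |f a - μ| + |μ - f b| := abs_sub_le _ _ _
    _ ≤ 2 * δ := by linarith [hμ a ha, hμ b hb, abs_sub_comm μ (f b)]

lemma resPhi_sub_resPhi_s4 (α : ℝ) (a b k₂ k₃ : ℤ) :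
    resPhi α a k₂ k₃ - resPhi α b k₂ k₃ =
      (|(a : ℝ)| ^ α - |(a : ℝ) - ((k₂ - k₃ : ℤ) : ℝ)| ^ α) -
        (|(b : ℝ)| ^ α - |(b : ℝ) - ((k₂ - k₃ : ℤ) : ℝ)| ^ α) := by
  simp only [resPhi]
  push_cast
  ring_nf

lemma mul_abs_sub_le_abs_resPhi_sub {α N : ℝ} (hα₁ : 1 < α) (hα₂ : α ≤ 2) (hN : 0 < N)
    {k₂ k₃ : ℤ} (hk : |((k₂ - k₃ : ℤ) : ℝ)| ≤ 8 * N) {a b : ℤ} (ha : |(a : ℝ)| ≤ N)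
    (hb : |(b : ℝ)| ≤ N) :
    α * (α - 1) / 9 * |((k₂ - k₃ : ℤ) : ℝ)| * N ^ (α - 2) * |(a : ℝ) - b| ≤
      |resPhi α a k₂ k₃ - resPhi α b k₂ k₃| := by
  set m : ℝ := ((k₂ - k₃ : ℤ) : ℝ)
  rw [resPhi_sub_resPhi_s4]
  refine le_trans ?_ (mul_abs_sub_le_abs_sub_abs_rpow_shift (m := m) hα₁ hα₂ hb ha)
  have h9 : N ^ (α - 2) / 9 ≤ (N + |m|) ^ (α - 2) := calc
    N ^ (α - 2) / 9 = 9 ^ (-1 : ℝ) * N ^ (α - 2) := by rw [Real.rpow_neg_one]; ring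
    _ ≤ 9 ^ (α - 2) * N ^ (α - 2) := by gcongr <;> [norm_num; linarith]
    _ = (9 * N) ^ (α - 2) := (Real.mul_rpow (by norm_num) hN.le).symm
    _ ≤ (N + |m|) ^ (α - 2) :=
      Real.rpow_le_rpow_of_nonpos (by positivity) (by linarith) (by linarith)
  have hc : 0 ≤ α * (α - 1) * |m| * |(a : ℝ) - b| :=
    mul_nonneg (mul_nonneg (mul_nonneg (by linarith) (by linarith)) (abs_nonneg _)) (abs_nonneg _)
  calc α * (α - 1) / 9 * |m| * N ^ (α - 2) * |(a : ℝ) - b|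
      = α * (α - 1) * |m| * |(a : ℝ) - b| * (N ^ (α - 2) / 9) := by ring
    _ ≤ α * (α - 1) * |m| * |(a : ℝ) - b| * (N + |m|) ^ (α - 2) :=
      mul_le_mul_of_nonneg_left h9 hc
    _ = α * (α - 1) * (N + |m|) ^ (α - 2) * |m| * |(a : ℝ) - b| := by ring

/-- **Counting lemma (comparable frequencies regime).**
For `1 < α < 2` and `ε > 0` there is `C > 0` such that for all `N ≥ 1`,
all `k₂ ≠ k₃` with `|k₂|, |k₃| ≤ 4N`, and all `μ ∈ ℝ`:
`#{k₁ : N/2 < |k₁| ≤ N, |Φ_{k₁,k₂,k₃} − μ| ≤ N^ε} ≤ C N^ε (1 + N^{2−α}/(1+|k₂−k₃|))`. -/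
theorem stmt4 (α ε : ℝ) (hα₁ : 1 < α) (hα₂ : α < 2) (hε : 0 < ε) :
    ∃ C > 0, ∀ N : ℝ, 1 ≤ N → ∀ k₂ k₃ : ℤ, k₂ ≠ k₃ →
      |(k₂ : ℝ)| ≤ 4 * N → |(k₃ : ℝ)| ≤ 4 * N → ∀ μ : ℝ,
      (({k₁ : ℤ | N / 2 < |(k₁ : ℝ)| ∧ |(k₁ : ℝ)| ≤ N ∧
          |resPhi α k₁ k₂ k₃ - μ| ≤ N ^ ε}.ncard : ℝ)) ≤
        C * N ^ ε * (1 + N ^ (2 - α) / (1 + |((k₂ - k₃ : ℤ) : ℝ)|)) := by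
  have hK : 0 < α * (α - 1) / 9 := by nlinarith
  refine ⟨1 + 4 / (α * (α - 1) / 9), by positivity, fun N hN k₂ k₃ hk hk₂ hk₃ μ => ?_⟩
  have hN₀ : 0 < N := by linarith
  have hm₁ : 1 ≤ |((k₂ - k₃ : ℤ) : ℝ)| := by
    rw [← Int.cast_abs]; exact_mod_cast Int.one_le_abs (sub_ne_zero.2 hk)
  have hm₈ : |((k₂ - k₃ : ℤ) : ℝ)| ≤ 8 * N := by
    push_cast; linarith [abs_sub (k₂ : ℝ) k₃]
  have hδ : 1 ≤ N ^ ε := Real.one_le_rpow hN hε.le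
  set K := α * (α - 1) / 9
  set m := |((k₂ - k₃ : ℤ) : ℝ)|
  set A := N ^ (α - 2)
  have hA : 0 < A := by positivity
  have hbound : 2 * N ^ ε / (K * m * A) ≤ 4 / K * N ^ ε * (A⁻¹ / (1 + m)) := by
    rw [div_le_iff₀ (by positivity)]
    field_simp
    nlinarith
  calc _ ≤ 2 * N ^ ε / (K * m * A) + 1 :=
        ncard_le_of_mul_abs_sub_le_abs_sub (f := fun k => resPhi α k k₂ k₃) (by positivity)
          (by linarith) (fun a ha b hb => mul_abs_sub_le_abs_resPhi_sub hα₁ hα₂.le hN₀ hm₈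
            ha.2.1 hb.2.1) fun a ha => ha.2.2
    _ ≤ (1 + 4 / K) * N ^ ε * (1 + A⁻¹ / (1 + m)) := by
        nlinarith [show 0 ≤ N ^ ε * (A⁻¹ / (1 + m)) + 4 / K * N ^ ε by positivity]
    _ = _ := by rw [show 2 - α = -(α - 2) by ring, Real.rpow_neg hN₀.le]
end

section
/- Let 1 < α < 2. There exists a constant C > 0 depending only on α such that for all a ∈ ℤ, all l ∈ ℝ, all r ≥ 1/100, and all real M₁, M₂ ≥ 1/2: #{k ∈ ℤ : M₁ ≤ |k| ≤ 2M₁, M₂ ≤ |a − k| ≤ 2M₂, and | |k|^α + |a−k|^α − l | ≤ r} ≤ C (min{M₁, M₂})^{1−α/2} r^{1/2}. The constant C is independent of a, l, r, M₁ and M₂. -/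
/-!
Sort the integers `k` by the sides of `0` and of `a` on which they lie. Between two integers of one
class, `f t = |t| ^ α + |t - a| ^ α` has second derivative at least `λ ≍ min M₁ M₂ ^ (α - 2)`, i.e.
it is `λ`-strongly convex there. A `λ`-strongly convex function that stays within `r` of `l` at
`x ≤ y ≤ z` forces `λ (y - x) (z - y) ≤ 4 r`, so the counted integers of one class lie within
`√(4 r / λ)` of its smallest or of its largest one. Hence each of the four classes contributes
`O(√(r / λ) + 1)` elements, and `√(r / λ) ≍ min M₁ M₂ ^ (1 - α / 2) r ^ (1 / 2)`; the `+ 1` is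
absorbed since `r ≥ 1 / 100` and `M₁, M₂ ≥ 1 / 2`.
-/

open Set Finset

lemma StrongConvexOn.add {E : Type*} [NormedAddCommGroup E] [NormedSpace ℝ E] {s : Set E}
    {f g : E → ℝ} {m n : ℝ} (hf : StrongConvexOn s m f) (hg : StrongConvexOn s n g) :
    StrongConvexOn s (m + n) fun x => f x + g x :=
  (UniformConvexOn.add hf hg).mono fun r => by simp only [Pi.add_apply]; linarith

lemma strongConvexOn_of_hasDerivWithinAt2 {D : Set ℝ} (hD : Convex ℝ D) {f f' f'' : ℝ → ℝ}
    {m : ℝ} (hf : ContinuousOn f D)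
    (hf' : ∀ x ∈ interior D, HasDerivWithinAt f (f' x) (interior D) x)
    (hf'' : ∀ x ∈ interior D, HasDerivWithinAt f' (f'' x) (interior D) x)
    (hm : ∀ x ∈ interior D, m ≤ f'' x) : StrongConvexOn D m f := by
  rw [strongConvexOn_iff_convex]
  simp only [Real.norm_eq_abs, sq_abs]
  refine convexOn_of_hasDerivWithinAt2_nonneg hD (f' := fun x => f' x - m * x)
    (f'' := fun x => f'' x - m) (hf.sub (by fun_prop)) (fun x hx => ?_) (fun x hx => ?_)
    (fun x hx => sub_nonneg.2 (hm x hx))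
  · exact ((hf' x hx).sub ((hasDerivAt_pow 2 x).const_mul (m / 2)).hasDerivWithinAt).congr_deriv
      (by norm_num; ring)
  · exact ((hf'' x hx).sub ((hasDerivAt_id' x).const_mul m).hasDerivWithinAt).congr_deriv
      (by ring)

lemma hasDerivAt_abs_rpow_mul_self (p : ℝ) {y : ℝ} (hy : y ≠ 0) :
    HasDerivAt (fun y => |y| ^ p * y) ((p + 1) * |y| ^ p) y := by
  have hsign : (SignType.sign y : ℝ) * y = |y| := sign_mul_self y
  have hpow : |y| ^ (p - 1) * |y| = |y| ^ p := by
    rw [Real.rpow_sub_one (abs_ne_zero.2 hy), div_mul_cancel₀ _ (abs_ne_zero.2 hy)]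
  exact (((hasDerivAt_abs hy).rpow_const (Or.inl (abs_ne_zero.2 hy))).mul
    (hasDerivAt_id' y)).congr_deriv (by linear_combination p * |y| ^ (p - 1) * hsign + p * hpow)

lemma strongConvexOn_abs_sub_rpow {α c q : ℝ} {D : Set ℝ} (hα₁ : 1 < α) (hα₂ : α ≤ 2)
    (hD : Convex ℝ D) (hc : c ∉ D) (hq : ∀ t ∈ D, |t - c| ≤ q) :
    StrongConvexOn D (α * (α - 1) * q ^ (α - 2)) fun t => |t - c| ^ α := by
  have hne : ∀ t ∈ interior D, t - c ≠ 0 := fun t ht h =>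
    hc (sub_eq_zero.1 h ▸ interior_subset ht)
  refine strongConvexOn_of_hasDerivWithinAt2 hD (f' := fun t => α * (|t - c| ^ (α - 2) * (t - c)))
    (f'' := fun t => α * ((α - 2 + 1) * |t - c| ^ (α - 2))) ?_ (fun t _ => ?_) (fun t ht => ?_)
    (fun t ht => ?_)
  · exact ((continuous_abs.comp (continuous_sub_right c)).rpow_const
      fun _ => Or.inr (by linarith)).continuousOn
  · exact (((hasDerivAt_abs_rpow (t - c) hα₁).comp_sub_const t c).hasDerivWithinAt).congr_deriv
      (by ring)
  · exact (((hasDerivAt_abs_rpow_mul_self _ (hne t ht)).comp_sub_const t c).const_mul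
      α).hasDerivWithinAt
  · have hpos : 0 < |t - c| := abs_pos.2 (hne t ht)
    have := Real.rpow_le_rpow_of_nonpos hpos (hq t (interior_subset ht)) (by linarith : α - 2 ≤ 0)
    have hα : 0 ≤ α * (α - 1) := by nlinarith
    calc α * (α - 1) * q ^ (α - 2) ≤ α * (α - 1) * |t - c| ^ (α - 2) := by gcongr
      _ = _ := by ring

lemma StrongConvexOn.mul_gaps_le_of_abs_sub_le {s : Set ℝ} {f : ℝ → ℝ} {m l r x y z : ℝ}
    (hf : StrongConvexOn s m f) (hx : x ∈ s) (hz : z ∈ s) (hxy : x ≤ y) (hyz : y ≤ z)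
    (hfx : |f x - l| ≤ r) (hfy : |f y - l| ≤ r) (hfz : |f z - l| ≤ r) :
    m * ((y - x) * (z - y)) ≤ 4 * r := by
  rcases hxy.eq_or_lt with rfl | hlt
  · simp only [sub_self, zero_mul, mul_zero]
    linarith [abs_nonneg (f x - l)]
  have hzx : 0 < z - x := by linarith
  set a := (z - y) / (z - x) with ha
  set b := (y - x) / (z - x) with hb
  have hab : a + b = 1 := by rw [ha, hb]; field_simp; ring
  have hy : a • x + b • z = y := by rw [smul_eq_mul, smul_eq_mul, ha, hb]; field_simp; ring
  have hgap : a * b * (m / 2) * ‖x - z‖ ^ 2 = m / 2 * ((y - x) * (z - y)) := by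
    rw [Real.norm_eq_abs, sq_abs, ha, hb]; field_simp; ring
  have key := hf.2 hx hz (by positivity : 0 ≤ a) (by positivity : 0 ≤ b) hab
  rw [hy, smul_eq_mul, smul_eq_mul, ← mul_assoc, hgap] at key
  rw [abs_le] at hfx hfy hfz
  have hfxz : a * f x + b * f z ≤ l + r := by
    calc a * f x + b * f z ≤ a * (l + r) + b * (l + r) := by gcongr <;> linarith
      _ = l + r := by rw [← add_mul, hab, one_mul]
  linarith

lemma Finset.card_le_of_mul_gaps_le (T : Finset ℤ) {R : ℝ} (hR : 0 ≤ R)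
    (h : ∀ x ∈ T, ∀ y ∈ T, ∀ z ∈ T, x ≤ y → y ≤ z → ((y : ℝ) - x) * ((z : ℝ) - y) ≤ R ^ 2) :
    (#T : ℝ) ≤ 2 * R + 2 := by
  rcases T.eq_empty_or_nonempty with rfl | hT
  · simp only [card_empty, CharP.cast_eq_zero]
    linarith
  set n := ⌊R⌋₊
  set lo := T.min' hT
  set hi := T.max' hT
  have hsub : T ⊆ Icc lo (lo + n) ∪ Icc (hi - n) hi := by
    intro k hk
    by_contra hk'
    simp only [mem_union, mem_Icc, not_or, not_and_or, not_le] at hk'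
    have hlo : lo ≤ k := T.min'_le k hk
    have hhi : k ≤ hi := T.le_max' k hk
    have h1 : (n : ℝ) + 1 ≤ (k : ℝ) - lo := by exact_mod_cast (by omega : (n : ℤ) + 1 ≤ k - lo)
    have h2 : (n : ℝ) + 1 ≤ (hi : ℝ) - k := by exact_mod_cast (by omega : (n : ℤ) + 1 ≤ hi - k)
    have hRn : R < n + 1 := Nat.lt_floor_add_one R
    have := h lo (T.min'_mem hT) k hk hi (T.max'_mem hT) hlo hhi
    nlinarith
  have hcard : #T ≤ 2 * (n + 1) := by
    refine (card_le_card hsub).trans ((card_union_le _ _).trans ?_)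
    simp only [Int.card_Icc]
    omega
  have hn : (n : ℝ) ≤ R := Nat.floor_le hR
  calc (#T : ℝ) ≤ 2 * (n + 1) := by exact_mod_cast hcard
    _ ≤ 2 * R + 2 := by linarith

lemma card_le_of_strongConvexOn_Icc {f : ℝ → ℝ} {m l r R : ℝ} (T : Finset ℤ) (hm : 0 < m)
    (hR : 0 ≤ R) (hRr : 4 * r ≤ m * R ^ 2)
    (hf : ∀ x ∈ T, ∀ z ∈ T, x ≤ z → StrongConvexOn (Icc (x : ℝ) z) m f)
    (hT : ∀ k ∈ T, |f k - l| ≤ r) : (#T : ℝ) ≤ 2 * R + 2 := by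
  refine T.card_le_of_mul_gaps_le hR fun x hx y hy z hz hxy hyz => ?_
  have hxz : (x : ℝ) ≤ z := by exact_mod_cast hxy.trans hyz
  have := (hf x hx z hz (hxy.trans hyz)).mul_gaps_le_of_abs_sub_le (left_mem_Icc.2 hxz)
    (right_mem_Icc.2 hxz) (by exact_mod_cast hxy) (by exact_mod_cast hyz) (hT x hx) (hT y hy)
    (hT z hz)
  exact le_of_mul_le_mul_left (by linarith) hm

lemma strongConvexOn_Icc_abs_sub_rpow {α x z c q : ℝ} (hα₁ : 1 < α) (hα₂ : α ≤ 2)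
    (hx : x ≠ c) (hz : z ≠ c) (hside : c < x ↔ c < z) (hxq : |x - c| ≤ q) (hzq : |z - c| ≤ q) :
    StrongConvexOn (Icc x z) (α * (α - 1) * q ^ (α - 2)) fun t => |t - c| ^ α := by
  have hc : c ∉ Icc x z := fun ⟨hxc, hcz⟩ =>
    hz (le_antisymm (not_lt.1 fun hcz' => (hxc.lt_of_ne hx).not_gt (hside.2 hcz')) hcz)
  exact strongConvexOn_abs_sub_rpow hα₁ hα₂ (convex_Icc x z) hc fun t ht =>
    (abs_le_max_abs_abs (sub_le_sub_right ht.1 c) (sub_le_sub_right ht.2 c)).trans (max_le hxq hzq)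

def dyadicLevelSet (α : ℝ) (a : ℤ) (l r M₁ M₂ : ℝ) : Set ℤ :=
  {k : ℤ | M₁ ≤ |(k : ℝ)| ∧ |(k : ℝ)| ≤ 2 * M₁ ∧
    M₂ ≤ |((a - k : ℤ) : ℝ)| ∧ |((a - k : ℤ) : ℝ)| ≤ 2 * M₂ ∧
    |(|(k : ℝ)| ^ α + |((a - k : ℤ) : ℝ)| ^ α - l)| ≤ r}

lemma bounds_of_mem_dyadicLevelSet {α l r M₁ M₂ : ℝ} {a k : ℤ} (hM₁ : 0 < M₁) (hM₂ : 0 < M₂)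
    (hk : k ∈ dyadicLevelSet α a l r M₁ M₂) :
    ((k : ℝ) ≠ 0 ∧ |(k : ℝ)| ≤ 2 * M₁) ∧ ((k : ℝ) ≠ a ∧ |(k : ℝ) - a| ≤ 2 * M₂) ∧
      |(|(k : ℝ)| ^ α + |(k : ℝ) - a| ^ α - l)| ≤ r := by
  obtain ⟨h1, h2, h3, h4, h5⟩ := hk
  rw [Int.cast_sub, abs_sub_comm (a : ℝ)] at h3 h4 h5
  refine ⟨⟨fun hk => ?_, h2⟩, ⟨fun hk => ?_, h4⟩, h5⟩
  · rw [hk, abs_zero] at h1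
    linarith
  · rw [hk, sub_self, abs_zero] at h3
    linarith

lemma ncard_dyadicLevelSet_le {α l r M₁ M₂ R : ℝ} (hα₁ : 1 < α) (hα₂ : α ≤ 2) (a : ℤ)
    (hM₁ : 0 < M₁) (hM₂ : 0 < M₂) (hR : 0 ≤ R)
    (hRr : 4 * r ≤ α * (α - 1) * ((2 * M₁) ^ (α - 2) + (2 * M₂) ^ (α - 2)) * R ^ 2) :
    ((dyadicLevelSet α a l r M₁ M₂).ncard : ℝ) ≤ 4 * (2 * R + 2) := by
  set S := dyadicLevelSet α a l r M₁ M₂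
  have hmem : ∀ k ∈ S, _ := fun k => bounds_of_mem_dyadicLevelSet hM₁ hM₂
  have hfin : S.Finite := (Set.finite_Icc (-⌈2 * M₁⌉) ⌈2 * M₁⌉).subset fun k hk =>
    abs_le.1 (by exact_mod_cast (hmem k hk).1.2.trans (Int.le_ceil _))
  have hmod : 0 < α * (α - 1) * ((2 * M₁) ^ (α - 2) + (2 * M₂) ^ (α - 2)) := by
    have := sub_pos.2 hα₁
    positivity
  have hfiber : ∀ σ : Bool × Bool,
      (#{k ∈ hfin.toFinset | (decide (0 < k), decide (a < k)) = σ} : ℝ) ≤ 2 * R + 2 := by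
    intro σ
    refine card_le_of_strongConvexOn_Icc (f := fun t => |t| ^ α + |t - a| ^ α) (l := l) _ hmod hR
      hRr (fun x hx z hz _ => ?_) (fun k hk => ?_)
    · simp only [mem_filter, Set.Finite.mem_toFinset] at hx hz
      obtain ⟨⟨hx0, hx₁⟩, ⟨hxa, hx₂⟩, -⟩ := hmem x hx.1
      obtain ⟨⟨hz0, hz₁⟩, ⟨hza, hz₂⟩, -⟩ := hmem z hz.1
      have hside := hx.2.trans hz.2.symm
      simp only [Prod.mk.injEq, decide_eq_decide] at hside
      have h₁ := strongConvexOn_Icc_abs_sub_rpow (q := 2 * M₁) hα₁ hα₂ hx0 hz0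
        (by exact_mod_cast hside.1) (by rw [sub_zero]; exact hx₁) (by rw [sub_zero]; exact hz₁)
      have h₂ := strongConvexOn_Icc_abs_sub_rpow hα₁ hα₂ hxa hza (by exact_mod_cast hside.2) hx₂ hz₂
      simp only [sub_zero] at h₁
      rw [mul_add]
      exact h₁.add h₂
    · simp only [mem_filter, Set.Finite.mem_toFinset] at hk
      exact (hmem k hk.1).2.2
  rw [Set.ncard_eq_toFinset_card S hfin,
    card_eq_sum_card_fiberwise (f := fun k => (decide (0 < k), decide (a < k))) (t := univ)
      fun _ _ => mem_coe.2 (mem_univ _)]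
  push_cast
  calc _ ≤ ∑ _σ : Bool × Bool, (2 * R + 2) := sum_le_sum fun σ _ => hfiber σ
    _ = 4 * (2 * R + 2) := by simp; ring

lemma four_mul_le_modulus_mul_sq {α r M₁ M₂ : ℝ} (hα₁ : 1 < α) (hr : 0 ≤ r) (hM₁ : 0 < M₁)
    (hM₂ : 0 < M₂) :
    4 * r ≤ α * (α - 1) * ((2 * M₁) ^ (α - 2) + (2 * M₂) ^ (α - 2)) *
      (2 / √(α * (α - 1)) * ((2 * min M₁ M₂) ^ (1 - α / 2) * √r)) ^ 2 := by
  set m := min M₁ M₂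
  have hm : 0 < m := lt_min hM₁ hM₂
  have hα : 0 < α * (α - 1) := by nlinarith
  have hc : (2 / √(α * (α - 1))) ^ 2 * (α * (α - 1)) = 4 := by
    rw [div_pow, Real.sq_sqrt hα.le, div_mul_cancel₀ _ hα.ne']
    norm_num
  have hpow : (2 * m) ^ (α - 2) * ((2 * m) ^ (1 - α / 2)) ^ 2 = 1 := by
    rw [← Real.rpow_natCast, ← Real.rpow_mul (by positivity), ← Real.rpow_add (by positivity)]
    ring_nf
    exact Real.rpow_zero _
  have hmin : (2 * m) ^ (α - 2) ≤ (2 * M₁) ^ (α - 2) + (2 * M₂) ^ (α - 2) := by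
    rcases min_choice M₁ M₂ with h | h <;> rw [show m = _ from h]
    · exact le_add_of_nonneg_right (by positivity)
    · exact le_add_of_nonneg_left (by positivity)
  calc 4 * r = α * (α - 1) * (2 * m) ^ (α - 2) *
        (2 / √(α * (α - 1)) * ((2 * m) ^ (1 - α / 2) * √r)) ^ 2 := by
        rw [mul_pow, mul_pow, Real.sq_sqrt hr]
        linear_combination (-r) * hc - (2 / √(α * (α - 1))) ^ 2 * (α * (α - 1)) * r * hpow
    _ ≤ _ := by gcongr

/-- **Second order counting lemma.**
For `1 < α < 2` there is `C > 0`, independent of `a, l, r, M₁, M₂`, such that for all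
`a ∈ ℤ`, `l ∈ ℝ`, `r ≥ 1/100` and `M₁, M₂ ≥ 1/2`:
`#{k : M₁ ≤ |k| ≤ 2M₁, M₂ ≤ |a−k| ≤ 2M₂, ||k|^α + |a−k|^α − l| ≤ r}
   ≤ C (min{M₁,M₂})^{1−α/2} r^{1/2}`. -/
theorem stmt6 (α : ℝ) (hα₁ : 1 < α) (hα₂ : α < 2) :
    ∃ C > 0, ∀ a : ℤ, ∀ l r M₁ M₂ : ℝ, 1 / 100 ≤ r → 1 / 2 ≤ M₁ → 1 / 2 ≤ M₂ →
      (({k : ℤ | M₁ ≤ |(k : ℝ)| ∧ |(k : ℝ)| ≤ 2 * M₁ ∧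
          M₂ ≤ |((a - k : ℤ) : ℝ)| ∧ |((a - k : ℤ) : ℝ)| ≤ 2 * M₂ ∧
          |(|(k : ℝ)| ^ α + |((a - k : ℤ) : ℝ)| ^ α - l)| ≤ r}.ncard : ℝ)) ≤
        C * min M₁ M₂ ^ (1 - α / 2) * r ^ (1 / 2 : ℝ) := by
  set c₀ := 2 / √(α * (α - 1))
  refine ⟨(8 * c₀ + 80) * 2 ^ (1 - α / 2), by positivity, fun a l r M₁ M₂ hr hM₁ hM₂ => ?_⟩
  set m := min M₁ M₂
  have hm : 1 / 2 ≤ m := le_min hM₁ hM₂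
  set X := (2 * m) ^ (1 - α / 2) * √r with hXdef
  have hX : 1 ≤ 10 * X := by
    have h2m : 1 ≤ (2 * m) ^ (1 - α / 2) :=
      Real.one_le_rpow (by linarith) (by linarith)
    have hr' : 1 ≤ 10 * √r := by nlinarith [Real.sq_sqrt (by linarith : 0 ≤ r), Real.sqrt_nonneg r]
    nlinarith [Real.sqrt_nonneg r]
  calc _ ≤ 4 * (2 * (c₀ * X) + 2) :=
        ncard_dyadicLevelSet_le hα₁ hα₂.le a (by linarith) (by linarith) (by positivity)
          (four_mul_le_modulus_mul_sq hα₁ (by linarith) (by linarith) (by linarith))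
    _ ≤ (8 * c₀ + 80) * X := by linarith
    _ = _ := by rw [hXdef, Real.mul_rpow (by norm_num) (by linarith), Real.sqrt_eq_rpow]; ring
end

section
/- Let L ≥ 1 be a real number and let (σ_{k,k'})_{k,k'∈ℤ} be complex numbers such that S_L := sup_{k,k'∈ℤ, |k−k'|<L} |σ_{k,k'}| < ∞ and D_L := (Σ_{k,k'∈ℤ, |k−k'|≥L} |σ_{k,k'}|²)^{1/2} < ∞. Then for all a, d ∈ ℓ²(ℤ), Σ_{k,k'∈ℤ} |σ_{k,k'}| |a_{k'}| |d_k| ≤ (3L·S_L + D_L) ‖a‖_{ℓ²(ℤ)} ‖d‖_{ℓ²(ℤ)}. In particular, the operator Λ on ℓ²(ℤ) with kernel (σ_{k,k'}) is bounded with ‖Λ‖_{ℓ²→ℓ²} ≤ 3L·S_L + D_L. -/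
/-!
Split the kernel into its band part `|k - k'| < L` and the rest, and bound everything in `ℝ≥0∞`.
Each row and each column of the band contains at most `2⌊L⌋ + 1 ≤ 3L` entries, so Cauchy–Schwarz
over the band gives `Σ_band |a_{k'}| |d_k| ≤ 3L ‖a‖ ‖d‖`. Off the band, Cauchy–Schwarz over `ℤ × ℤ`
bounds the sum by the Hilbert–Schmidt norm `D` of that part times `‖a ⊗ d‖ = ‖a‖ ‖d‖`.
-/

open scoped ENNReal
open MeasureTheory

namespace ENNReal

variable {ι κ : Type*}

theorem sq_rpow_half (x : ℝ≥0∞) : (x ^ 2) ^ (1 / 2 : ℝ) = x := by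
  rw [← ENNReal.rpow_two, ← ENNReal.rpow_mul]
  norm_num

theorem tsum_mul_le_L2_mul_L2 [Countable ι] (f g : ι → ℝ≥0∞) :
    ∑' i, f i * g i ≤ (∑' i, f i ^ 2) ^ (1 / 2 : ℝ) * (∑' i, g i ^ 2) ^ (1 / 2 : ℝ) := by
  let _ : MeasurableSpace ι := ⊤
  simpa only [lintegral_count, ENNReal.rpow_two, Pi.mul_apply] using
    ENNReal.lintegral_mul_le_Lp_mul_Lq (Measure.count : Measure ι) Real.HolderConjugate.two_two
      (measurable_of_countable f).aemeasurable (measurable_of_countable g).aemeasurable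

theorem rpow_half_tsum_enorm_sq {E : Type*} [SeminormedAddGroup E] {f : ι → E}
    (hf : Summable fun i => ‖f i‖ ^ 2) :
    (∑' i, ‖f i‖ₑ ^ 2) ^ (1 / 2 : ℝ) = ENNReal.ofReal √(∑' i, ‖f i‖ ^ 2) := by
  rw [Real.sqrt_eq_rpow, ← ENNReal.ofReal_rpow_of_nonneg (tsum_nonneg fun _ => by positivity)
    (by norm_num), ENNReal.ofReal_tsum_of_nonneg (fun _ => by positivity) hf]
  simp only [ENNReal.ofReal_pow (norm_nonneg _), ofReal_norm]

theorem tsum_mul_mul_le_L2_mul_L2_mul_L2 [Countable ι] [Countable κ] (s : ι × κ → ℝ≥0∞)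
    (f : ι → ℝ≥0∞) (g : κ → ℝ≥0∞) :
    ∑' p : ι × κ, s p * f p.1 * g p.2 ≤ (∑' p, s p ^ 2) ^ (1 / 2 : ℝ) *
      ((∑' i, f i ^ 2) ^ (1 / 2 : ℝ) * (∑' j, g j ^ 2) ^ (1 / 2 : ℝ)) := by
  have hfg : ∑' p : ι × κ, (f p.1 * g p.2) ^ 2 = (∑' i, f i ^ 2) * ∑' j, g j ^ 2 := by
    simp only [mul_pow, ENNReal.tsum_prod', ENNReal.tsum_mul_left, ENNReal.tsum_mul_right]
  simpa only [mul_assoc, hfg, ENNReal.mul_rpow_of_nonneg _ _ (by norm_num : (0 : ℝ) ≤ 1 / 2)]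
    using tsum_mul_le_L2_mul_L2 s fun p => f p.1 * g p.2

theorem tsum_tsum_ite_sq_le [Countable κ] (R : ι → κ → Prop) [∀ i j, Decidable (R i j)]
    {N : ℝ≥0∞} (hrow : ∀ i, ∑' j, (if R i j then 1 else 0 : ℝ≥0∞) ≤ N) (f : ι → ℝ≥0∞) :
    ∑' i, ∑' j, (if R i j then f i else 0) ^ 2 ≤ N * ∑' i, f i ^ 2 := by
  rw [← ENNReal.tsum_mul_left]
  refine ENNReal.tsum_le_tsum fun i => ?_
  calc ∑' j, (if R i j then f i else 0) ^ 2
      = f i ^ 2 * ∑' j, (if R i j then 1 else 0 : ℝ≥0∞) := by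
        rw [← ENNReal.tsum_mul_left]
        exact tsum_congr fun j => by split_ifs <;> simp
    _ ≤ N * f i ^ 2 := by rw [mul_comm]; gcongr; exact hrow i

theorem tsum_ite_mul_le_of_tsum_ite_le [Countable ι] [Countable κ] (R : ι → κ → Prop)
    [∀ i j, Decidable (R i j)] {N : ℝ≥0∞}
    (hrow : ∀ i, ∑' j, (if R i j then 1 else 0 : ℝ≥0∞) ≤ N)
    (hcol : ∀ j, ∑' i, (if R i j then 1 else 0 : ℝ≥0∞) ≤ N) (f : ι → ℝ≥0∞) (g : κ → ℝ≥0∞) :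
    ∑' p : ι × κ, (if R p.1 p.2 then f p.1 * g p.2 else 0) ≤
      N * ((∑' i, f i ^ 2) ^ (1 / 2 : ℝ) * (∑' j, g j ^ 2) ^ (1 / 2 : ℝ)) := by
  have hf := tsum_tsum_ite_sq_le R hrow f
  have hg : ∑' i, ∑' j, (if R i j then g j else 0) ^ 2 ≤ N * ∑' j, g j ^ 2 := by
    rw [ENNReal.tsum_comm]
    exact tsum_tsum_ite_sq_le (fun j i => R i j) hcol g
  calc ∑' p : ι × κ, (if R p.1 p.2 then f p.1 * g p.2 else 0)
      = ∑' p : ι × κ, (if R p.1 p.2 then f p.1 else 0) * (if R p.1 p.2 then g p.2 else 0) :=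
        tsum_congr fun p => by split_ifs <;> simp
    _ ≤ (N * ∑' i, f i ^ 2) ^ (1 / 2 : ℝ) * (N * ∑' j, g j ^ 2) ^ (1 / 2 : ℝ) := by
        refine (tsum_mul_le_L2_mul_L2 _ _).trans ?_
        rw [ENNReal.tsum_prod', ENNReal.tsum_prod']
        gcongr
    _ = N * ((∑' i, f i ^ 2) ^ (1 / 2 : ℝ) * (∑' j, g j ^ 2) ^ (1 / 2 : ℝ)) := by
        set A := ∑' i, f i ^ 2
        set B := ∑' j, g j ^ 2
        rw [← ENNReal.mul_rpow_of_nonneg _ _ (by norm_num),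
          show (N * A) * (N * B) = N ^ 2 * (A * B) by ring,
          ENNReal.mul_rpow_of_nonneg _ _ (by norm_num), sq_rpow_half,
          ENNReal.mul_rpow_of_nonneg _ _ (by norm_num)]

end ENNReal

theorem Int.tsum_ite_abs_sub_lt_le {L : ℝ} (hL : 1 ≤ L) (m : ℤ) :
    ∑' n : ℤ, (if |((m - n : ℤ) : ℝ)| < L then 1 else 0 : ℝ≥0∞) ≤ ENNReal.ofReal (3 * L) := by
  set F := ⌊L⌋
  have hsupp : ∀ n, (if |((m - n : ℤ) : ℝ)| < L then 1 else 0 : ℝ≥0∞) ≤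
      if n ∈ Finset.Icc (m - F) (m + F) then 1 else 0 := by
    intro n
    split_ifs with h hn <;> try simp
    have : |m - n| ≤ F := Int.le_floor.mpr (by exact_mod_cast h.le)
    exact hn (Finset.mem_Icc.mpr (by constructor <;> linarith [abs_le.mp this]))
  have hF : (0 : ℤ) ≤ F := Int.floor_nonneg.mpr (by linarith)
  have hcard : ((Finset.Icc (m - F) (m + F)).card : ℝ) ≤ 3 * L := by
    rw [Int.card_Icc, show m + F + 1 - (m - F) = 2 * F + 1 by ring]
    have : (F : ℝ) ≤ L := Int.floor_le L
    rw [← Int.cast_natCast, Int.toNat_of_nonneg (by omega)]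
    push_cast
    linarith
  calc _ ≤ ∑' n : ℤ, (if n ∈ Finset.Icc (m - F) (m + F) then 1 else 0 : ℝ≥0∞) :=
        ENNReal.tsum_le_tsum hsupp
    _ = (Finset.Icc (m - F) (m + F)).card := by
        rw [tsum_eq_sum (s := Finset.Icc (m - F) (m + F)) (by simp_all), Finset.sum_ite_mem,
          Finset.inter_self, Finset.sum_const, nsmul_one]
    _ ≤ ENNReal.ofReal (3 * L) := by
        rw [← ENNReal.ofReal_natCast]
        exact ENNReal.ofReal_le_ofReal hcard

theorem Int.tsum_band_mul_mul_le {L : ℝ} (hL : 1 ≤ L) (s : ℤ × ℤ → ℝ≥0∞) {S : ℝ≥0∞}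
    (hS : ∀ p : ℤ × ℤ, |((p.1 - p.2 : ℤ) : ℝ)| < L → s p ≤ S) (f g : ℤ → ℝ≥0∞) :
    ∑' p : ℤ × ℤ, (if |((p.1 - p.2 : ℤ) : ℝ)| < L then s p * f p.1 * g p.2 else 0) ≤
      S * ENNReal.ofReal (3 * L) *
        ((∑' k, f k ^ 2) ^ (1 / 2 : ℝ) * (∑' k, g k ^ 2) ^ (1 / 2 : ℝ)) := by
  have hcol (k' : ℤ) : ∑' k : ℤ, (if |((k - k' : ℤ) : ℝ)| < L then 1 else 0 : ℝ≥0∞) ≤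
      ENNReal.ofReal (3 * L) := by
    refine (tsum_congr fun k => ?_).trans_le (Int.tsum_ite_abs_sub_lt_le hL k')
    rw [← abs_neg, ← Int.cast_neg, neg_sub]
  calc _ ≤ ∑' p : ℤ × ℤ, S * (if |((p.1 - p.2 : ℤ) : ℝ)| < L then f p.1 * g p.2 else 0) := by
        refine ENNReal.tsum_le_tsum fun p => ?_
        split_ifs with h
        · rw [← mul_assoc]
          gcongr
          exact hS p h
        · simp
    _ ≤ _ := by
        rw [ENNReal.tsum_mul_left, mul_assoc]
        gcongr
        exact ENNReal.tsum_ite_mul_le_of_tsum_ite_le _ (Int.tsum_ite_abs_sub_lt_le hL) hcol f g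

/-- **Schur-type bound with a band of width `L`.**
If `S` bounds the entries of `(σ_{k,k'})` in the band `|k−k'| < L` and `D` bounds the
Hilbert–Schmidt norm of the part with `|k−k'| ≥ L`, then for all `a, d ∈ ℓ²(ℤ)`,
`Σ_{k,k'} |σ_{k,k'}||a_{k'}||d_k| ≤ (3L·S + D) ‖a‖_{ℓ²} ‖d‖_{ℓ²}`. -/
theorem stmt8 (L : ℝ) (hL : 1 ≤ L) (σ : ℤ → ℤ → ℂ) (S D : ℝ) (hD0 : 0 ≤ D)
    (hS : ∀ k k' : ℤ, |((k - k' : ℤ) : ℝ)| < L → ‖σ k k'‖ ≤ S)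
    (hDsum : Summable (fun p : ℤ × ℤ =>
      if L ≤ |((p.1 - p.2 : ℤ) : ℝ)| then ‖σ p.1 p.2‖ ^ 2 else 0))
    (hD : (∑' p : ℤ × ℤ, if L ≤ |((p.1 - p.2 : ℤ) : ℝ)| then ‖σ p.1 p.2‖ ^ 2 else 0)
      ≤ D ^ 2)
    (a d : ℤ → ℂ)
    (ha : Summable (fun k => ‖a k‖ ^ 2)) (hd : Summable (fun k => ‖d k‖ ^ 2)) :
    (∑' p : ℤ × ℤ, ENNReal.ofReal (‖σ p.1 p.2‖ * ‖a p.2‖ * ‖d p.1‖)) ≤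
      ENNReal.ofReal ((3 * L * S + D) * Real.sqrt (∑' k, ‖a k‖ ^ 2) *
        Real.sqrt (∑' k, ‖d k‖ ^ 2)) := by
  have hS0 : 0 ≤ S := (norm_nonneg _).trans (hS 0 0 (by simpa using zero_lt_one.trans_le hL))
  set σoff : ℤ × ℤ → ℂ := fun p => if L ≤ |((p.1 - p.2 : ℤ) : ℝ)| then σ p.1 p.2 else 0
  have hσoff : (fun p => ‖σoff p‖ ^ 2) =
      fun p : ℤ × ℤ => if L ≤ |((p.1 - p.2 : ℤ) : ℝ)| then ‖σ p.1 p.2‖ ^ 2 else 0 := by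
    funext p; simp only [σoff]; split_ifs <;> simp
  have hsplit (p : ℤ × ℤ) : ENNReal.ofReal (‖σ p.1 p.2‖ * ‖a p.2‖ * ‖d p.1‖) =
      (if |((p.1 - p.2 : ℤ) : ℝ)| < L then ‖σ p.1 p.2‖ₑ * ‖d p.1‖ₑ * ‖a p.2‖ₑ else 0) +
        ‖σoff p‖ₑ * ‖d p.1‖ₑ * ‖a p.2‖ₑ := by
    rw [ENNReal.ofReal_mul (by positivity), ENNReal.ofReal_mul (by positivity)]
    by_cases h : |((p.1 - p.2 : ℤ) : ℝ)| < L
    · simp only [σoff, h, not_le.mpr h, if_true, if_false, ofReal_norm, enorm_zero]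
      ring
    · simp only [σoff, h, not_lt.mp h, if_true, if_false, ofReal_norm]
      ring
  rw [tsum_congr hsplit, ENNReal.tsum_add]
  calc _ ≤ (ENNReal.ofReal S * ENNReal.ofReal (3 * L) + ENNReal.ofReal D) *
        ((∑' k, ‖d k‖ₑ ^ 2) ^ (1 / 2 : ℝ) * (∑' k, ‖a k‖ₑ ^ 2) ^ (1 / 2 : ℝ)) := by
        rw [add_mul]
        gcongr
        · refine Int.tsum_band_mul_mul_le hL _ (fun p h => ?_) _ _
          rw [← ofReal_norm]
          exact ENNReal.ofReal_le_ofReal (hS _ _ h)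
        · refine (ENNReal.tsum_mul_mul_le_L2_mul_L2_mul_L2
            (‖σoff ·‖ₑ) (‖d ·‖ₑ) (‖a ·‖ₑ)).trans ?_
          gcongr
          rw [ENNReal.rpow_half_tsum_enorm_sq (hσoff ▸ hDsum), hσoff]
          exact ENNReal.ofReal_le_ofReal ((Real.sqrt_le_sqrt hD).trans_eq (Real.sqrt_sq hD0))
    _ = _ := by
        rw [ENNReal.rpow_half_tsum_enorm_sq ha, ENNReal.rpow_half_tsum_enorm_sq hd,
          ← ENNReal.ofReal_mul hS0, ← ENNReal.ofReal_add (by positivity) hD0,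
          ← ENNReal.ofReal_mul (by positivity), ← ENNReal.ofReal_mul (by positivity)]
        ring_nf
end

section
/- Let (σ^{k₂}_{k,k₁})_{k,k₁,k₂∈ℤ} be complex numbers. Set A := sup_{k,k₁} (Σ_{k₂} |σ^{k₂}_{k,k₁}|²)^{1/2} and B := sup_{k,k'} (Σ_{k₁,k₁' : (k,k₁) ≠ (k',k₁')} | Σ_{k₂} σ^{k₂}_{k',k₁'} · conj(σ^{k₂}_{k,k₁}) |²)^{1/4}, and assume A < ∞ and B < ∞. Then for every b : ℤ × ℤ → ℂ with ‖b‖_{ℓ¹_k ℓ²_{k₁}} := Σ_{k} (Σ_{k₁} |b_{k,k₁}|²)^{1/2} < ∞, the function 𝒢b defined by (𝒢b)(k₂) := Σ_{k,k₁} σ^{k₂}_{k,k₁} b_{k,k₁} satisfies ‖𝒢b‖_{ℓ²(ℤ)} ≤ (A + B) ‖b‖_{ℓ¹_k ℓ²_{k₁}}. -/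
/-!
Regard the columns `k₂ ↦ σ^{k₂}_p`, `p = (k, k₁)`, as vectors `v p` of `ℓ²(ℤ)`, so that
`𝒢b = ∑ₚ b_p v_p`. For a finite set of indices, expanding `‖∑ₚ b_p v_p‖²` into the Gram sum
`∑_{p,q} conj(b_p) b_q ⟪v_p, v_q⟫` separates the diagonal, at most `A² ‖b‖²_{ℓ²} ≤ A² ‖b‖²_{ℓ¹ℓ²}`,
from the off-diagonal part: for fixed blocks `k, k'`, Cauchy–Schwarz in `(k₁, k₁')` bounds it by
`B² β_k β_{k'}` with `β_k = ‖b_{k,·}‖_{ℓ²}`, and summing over `k, k'` gives `B² (∑ β_k)²`.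
As `A² + B² ≤ (A + B)²`, the partial sums of `𝒢b` are bounded by `(A + B) ‖b‖_{ℓ¹ℓ²}` in `ℓ²`,
and this bound survives the pointwise limit by lower semicontinuity of the `ℓ²` norm.
-/

open scoped ComplexConjugate InnerProductSpace
open Filter Topology Finset

section MixedNorm

variable {κ ι : Type*} (K : Finset κ) (I : Finset ι)

lemma sum_product_sq_le_sq_sum_sqrt (a : κ × ι → ℝ) :
    ∑ p ∈ K ×ˢ I, a p ^ 2 ≤ (∑ k ∈ K, √(∑ i ∈ I, a (k, i) ^ 2)) ^ 2 := by
  calc ∑ p ∈ K ×ˢ I, a p ^ 2 = ∑ k ∈ K, √(∑ i ∈ I, a (k, i) ^ 2) ^ 2 := by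
        rw [sum_product]
        exact sum_congr rfl fun k _ => (Real.sq_sqrt (sum_nonneg fun _ _ => sq_nonneg _)).symm
    _ ≤ _ := sum_sq_le_sq_sum_of_nonneg fun _ _ => Real.sqrt_nonneg _

lemma sum_product_sum_product_mul_le (a : κ × ι → ℝ) (W : κ × ι → κ × ι → ℝ) {M : ℝ}
    (hW : ∀ k k', √(∑ r ∈ I ×ˢ I, W (k, r.1) (k', r.2) ^ 2) ≤ M) :
    ∑ p ∈ K ×ˢ I, ∑ q ∈ K ×ˢ I, a p * a q * W p q ≤
      M * (∑ k ∈ K, √(∑ i ∈ I, a (k, i) ^ 2)) ^ 2 := by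
  set β : κ → ℝ := fun k => √(∑ i ∈ I, a (k, i) ^ 2)
  have hblock (k k' : κ) :
      ∑ r ∈ I ×ˢ I, a (k, r.1) * a (k', r.2) * W (k, r.1) (k', r.2) ≤ M * (β k * β k') := by
    have hsq : ∑ r ∈ I ×ˢ I, (a (k, r.1) * a (k', r.2)) ^ 2 = (β k * β k') ^ 2 := by
      rw [mul_pow, Real.sq_sqrt (sum_nonneg fun _ _ => sq_nonneg _),
        Real.sq_sqrt (sum_nonneg fun _ _ => sq_nonneg _), sum_mul_sum, sum_product]
      simp only [mul_pow]
    calc _ ≤ √(∑ r ∈ I ×ˢ I, (a (k, r.1) * a (k', r.2)) ^ 2) *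
          √(∑ r ∈ I ×ˢ I, W (k, r.1) (k', r.2) ^ 2) := Real.sum_mul_le_sqrt_mul_sqrt _ _ _
      _ ≤ β k * β k' * M := by
        rw [hsq, Real.sqrt_sq (by positivity)]
        exact mul_le_mul_of_nonneg_left (hW k k') (by positivity)
      _ = M * (β k * β k') := mul_comm _ _
  calc ∑ p ∈ K ×ˢ I, ∑ q ∈ K ×ˢ I, a p * a q * W p q
      = ∑ k ∈ K, ∑ k' ∈ K, ∑ r ∈ I ×ˢ I, a (k, r.1) * a (k', r.2) * W (k, r.1) (k', r.2) := by
        simp only [sum_product]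
        exact sum_congr rfl fun k _ => sum_comm
    _ ≤ ∑ k ∈ K, ∑ k' ∈ K, M * (β k * β k') :=
        sum_le_sum fun k _ => sum_le_sum fun k' _ => hblock k k'
    _ = M * (∑ k ∈ K, β k) ^ 2 := by simp_rw [sq, sum_mul_sum, mul_sum]

lemma sum_sqrt_sum_sq_le_tsum {E : Type*} [NormedAddCommGroup E] {b : κ → ι → E}
    (hb2 : ∀ k, Summable fun i => ‖b k i‖ ^ 2) (hb1 : Summable fun k => √(∑' i, ‖b k i‖ ^ 2)) :
    ∑ k ∈ K, √(∑ i ∈ I, ‖b k i‖ ^ 2) ≤ ∑' k, √(∑' i, ‖b k i‖ ^ 2) :=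
  (sum_le_sum fun k _ => Real.sqrt_le_sqrt ((hb2 k).sum_le_tsum I fun _ _ => sq_nonneg _)).trans
    (hb1.sum_le_tsum K fun _ _ => Real.sqrt_nonneg _)

end MixedNorm

section InnerProductSpace

variable {𝕜 E κ ι : Type*} [RCLike 𝕜] [NormedAddCommGroup E] [InnerProductSpace 𝕜 E]

lemma norm_sum_smul_sq_le [DecidableEq ι] (s : Finset ι) (c : ι → 𝕜) (v : ι → E) :
    ‖∑ i ∈ s, c i • v i‖ ^ 2 ≤ ∑ i ∈ s, ‖c i‖ ^ 2 * ‖v i‖ ^ 2 +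
      ∑ i ∈ s, ∑ j ∈ s, if i ≠ j then ‖c i‖ * ‖c j‖ * ‖⟪v i, v j⟫_𝕜‖ else 0 := by
  calc ‖∑ i ∈ s, c i • v i‖ ^ 2 = ‖⟪∑ i ∈ s, c i • v i, ∑ j ∈ s, c j • v j⟫_𝕜‖ := by
        rw [inner_self_eq_norm_sq_to_K, norm_pow, RCLike.norm_ofReal, abs_norm]
    _ = ‖∑ i ∈ s, ∑ j ∈ s, conj (c i) * c j * ⟪v i, v j⟫_𝕜‖ := by
        rw [sum_inner]
        simp only [inner_smul_left, inner_sum, inner_smul_right, mul_assoc, mul_left_comm]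
    _ ≤ ∑ i ∈ s, ∑ j ∈ s, ‖c i‖ * ‖c j‖ * ‖⟪v i, v j⟫_𝕜‖ := by
        refine (norm_sum_le _ _).trans (sum_le_sum fun i _ => (norm_sum_le _ _).trans_eq ?_)
        simp only [norm_mul, RCLike.norm_conj]
    _ = _ := by
        rw [← sum_add_distrib]
        refine sum_congr rfl fun i hi => ?_
        rw [← sum_filter, filter_ne, ← add_sum_erase s _ hi, inner_self_eq_norm_sq_to_K,
          norm_pow, RCLike.norm_ofReal, abs_norm]
        ring

theorem norm_sum_product_smul_le_of_offDiag_gram [DecidableEq κ] [DecidableEq ι] (v : κ × ι → E)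
    {A B : ℝ} (hA0 : 0 ≤ A) (hB0 : 0 ≤ B) (hA : ∀ p, ‖v p‖ ^ 2 ≤ A ^ 2)
    (hBsum : ∀ k k', Summable fun q : ι × ι =>
      if (k, q.1) ≠ (k', q.2) then ‖⟪v (k, q.1), v (k', q.2)⟫_𝕜‖ ^ 2 else 0)
    (hB : ∀ k k', ∑' q : ι × ι,
      (if (k, q.1) ≠ (k', q.2) then ‖⟪v (k, q.1), v (k', q.2)⟫_𝕜‖ ^ 2 else 0) ≤ B ^ 4)
    (c : κ × ι → 𝕜) (K : Finset κ) (I : Finset ι) :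
    ‖∑ p ∈ K ×ˢ I, c p • v p‖ ≤ (A + B) * ∑ k ∈ K, √(∑ i ∈ I, ‖c (k, i)‖ ^ 2) := by
  set N := ∑ k ∈ K, √(∑ i ∈ I, ‖c (k, i)‖ ^ 2)
  have hdiag : ∑ p ∈ K ×ˢ I, ‖c p‖ ^ 2 * ‖v p‖ ^ 2 ≤ A ^ 2 * N ^ 2 :=
    calc ∑ p ∈ K ×ˢ I, ‖c p‖ ^ 2 * ‖v p‖ ^ 2 ≤ ∑ p ∈ K ×ˢ I, A ^ 2 * ‖c p‖ ^ 2 :=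
          sum_le_sum fun p _ =>
            (mul_comm _ _).trans_le (mul_le_mul_of_nonneg_right (hA p) (sq_nonneg _))
      _ ≤ A ^ 2 * N ^ 2 := by
          rw [← mul_sum]
          exact mul_le_mul_of_nonneg_left (sum_product_sq_le_sq_sum_sqrt K I _) (sq_nonneg A)
  set W : κ × ι → κ × ι → ℝ := fun p q => if p ≠ q then ‖⟪v p, v q⟫_𝕜‖ else 0
  have hW (k k' : κ) : √(∑ r ∈ I ×ˢ I, W (k, r.1) (k', r.2) ^ 2) ≤ B ^ 2 := by
    refine (Real.sqrt_le_left (sq_nonneg B)).2 ?_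
    have hsum := (hBsum k k').sum_le_tsum (I ×ˢ I) fun _ _ => by positivity
    simp only [W, ite_pow, zero_pow two_ne_zero]
    linarith [hB k k']
  have hoff : (∑ p ∈ K ×ˢ I, ∑ q ∈ K ×ˢ I,
      if p ≠ q then ‖c p‖ * ‖c q‖ * ‖⟪v p, v q⟫_𝕜‖ else 0) ≤ B ^ 2 * N ^ 2 := by
    simpa only [W, mul_ite, mul_zero] using sum_product_sum_product_mul_le K I _ W hW
  have hN : 0 ≤ N := sum_nonneg fun _ _ => Real.sqrt_nonneg _
  refine le_of_pow_le_pow_left₀ two_ne_zero (by positivity) ?_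
  calc ‖∑ p ∈ K ×ˢ I, c p • v p‖ ^ 2 ≤ A ^ 2 * N ^ 2 + B ^ 2 * N ^ 2 :=
        (norm_sum_smul_sq_le _ c v).trans (add_le_add hdiag hoff)
    _ ≤ ((A + B) * N) ^ 2 := by nlinarith [mul_nonneg (mul_nonneg hA0 hB0) (sq_nonneg N)]

end InnerProductSpace

section lp

variable {α : Type*} {E : α → Type*} [∀ a, NormedAddCommGroup (E a)]

lemma memℓp_two_of_summable_sq {f : ∀ a, E a} (hf : Summable fun a => ‖f a‖ ^ 2) :
    Memℓp f 2 :=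
  memℓp_gen (by simpa [ENNReal.toReal_ofNat, Real.rpow_two] using hf)

lemma lp.norm_sq_eq_tsum (f : lp E 2) : ‖f‖ ^ 2 = ∑' a, ‖f a‖ ^ 2 := by
  simpa [Real.rpow_two] using lp.norm_rpow_eq_tsum (p := 2) (by norm_num) f

lemma lp.summable_sq_and_sqrt_tsum_le_of_tendsto {ι : Type*} {l : Filter ι} [l.NeBot]
    {F : ι → lp E 2} {C : ℝ} (hFC : ∀ i, ‖F i‖ ≤ C) {f : ∀ a, E a}
    (hf : Tendsto (fun i => ⇑(F i)) l (𝓝 f)) :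
    Summable (fun a => ‖f a‖ ^ 2) ∧ √(∑' a, ‖f a‖ ^ 2) ≤ C := by
  have hsum (s : Finset α) : ∑ a ∈ s, ‖f a‖ ^ 2 ≤ C ^ 2 := by
    simpa [Real.rpow_two] using
      lp.sum_rpow_le_of_tendsto (p := 2) (by norm_num) (Eventually.of_forall hFC) hf s
  have hsummable := summable_of_sum_le (fun _ => sq_nonneg _) hsum
  obtain ⟨i⟩ := l.nonempty_of_neBot
  exact ⟨hsummable, (Real.sqrt_le_left ((norm_nonneg _).trans (hFC i))).2
    (hsummable.tsum_le_of_sum_le hsum)⟩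

end lp

/-- **`T T^*` bound for the trilinear coefficient operator `𝒢`.**
With `A = sup_{k,k₁} (Σ_{k₂}|σ^{k₂}_{k,k₁}|²)^{1/2}` and
`B = sup_{k,k'} (Σ_{(k,k₁)≠(k',k₁')} |Σ_{k₂} σ^{k₂}_{k',k₁'} conj(σ^{k₂}_{k,k₁})|²)^{1/4}`,
the map `(𝒢b)(k₂) = Σ_{k,k₁} σ^{k₂}_{k,k₁} b_{k,k₁}` satisfies
`‖𝒢b‖_{ℓ²} ≤ (A + B) ‖b‖_{ℓ¹_k ℓ²_{k₁}}`. -/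
theorem stmt9 (σ : ℤ → ℤ → ℤ → ℂ) (A B : ℝ) (hA0 : 0 ≤ A) (hB0 : 0 ≤ B)
    (hAsum : ∀ k k₁ : ℤ, Summable (fun k₂ => ‖σ k k₁ k₂‖ ^ 2))
    (hA : ∀ k k₁ : ℤ, (∑' k₂, ‖σ k k₁ k₂‖ ^ 2) ≤ A ^ 2)
    (hBsum : ∀ k k' : ℤ, Summable (fun q : ℤ × ℤ =>
      if (k, q.1) ≠ (k', q.2) then
        ‖∑' k₂, σ k' q.2 k₂ * (starRingEnd ℂ) (σ k q.1 k₂)‖ ^ 2 else 0))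
    (hB : ∀ k k' : ℤ, (∑' q : ℤ × ℤ,
        if (k, q.1) ≠ (k', q.2) then
          ‖∑' k₂, σ k' q.2 k₂ * (starRingEnd ℂ) (σ k q.1 k₂)‖ ^ 2 else 0) ≤ B ^ 4)
    (b : ℤ → ℤ → ℂ)
    (hb2 : ∀ k : ℤ, Summable (fun k₁ => ‖b k k₁‖ ^ 2))
    (hb1 : Summable (fun k => Real.sqrt (∑' k₁, ‖b k k₁‖ ^ 2)))
    (hconv : ∀ k₂ : ℤ, Summable (fun p : ℤ × ℤ => σ p.1 p.2 k₂ * b p.1 p.2)) :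
    Summable (fun k₂ => ‖∑' p : ℤ × ℤ, σ p.1 p.2 k₂ * b p.1 p.2‖ ^ 2) ∧
      Real.sqrt (∑' k₂, ‖∑' p : ℤ × ℤ, σ p.1 p.2 k₂ * b p.1 p.2‖ ^ 2) ≤
        (A + B) * ∑' k, Real.sqrt (∑' k₁, ‖b k k₁‖ ^ 2) := by
  let v : ℤ × ℤ → lp (fun _ : ℤ => ℂ) 2 := fun p =>
    ⟨σ p.1 p.2, memℓp_two_of_summable_sq (hAsum p.1 p.2)⟩
  have hinner (p q : ℤ × ℤ) : ⟪v p, v q⟫_ℂ = ∑' k₂, σ q.1 q.2 k₂ * conj (σ p.1 p.2 k₂) :=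
    lp.inner_eq_tsum _ _
  have hv (p : ℤ × ℤ) : ‖v p‖ ^ 2 ≤ A ^ 2 := (lp.norm_sq_eq_tsum (v p)).trans_le (hA p.1 p.2)
  have hbox (KI : Finset ℤ × Finset ℤ) :
      ‖∑ p ∈ KI.1 ×ˢ KI.2, b p.1 p.2 • v p‖ ≤ (A + B) * ∑' k, √(∑' k₁, ‖b k k₁‖ ^ 2) :=
    (norm_sum_product_smul_le_of_offDiag_gram v hA0 hB0 hv
      (by simpa only [hinner] using hBsum) (by simpa only [hinner] using hB) _ KI.1 KI.2).trans
      (mul_le_mul_of_nonneg_left (sum_sqrt_sum_sq_le_tsum _ _ hb2 hb1) (by positivity))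
  have hlim : Tendsto (fun F : Finset (ℤ × ℤ) => ⇑(∑ p ∈ F, b p.1 p.2 • v p)) atTop
      (𝓝 fun k₂ => ∑' p : ℤ × ℤ, σ p.1 p.2 k₂ * b p.1 p.2) := by
    refine tendsto_pi_nhds.2 fun k₂ => ((hconv k₂).hasSum : Tendsto _ atTop _).congr fun F => ?_
    simp only [lp.coeFn_sum, lp.coeFn_smul, Finset.sum_apply, Pi.smul_apply, smul_eq_mul, v]
    exact sum_congr rfl fun p _ => mul_comm _ _
  exact lp.summable_sq_and_sqrt_tsum_le_of_tendsto hbox (hlim.comp tendsto_finsetProd_atTop)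
end

section
/- For j ≥ 0 define κ_j := (2j−1)!!/j!, where (2j−1)!! = ∏_{i=1}^{j} (2i−1) and (−1)!! = 1, so κ₀ = 1. Then for every integer j ≥ 1, j · κ_j = Σ κ_{j₁} κ_{j₂} κ_{j₃}, where the sum runs over all triples (j₁, j₂, j₃) of nonnegative integers with j₁ + j₂ + j₃ = j − 1. Equivalently, the sequence defined by κ₀ = 1 and the recurrence κ_j = (1/j) Σ_{j₁+j₂+j₃=j−1} κ_{j₁} κ_{j₂} κ_{j₃} equals (2j−1)!!/j! for every j. -/
/-- `κ_j = (2j−1)!!/j!` where `(2j−1)!! = ∏_{i=1}^j (2i−1)` and `(−1)!! = 1`. -/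
def kappa (j : ℕ) : ℚ :=
  ((∏ i ∈ Finset.range j, (2 * i + 1) : ℕ) : ℚ) / (Nat.factorial j : ℚ)

lemma kappa_zero : kappa 0 = 1 := by simp [kappa]

lemma kappa_rec (j : ℕ) : ((j:ℚ)+1) * kappa (j+1) = (2*(j:ℚ)+1) * kappa j := by
  unfold kappa
  rw [Finset.prod_range_succ, Nat.factorial_succ]
  have h1 : (Nat.factorial j : ℚ) ≠ 0 := by exact_mod_cast (Nat.factorial_pos j).ne'
  have h2 : ((j:ℚ)+1) ≠ 0 := by positivity
  push_cast
  field_simp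

noncomputable def S (n : ℕ) : ℚ := ∑ b ∈ Finset.range (n+1), kappa b * kappa (n - b)
noncomputable def T (n : ℕ) : ℚ := ∑ b ∈ Finset.range (n+1), (b:ℚ) * kappa b * kappa (n - b)

lemma two_T (n : ℕ) : 2 * T n = (n:ℚ) * S n := by
  have h : T n = ∑ b ∈ Finset.range (n+1), ((n - b : ℕ):ℚ) * kappa (n - b) * kappa b := by
    simp only [T]; rw [← Finset.sum_range_reflect]
    apply Finset.sum_congr rfl
    intro b hb
    simp only [Finset.mem_range] at hb
    congr 2 <;> omega
  rw [two_mul]; nth_rewrite 2 [h]; simp only [T, S]; rw [← Finset.sum_add_distrib, Finset.mul_sum]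
  apply Finset.sum_congr rfl
  intro b hb
  simp only [Finset.mem_range] at hb
  have : ((n - b : ℕ):ℚ) = (n:ℚ) - b := by
    rw [Nat.cast_sub (by omega)]
  rw [this]
  ring

lemma T_succ (n : ℕ) : T (n+1) = 2 * T n + S n := by
  simp only [T]; rw [Finset.sum_range_succ']
  simp only [Nat.cast_zero, zero_mul, Nat.cast_add, Nat.cast_one, add_zero]
  have : ∀ b ∈ Finset.range (n+1), ((b:ℚ)+1) * kappa (b+1) * kappa (n+1 - (b+1))
      = ((2*(b:ℚ)+1) * kappa b) * kappa (n - b) := by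
    intro b hb
    have h : n + 1 - (b+1) = n - b := by omega
    rw [h, kappa_rec]
  rw [Finset.sum_congr rfl this]
  simp only [S]; rw [Finset.mul_sum, ← Finset.sum_add_distrib]
  apply Finset.sum_congr rfl
  intro b hb
  ring

lemma S_eq (n : ℕ) : S n = 2 ^ n := by
  induction n with
  | zero => simp [S, kappa_zero]
  | succ n ih =>
    have h1 : ((n:ℚ)+1) * S (n+1) = 2 * T (n+1) := by
      have := two_T (n+1); push_cast at this; linarith
    have h2 : ((n:ℚ)+1) * S (n+1) = ((n:ℚ)+1) * (2 * S n) := by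
      rw [h1, T_succ, mul_add, mul_comm 2 (T n)]
      have := two_T n
      nlinarith [this]
    have h3 : ((n:ℚ)+1) ≠ 0 := by positivity
    have := mul_left_cancel₀ h3 h2
    rw [this, ih]; ring

noncomputable def S3 (n : ℕ) : ℚ := ∑ a ∈ Finset.range (n+1), kappa a * 2 ^ (n - a)

lemma kappa_mul (j : ℕ) (hj : 1 ≤ j) : (j:ℚ) * kappa j = S3 (j-1) := by
  induction j with
  | zero => omega
  | succ j ih =>
    rcases Nat.eq_or_lt_of_le hj with h | h
    · have hj0 : j = 0 := by omega
      subst hj0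
      norm_num [S3, kappa, Finset.sum_range_one]
    · have hj1 : 1 ≤ j := by omega
      have key : S3 j = 2 * S3 (j-1) + kappa j := by
        simp only [S3]
        rw [Finset.sum_range_succ]
        have : ∀ a ∈ Finset.range j, kappa a * (2:ℚ) ^ (j - a)
            = 2 * (kappa a * 2 ^ (j - 1 - a)) := by
          intro a ha
          simp only [Finset.mem_range] at ha
          have : j - a = (j - 1 - a) + 1 := by omega
          rw [this]; ring
        rw [Finset.sum_congr rfl this, ← Finset.mul_sum]
        have hr : j = (j - 1) + 1 := by omega
        rw [hr]
        simp
      have hrec := kappa_rec j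
      have : ((j:ℕ):ℚ) + 1 = ((j+1:ℕ):ℚ) := by push_cast; ring
      rw [Nat.succ_sub_one]
      push_cast
      rw [key, ← ih hj1]
      linarith [kappa_rec j]

lemma kappa_inner_sum (N m : ℕ) (h : m < N) :
    ∑ b ∈ Finset.range N, ∑ c ∈ Finset.range N,
      (if b + c = m then kappa b * kappa c else 0) = 2 ^ m := by
  have step : ∀ b ∈ Finset.range N,
      ∑ c ∈ Finset.range N, (if b + c = m then kappa b * kappa c else 0)
        = if b ≤ m then kappa b * kappa (m - b) else 0 := by
    intro b _
    by_cases hb : b ≤ m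
    · have h1 : ∑ c ∈ Finset.range N, (if b + c = m then kappa b * kappa c else 0)
          = ∑ c ∈ Finset.range N, (if c = m - b then kappa b * kappa c else 0) := by
        apply Finset.sum_congr rfl
        intro c _
        by_cases hc : b + c = m
        · rw [if_pos hc, if_pos (by omega)]
        · rw [if_neg hc, if_neg (by omega)]
      rw [h1, Finset.sum_ite_eq' (Finset.range N) (m - b) (fun c => kappa b * kappa c),
        if_pos (Finset.mem_range.mpr (by omega)), if_pos hb]
    · rw [if_neg hb]
      apply Finset.sum_eq_zero
      intro c _
      exact if_neg (by omega)
  rw [Finset.sum_congr rfl step, ← Finset.sum_filter]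
  have hset : Finset.filter (fun b => b ≤ m) (Finset.range N) = Finset.range (m+1) := by
    ext x; simp [Finset.mem_filter, Finset.mem_range]; omega
  rw [hset]
  have := S_eq m
  simpa [S] using this

/-- **The recurrence for `κ_j = (2j−1)!!/j!`.**
`κ₀ = 1` and for every `j ≥ 1`,
`j κ_j = Σ_{j₁+j₂+j₃ = j−1} κ_{j₁} κ_{j₂} κ_{j₃}`. -/
theorem stmt11 :
    kappa 0 = 1 ∧
      ∀ j : ℕ, 1 ≤ j →
        (j : ℚ) * kappa j =
          ∑ p ∈ (Finset.range j ×ˢ Finset.range j ×ˢ Finset.range j).filter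
              (fun p => p.1 + p.2.1 + p.2.2 + 1 = j),
            kappa p.1 * kappa p.2.1 * kappa p.2.2 := by
  refine ⟨kappa_zero, ?_⟩
  intro j hj
  rw [Finset.sum_filter, Finset.sum_product]
  have step : ∀ a ∈ Finset.range j,
      (∑ q ∈ Finset.range j ×ˢ Finset.range j,
        if a + q.1 + q.2 + 1 = j then kappa a * kappa q.1 * kappa q.2 else 0)
      = kappa a * 2 ^ (j - 1 - a) := by
    intro a ha
    simp only [Finset.mem_range] at ha
    rw [Finset.sum_product]
    have h1 : ∀ b ∈ Finset.range j, ∀ c ∈ Finset.range j,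
        (if a + b + c + 1 = j then kappa a * kappa b * kappa c else 0)
        = kappa a * (if b + c = j - 1 - a then kappa b * kappa c else 0) := by
      intro b _ c _
      by_cases hc : a + b + c + 1 = j
      · rw [if_pos hc, if_pos (by omega)]; ring
      · rw [if_neg hc, if_neg (by omega)]; ring
    calc ∑ b ∈ Finset.range j, ∑ c ∈ Finset.range j,
          (if a + b + c + 1 = j then kappa a * kappa b * kappa c else 0)
        = ∑ b ∈ Finset.range j, ∑ c ∈ Finset.range j,
          kappa a * (if b + c = j - 1 - a then kappa b * kappa c else 0) := by
          apply Finset.sum_congr rfl; intro b hb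
          exact Finset.sum_congr rfl (fun c hc => h1 b hb c hc)
      _ = kappa a * ∑ b ∈ Finset.range j, ∑ c ∈ Finset.range j,
          (if b + c = j - 1 - a then kappa b * kappa c else 0) := by
          rw [Finset.mul_sum]
          exact Finset.sum_congr rfl (fun b _ => (Finset.mul_sum _ _ _).symm)
      _ = kappa a * 2 ^ (j - 1 - a) := by rw [kappa_inner_sum j (j - 1 - a) (by omega)]
  rw [Finset.sum_congr rfl step]
  have hr : j = (j - 1) + 1 := by omega
  rw [kappa_mul j hj]
  simp only [S3]
  rw [← hr]
end

section
/- Let T > 0 and let (a_j)_{j≥0} be a sequence of nonnegative measurable functions on [0,T] such that a₀(t) ≤ 1 for all t ∈ [0,T], and for every integer j ≥ 1 and every t ∈ [0,T], a_j(t) ≤ ∫₀ᵗ Σ a_{j₁}(t′) a_{j₂}(t′) a_{j₃}(t′) dt′, where the sum runs over all triples (j₁, j₂, j₃) of nonnegative integers with j₁ + j₂ + j₃ = j − 1. Then for every j ≥ 0 and every t ∈ [0,T], a_j(t) ≤ ((2j−1)!!/j!) · t^j. -/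
/-!
Let `c_n = (2n-1)!!/n!`, the Taylor coefficients of `F = (1 - 2x)^(-1/2)`. Since `F' = F³`,
`(n+1) c_{n+1} = ∑_{i+j+k=n} c_i c_j c_k`, that is, `c_{n+1} t^{n+1} = ∫₀ᵗ ∑ c_i c_j c_k s^n ds`:
the bounds `c_j t^j` satisfy the recursion with equality. Strong induction on `j` then gives
`a_j(t) ≤ c_j t^j`, comparing the integrands termwise thanks to `a_j ≥ 0`.

For formal power series, `F' = F³` follows from `(1 - 2X) F' = F`, which is the recursion
`(n+1) c_{n+1} = (2n+1) c_n`, and from `F² (1 - 2X) = 1`, whose derivative vanishes by the former.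
-/

open MeasureTheory Finset PowerSeries Nat

section OneSubTwoX

variable {R : Type*} [Ring R]

lemma coeff_zero_one_sub_two_X_mul (f : R⟦X⟧) : coeff 0 ((1 - 2 * X) * f) = coeff 0 f := by
  simp

lemma coeff_succ_one_sub_two_X_mul (f : R⟦X⟧) (n : ℕ) :
    coeff (n + 1) ((1 - 2 * X) * f) = coeff (n + 1) f - 2 * coeff n f := by
  rw [← map_ofNat C 2, sub_mul, one_mul, (commute_X (C 2)).eq, mul_assoc, map_sub,
    coeff_succ_X_mul, coeff_C_mul]

end OneSubTwoX

section InvSqrt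

variable (K : Type*) [Field K]

/-- `(2n-1)!!/n!`, the `n`-th Taylor coefficient of `(1 - 2x)^(-1/2)`. -/
noncomputable def invSqrtCoeff (n : ℕ) : K :=
  (∏ i ∈ range n, (2 * (i : K) + 1)) / n !

noncomputable def invSqrtSeries : K⟦X⟧ := mk (invSqrtCoeff K)

variable {K}

@[simp]
lemma invSqrtCoeff_zero : invSqrtCoeff K 0 = 1 := by simp [invSqrtCoeff]

variable [CharZero K]

lemma succ_mul_invSqrtCoeff_succ (n : ℕ) :
    (n + 1) * invSqrtCoeff K (n + 1) = (2 * n + 1) * invSqrtCoeff K n := by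
  have : (n ! : K) ≠ 0 := Nat.cast_ne_zero.mpr n.factorial_ne_zero
  simp only [invSqrtCoeff, prod_range_succ, factorial_succ]
  push_cast
  field_simp

lemma one_sub_two_X_mul_derivative_invSqrtSeries :
    (1 - 2 * X) * d⁄dX K (invSqrtSeries K) = invSqrtSeries K := by
  ext (_ | n)
  · rw [coeff_zero_one_sub_two_X_mul]
    simpa [invSqrtSeries, coeff_derivative] using succ_mul_invSqrtCoeff_succ (K := K) 0
  · have h := succ_mul_invSqrtCoeff_succ (K := K) (n + 1)
    rw [coeff_succ_one_sub_two_X_mul]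
    simp only [invSqrtSeries, coeff_derivative, coeff_mk]
    push_cast at h ⊢
    linear_combination h

lemma invSqrtSeries_sq_mul_one_sub_two_X : invSqrtSeries K ^ 2 * (1 - 2 * X) = 1 := by
  apply derivative.ext
  · have h : d⁄dX K (1 - 2 * X : K⟦X⟧) = -2 := by
      rw [← map_ofNat C 2]
      simp
    rw [Derivation.leibniz, derivative_pow, h, derivative_one, smul_eq_mul, smul_eq_mul]
    linear_combination (2 * invSqrtSeries K) * one_sub_two_X_mul_derivative_invSqrtSeries (K := K)
  · simp [invSqrtSeries]

lemma derivative_invSqrtSeries : d⁄dX K (invSqrtSeries K) = invSqrtSeries K ^ 3 := by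
  calc d⁄dX K (invSqrtSeries K)
      = invSqrtSeries K ^ 2 * ((1 - 2 * X) * d⁄dX K (invSqrtSeries K)) := by
        rw [← mul_assoc, invSqrtSeries_sq_mul_one_sub_two_X, one_mul]
    _ = invSqrtSeries K ^ 3 := by
        rw [one_sub_two_X_mul_derivative_invSqrtSeries]
        ring

end InvSqrt

section CubicConvolution

variable {R : Type*} [CommSemiring R]

def cubicConvolution (n : ℕ) (x : ℕ → R) : R :=
  ∑ p ∈ (range n ×ˢ range n ×ˢ range n).filter (fun p => p.1 + p.2.1 + p.2.2 + 1 = n),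
    x p.1 * x p.2.1 * x p.2.2

lemma cubicConvolution_succ (n : ℕ) (x : ℕ → R) :
    cubicConvolution (n + 1) x =
      ∑ q ∈ antidiagonal n, x q.1 * ∑ r ∈ antidiagonal q.2, x r.1 * x r.2 := by
  simp only [cubicConvolution, mul_sum, sum_sigma']
  refine sum_nbij' (fun p => ⟨(p.1, p.2.1 + p.2.2), (p.2.1, p.2.2)⟩)
    (fun q => (q.1.1, q.2.1, q.2.2)) ?_ ?_ ?_ ?_ ?_
  · intro p hp
    simp only [mem_filter, mem_product, mem_range] at hp
    simp only [mem_sigma, HasAntidiagonal.mem_antidiagonal, and_true]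
    omega
  · rintro ⟨⟨i, m⟩, ⟨j, k⟩⟩ hq
    simp only [mem_sigma, HasAntidiagonal.mem_antidiagonal] at hq
    simp only [mem_filter, mem_product, mem_range]
    omega
  · intro p _
    rfl
  · rintro ⟨⟨i, m⟩, ⟨j, k⟩⟩ hq
    simp only [mem_sigma, HasAntidiagonal.mem_antidiagonal] at hq
    obtain ⟨-, rfl⟩ := hq
    rfl
  · intro p _
    rw [mul_assoc]

lemma coeff_pow_three (f : R⟦X⟧) (n : ℕ) :
    coeff n (f ^ 3) = cubicConvolution (n + 1) (fun i => coeff i f) := by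
  simp only [cubicConvolution_succ, pow_three, coeff_mul]

lemma cubicConvolution_mul_pow (n : ℕ) (x : ℕ → R) (s : R) :
    cubicConvolution (n + 1) (fun i => x i * s ^ i) = cubicConvolution (n + 1) x * s ^ n := by
  rw [cubicConvolution, cubicConvolution, sum_mul]
  refine sum_congr rfl fun p hp => ?_
  obtain ⟨-, hsum⟩ := mem_filter.mp hp
  rw [show n = p.1 + p.2.1 + p.2.2 by omega, pow_add, pow_add]
  ring

variable [PartialOrder R] [IsOrderedRing R]

lemma cubicConvolution_nonneg {n : ℕ} {x : ℕ → R} (hx : ∀ i < n, 0 ≤ x i) :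
    0 ≤ cubicConvolution n x := by
  refine sum_nonneg fun p hp => ?_
  simp only [mem_filter, mem_product, mem_range] at hp
  obtain ⟨⟨h₁, h₂, h₃⟩, -⟩ := hp
  exact mul_nonneg (mul_nonneg (hx _ h₁) (hx _ h₂)) (hx _ h₃)

lemma cubicConvolution_mono {n : ℕ} {x y : ℕ → R} (hx : ∀ i < n, 0 ≤ x i)
    (hxy : ∀ i < n, x i ≤ y i) : cubicConvolution n x ≤ cubicConvolution n y := by
  refine sum_le_sum fun p hp => ?_
  simp only [mem_filter, mem_product, mem_range] at hp
  obtain ⟨⟨h₁, h₂, h₃⟩, -⟩ := hp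
  have hy : ∀ i < n, 0 ≤ y i := fun i hi => (hx i hi).trans (hxy i hi)
  exact mul_le_mul (mul_le_mul (hxy _ h₁) (hxy _ h₂) (hx _ h₂) (hy _ h₁)) (hxy _ h₃) (hx _ h₃)
    (mul_nonneg (hy _ h₁) (hy _ h₂))

end CubicConvolution

lemma cubicConvolution_invSqrtCoeff {K : Type*} [Field K] [CharZero K] (n : ℕ) :
    cubicConvolution (n + 1) (invSqrtCoeff K) = (n + 1) * invSqrtCoeff K (n + 1) := by
  have h := congrArg (coeff n) (derivative_invSqrtSeries (K := K))
  rw [coeff_derivative, coeff_pow_three] at h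
  simpa [invSqrtSeries, mul_comm] using h.symm

lemma intervalIntegral.integral_mono_of_nonneg_on {μ : Measure ℝ} {f g : ℝ → ℝ} {a b : ℝ}
    (hab : a ≤ b) (hg : IntervalIntegrable g μ a b) (hf : ∀ x ∈ Set.Ioc a b, 0 ≤ f x)
    (hfg : ∀ x ∈ Set.Ioc a b, f x ≤ g x) :
    ∫ x in a..b, f x ∂μ ≤ ∫ x in a..b, g x ∂μ := by
  rw [intervalIntegral.integral_of_le hab, intervalIntegral.integral_of_le hab]
  exact integral_mono_of_nonneg (ae_restrict_of_forall_mem measurableSet_Ioc hf) hg.1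
    (ae_restrict_of_forall_mem measurableSet_Ioc hfg)

theorem stmt12_general (T : ℝ) (a : ℕ → ℝ → ℝ)
    (hpos : ∀ j, ∀ t ∈ Set.Icc (0 : ℝ) T, 0 ≤ a j t)
    (h0 : ∀ t ∈ Set.Icc (0 : ℝ) T, a 0 t ≤ 1)
    (hrec : ∀ j : ℕ, 1 ≤ j → ∀ t ∈ Set.Icc (0 : ℝ) T,
      a j t ≤ ∫ s in (0 : ℝ)..t,
        ∑ p ∈ (Finset.range j ×ˢ Finset.range j ×ˢ Finset.range j).filter
            (fun p => p.1 + p.2.1 + p.2.2 + 1 = j),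
          a p.1 s * a p.2.1 s * a p.2.2 s) :
    ∀ j : ℕ, ∀ t ∈ Set.Icc (0 : ℝ) T,
      a j t ≤ ((∏ i ∈ Finset.range j, (2 * (i : ℝ) + 1)) / (Nat.factorial j : ℝ)) *
        t ^ j := by
  intro j
  induction j using Nat.strong_induction_on with | _ j ih => ?_
  rintro t ⟨ht0, htT⟩
  rcases j with _ | n
  · simpa using h0 t ⟨ht0, htT⟩
  have hmem : ∀ s ∈ Set.Ioc 0 t, s ∈ Set.Icc 0 T := fun s hs => ⟨hs.1.le, hs.2.trans htT⟩
  calc a (n + 1) t ≤ ∫ s in (0 : ℝ)..t, cubicConvolution (n + 1) (a · s) :=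
        hrec (n + 1) n.succ_pos t ⟨ht0, htT⟩
    _ ≤ ∫ s in (0 : ℝ)..t, (n + 1) * invSqrtCoeff ℝ (n + 1) * s ^ n := by
        refine intervalIntegral.integral_mono_of_nonneg_on ht0
          ((by fun_prop : Continuous _).intervalIntegrable _ _)
          (fun s hs => cubicConvolution_nonneg fun i _ => hpos i s (hmem s hs)) fun s hs => ?_
        rw [← cubicConvolution_invSqrtCoeff, ← cubicConvolution_mul_pow]
        exact cubicConvolution_mono (fun i _ => hpos i s (hmem s hs))
          fun i hi => ih i hi s (hmem s hs)
    _ = invSqrtCoeff ℝ (n + 1) * t ^ (n + 1) := by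
        rw [intervalIntegral.integral_const_mul, integral_pow]
        field_simp
        ring

/-- **Iteration bound of Gronwall type.**
If `a_j ≥ 0` on `[0,T]`, `a₀ ≤ 1`, and
`a_j(t) ≤ ∫₀ᵗ Σ_{j₁+j₂+j₃=j−1} a_{j₁} a_{j₂} a_{j₃} dt'` for `j ≥ 1`,
then `a_j(t) ≤ ((2j−1)!!/j!) t^j` on `[0,T]`. -/
theorem stmt12 (T : ℝ) (hT : 0 < T) (a : ℕ → ℝ → ℝ)
    (hmeas : ∀ j, Measurable (a j))
    (hpos : ∀ j, ∀ t ∈ Set.Icc (0 : ℝ) T, 0 ≤ a j t)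
    (h0 : ∀ t ∈ Set.Icc (0 : ℝ) T, a 0 t ≤ 1)
    (hrec : ∀ j : ℕ, 1 ≤ j → ∀ t ∈ Set.Icc (0 : ℝ) T,
      a j t ≤ ∫ s in (0 : ℝ)..t,
        ∑ p ∈ (Finset.range j ×ˢ Finset.range j ×ˢ Finset.range j).filter
            (fun p => p.1 + p.2.1 + p.2.2 + 1 = j),
          a p.1 s * a p.2.1 s * a p.2.2 s) :
    ∀ j : ℕ, ∀ t ∈ Set.Icc (0 : ℝ) T,
      a j t ≤ ((∏ i ∈ Finset.range j, (2 * (i : ℝ) + 1)) / (Nat.factorial j : ℝ)) *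
        t ^ j :=
  stmt12_general T a hpos h0 hrec
end

section
/- Let 1/2 < b₀ ≤ 1 and 0 < ε < b₀. There exists a constant C (depending only on b₀ and ε) such that for all λ ∈ ℝ and a ∈ ℝ: ∫_ℝ ⟨μ⟩^{−1} (⟨λ⟩^{−10} + ⟨λ−μ⟩^{−10}) ⟨μ − a⟩^{−b₀} dμ ≤ C ⟨λ⟩^{−1} ⟨λ − a⟩^{−(b₀ − ε)}. -/
open MeasureTheory Real

-- integrability of (1+x^2)^(-t) for t > 1/2
lemma aux_int (t : ℝ) (ht : 1/2 < t) :
    Integrable (fun x : ℝ => (1 + x ^ 2) ^ (-t)) := by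
  have h := integrable_rpow_neg_one_add_norm_sq (E := ℝ) (μ := volume) (r := 2 * t)
    (by simp; linarith)
  have : (fun x : ℝ => (1 + x ^ 2) ^ (-t)) = fun x : ℝ => ((1 : ℝ) + ‖x‖ ^ 2) ^ (-(2*t) / 2) := by
    funext x
    rw [Real.norm_eq_abs, sq_abs]
    congr 1; ring
  rw [this]
  exact h

-- Peetre-type pointwise bound
lemma aux_pe (s x y : ℝ) (hs : 0 ≤ s) :
    (1 + x ^ 2) ^ (-s) ≤ 2 ^ s * (1 + (x + y) ^ 2) ^ (-s) * (1 + y ^ 2) ^ s := by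
  have hA : (0:ℝ) < 1 + (x + y) ^ 2 := by positivity
  have hB : (0:ℝ) < 1 + x ^ 2 := by positivity
  have hC : (0:ℝ) < 1 + y ^ 2 := by positivity
  have key : (1 + x ^ 2)⁻¹ ≤ 2 * (1 + y ^ 2) / (1 + (x + y) ^ 2) := by
    rw [inv_eq_one_div, div_le_div_iff₀ hB hA]
    nlinarith [sq_nonneg (x*y - 1), sq_nonneg (x - y)]
  calc (1 + x ^ 2) ^ (-s) = ((1 + x ^ 2)⁻¹) ^ s := by
        rw [Real.inv_rpow hB.le, ← Real.rpow_neg hB.le]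
      _ ≤ (2 * (1 + y ^ 2) / (1 + (x + y) ^ 2)) ^ s :=
        Real.rpow_le_rpow (by positivity) key hs
      _ = 2 ^ s * (1 + (x + y) ^ 2) ^ (-s) * (1 + y ^ 2) ^ s := by
        rw [Real.div_rpow (by positivity) hA.le, Real.mul_rpow (by norm_num) hC.le,
          Real.rpow_neg hA.le]
        ring

lemma aux_quarter (ρ w v : ℝ) (hρ : 0 ≤ ρ) (hw : 0 < w) (h : w ≤ 4 * v) :
    v ^ (-ρ) ≤ 4 ^ ρ * w ^ (-ρ) := by
  have hv : 0 < v := by linarith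
  have h4 : (0:ℝ) < w / 4 := by positivity
  calc v ^ (-ρ) ≤ (w / 4) ^ (-ρ) :=
        Real.rpow_le_rpow_of_nonpos h4 (by linarith) (neg_nonpos.mpr hρ)
    _ = 4 ^ ρ * w ^ (-ρ) := by
        rw [Real.div_rpow hw.le (by norm_num : (0:ℝ) ≤ 4),
          Real.rpow_neg (by norm_num : (0:ℝ) ≤ 4)]
        field_simp

lemma aux_conv (β ρ δ P : ℝ) (hβ : β = ρ + δ) (hρ0 : 0 ≤ ρ) (hρP : ρ ≤ P)
    (hδ : 0 < δ) (hP : 1/2 ≤ P) :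
    ∃ K, 0 ≤ K ∧ ∀ a : ℝ,
      Integrable (fun μ : ℝ => (1 + μ ^ 2) ^ (-P) * (1 + (μ - a) ^ 2) ^ (-β)) ∧
      (∫ μ : ℝ, (1 + μ ^ 2) ^ (-P) * (1 + (μ - a) ^ 2) ^ (-β)) ≤ K * (1 + a ^ 2) ^ (-ρ) := by
  have hPδ : 1/2 < P + δ := by linarith
  have hI := aux_int (P + δ) hPδ
  set I : ℝ := ∫ x : ℝ, (1 + x ^ 2) ^ (-(P + δ)) with hIdef
  have hI0 : 0 ≤ I := integral_nonneg fun x => Real.rpow_nonneg (by positivity) _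
  refine ⟨4 ^ ρ * (I + I), by positivity, fun a => ?_⟩
  -- pointwise bound
  have ptw : ∀ μ : ℝ, (1 + μ ^ 2) ^ (-P) * (1 + (μ - a) ^ 2) ^ (-β) ≤
      4 ^ ρ * (1 + a ^ 2) ^ (-ρ) *
        ((1 + μ ^ 2) ^ (-(P + δ)) + (1 + (μ - a) ^ 2) ^ (-(P + δ))) := by
    intro μ
    have hu : (0:ℝ) < 1 + μ ^ 2 := by positivity
    have hv : (0:ℝ) < 1 + (μ - a) ^ 2 := by positivity
    have hw : (0:ℝ) < 1 + a ^ 2 := by positivity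
    rcases le_total (1 + μ ^ 2) (1 + (μ - a) ^ 2) with h | h
    · have hwa : 1 + a ^ 2 ≤ 4 * (1 + (μ - a) ^ 2) := by
        nlinarith [sq_nonneg (μ + (μ - a))]
      have e1 : (1 + (μ - a) ^ 2) ^ (-β) =
          (1 + (μ - a) ^ 2) ^ (-ρ) * (1 + (μ - a) ^ 2) ^ (-δ) := by
        rw [hβ, show -(ρ + δ) = -ρ + -δ by ring, Real.rpow_add hv]
      have e2 : (1 + (μ - a) ^ 2) ^ (-ρ) ≤ 4 ^ ρ * (1 + a ^ 2) ^ (-ρ) :=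
        aux_quarter ρ _ _ hρ0 hw hwa
      have e3 : (1 + (μ - a) ^ 2) ^ (-δ) ≤ (1 + μ ^ 2) ^ (-δ) :=
        Real.rpow_le_rpow_of_nonpos hu h (by linarith)
      calc (1 + μ ^ 2) ^ (-P) * (1 + (μ - a) ^ 2) ^ (-β)
          = (1 + μ ^ 2) ^ (-P) *
            ((1 + (μ - a) ^ 2) ^ (-ρ) * (1 + (μ - a) ^ 2) ^ (-δ)) := by rw [e1]
        _ ≤ (1 + μ ^ 2) ^ (-P) *
            ((4 ^ ρ * (1 + a ^ 2) ^ (-ρ)) * (1 + μ ^ 2) ^ (-δ)) := by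
            have := mul_le_mul e2 e3 (Real.rpow_nonneg hv.le _) (by positivity)
            exact mul_le_mul_of_nonneg_left this (Real.rpow_nonneg hu.le _)
        _ = 4 ^ ρ * (1 + a ^ 2) ^ (-ρ) * ((1 + μ ^ 2) ^ (-P) * (1 + μ ^ 2) ^ (-δ)) := by
            ring
        _ = 4 ^ ρ * (1 + a ^ 2) ^ (-ρ) * (1 + μ ^ 2) ^ (-(P + δ)) := by
            rw [show -(P + δ) = -P + -δ by ring, Real.rpow_add hu]
        _ ≤ 4 ^ ρ * (1 + a ^ 2) ^ (-ρ) *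
            ((1 + μ ^ 2) ^ (-(P + δ)) + (1 + (μ - a) ^ 2) ^ (-(P + δ))) := by
            have h1 : (0:ℝ) ≤ (1 + (μ - a) ^ 2) ^ (-(P + δ)) := Real.rpow_nonneg hv.le _
            have h2 : (0:ℝ) ≤ 4 ^ ρ * (1 + a ^ 2) ^ (-ρ) := by positivity
            nlinarith
    · have hwa : 1 + a ^ 2 ≤ 4 * (1 + μ ^ 2) := by
        nlinarith [sq_nonneg (μ + (μ - a))]
      have e1 : (1 + μ ^ 2) ^ (-P) =
          (1 + μ ^ 2) ^ (-ρ) * (1 + μ ^ 2) ^ (-(P - ρ)) := by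
        rw [← Real.rpow_add hu]; congr 1; ring
      have e2 : (1 + μ ^ 2) ^ (-ρ) ≤ 4 ^ ρ * (1 + a ^ 2) ^ (-ρ) :=
        aux_quarter ρ _ _ hρ0 hw hwa
      have e3 : (1 + μ ^ 2) ^ (-(P - ρ)) ≤ (1 + (μ - a) ^ 2) ^ (-(P - ρ)) :=
        Real.rpow_le_rpow_of_nonpos hv h (by linarith)
      calc (1 + μ ^ 2) ^ (-P) * (1 + (μ - a) ^ 2) ^ (-β)
          = ((1 + μ ^ 2) ^ (-ρ) * (1 + μ ^ 2) ^ (-(P - ρ))) * (1 + (μ - a) ^ 2) ^ (-β) := by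
            rw [e1]
        _ ≤ ((4 ^ ρ * (1 + a ^ 2) ^ (-ρ)) * (1 + (μ - a) ^ 2) ^ (-(P - ρ))) *
            (1 + (μ - a) ^ 2) ^ (-β) := by
            have := mul_le_mul e2 e3 (Real.rpow_nonneg hu.le _) (by positivity)
            exact mul_le_mul_of_nonneg_right this (Real.rpow_nonneg hv.le _)
        _ = 4 ^ ρ * (1 + a ^ 2) ^ (-ρ) *
            ((1 + (μ - a) ^ 2) ^ (-(P - ρ)) * (1 + (μ - a) ^ 2) ^ (-β)) := by ring
        _ = 4 ^ ρ * (1 + a ^ 2) ^ (-ρ) * (1 + (μ - a) ^ 2) ^ (-(P + δ)) := by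
            rw [← Real.rpow_add hv]; congr 1; rw [hβ]; ring
        _ ≤ 4 ^ ρ * (1 + a ^ 2) ^ (-ρ) *
            ((1 + μ ^ 2) ^ (-(P + δ)) + (1 + (μ - a) ^ 2) ^ (-(P + δ))) := by
            have h1 : (0:ℝ) ≤ (1 + μ ^ 2) ^ (-(P + δ)) := Real.rpow_nonneg hu.le _
            have h2 : (0:ℝ) ≤ 4 ^ ρ * (1 + a ^ 2) ^ (-ρ) := by positivity
            nlinarith
  -- integrability of the dominating function
  have hg : Integrable (fun μ : ℝ => 4 ^ ρ * (1 + a ^ 2) ^ (-ρ) *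
      ((1 + μ ^ 2) ^ (-(P + δ)) + (1 + (μ - a) ^ 2) ^ (-(P + δ)))) :=
    (hI.add (hI.comp_sub_right a)).const_mul _
  have hfm : AEStronglyMeasurable
      (fun μ : ℝ => (1 + μ ^ 2) ^ (-P) * (1 + (μ - a) ^ 2) ^ (-β)) volume := by
    apply Measurable.aestronglyMeasurable
    fun_prop
  have hf : Integrable (fun μ : ℝ => (1 + μ ^ 2) ^ (-P) * (1 + (μ - a) ^ 2) ^ (-β)) := by
    refine hg.mono hfm (Filter.Eventually.of_forall fun μ => ?_)
    rw [Real.norm_eq_abs, Real.norm_eq_abs, abs_of_nonneg (by positivity),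
      abs_of_nonneg (by positivity)]
    exact ptw μ
  refine ⟨hf, ?_⟩
  calc (∫ μ : ℝ, (1 + μ ^ 2) ^ (-P) * (1 + (μ - a) ^ 2) ^ (-β))
      ≤ ∫ μ : ℝ, 4 ^ ρ * (1 + a ^ 2) ^ (-ρ) *
          ((1 + μ ^ 2) ^ (-(P + δ)) + (1 + (μ - a) ^ 2) ^ (-(P + δ))) :=
        integral_mono hf hg ptw
    _ = 4 ^ ρ * (1 + a ^ 2) ^ (-ρ) * (I + I) := by
        rw [integral_const_mul, integral_add hI (hI.comp_sub_right a),
          integral_sub_right_eq_self (fun x : ℝ => (1 + x ^ 2) ^ (-(P + δ))) a]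
    _ = 4 ^ ρ * (I + I) * (1 + a ^ 2) ^ (-ρ) := by ring

/-- **Modulation kernel integral estimate.**
For `1/2 < b₀ ≤ 1` and `0 < ε < b₀`, there is `C` such that for all `λ, a ∈ ℝ`,
`∫ ⟨μ⟩⁻¹ (⟨λ⟩^{−10} + ⟨λ−μ⟩^{−10}) ⟨μ−a⟩^{−b₀} dμ ≤ C ⟨λ⟩⁻¹ ⟨λ−a⟩^{−(b₀−ε)}`,
with `⟨x⟩ = (1+x²)^{1/2}`. -/
theorem stmt14 (b₀ ε : ℝ) (hb₀ : 1 / 2 < b₀) (hb₀' : b₀ ≤ 1) (hε : 0 < ε) (hε' : ε < b₀) :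
    ∃ C > 0, ∀ l a : ℝ,
      (∫ m : ℝ, (1 + m ^ 2) ^ (-(1 / 2) : ℝ) *
          ((1 + l ^ 2) ^ (-(5 : ℝ)) + (1 + (l - m) ^ 2) ^ (-(5 : ℝ))) *
          (1 + (m - a) ^ 2) ^ (-b₀ / 2)) ≤
        C * (1 + l ^ 2) ^ (-(1 / 2) : ℝ) * (1 + (l - a) ^ 2) ^ (-(b₀ - ε) / 2) := by
  have hρ0 : (0:ℝ) ≤ (b₀ - ε) / 2 := by linarith
  obtain ⟨K1, hK1, H1⟩ := aux_conv (b₀/2) ((b₀-ε)/2) (ε/2) (1/2) (by ring) hρ0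
    (by linarith) (by linarith) le_rfl
  obtain ⟨K9, hK9, H9⟩ := aux_conv (b₀/2) ((b₀-ε)/2) (ε/2) (9/2) (by ring) hρ0
    (by linarith) (by linarith) (by norm_num)
  set ρ : ℝ := (b₀ - ε) / 2 with hρdef
  set β : ℝ := b₀ / 2 with hβdef
  refine ⟨K1 * 2 ^ ρ + 2 ^ ((1:ℝ)/2) * K9 + 1, by positivity, fun l a => ?_⟩
  simp only [neg_div]
  have hul : (0:ℝ) < 1 + l ^ 2 := by positivity
  have hula : (0:ℝ) < 1 + (l - a) ^ 2 := by positivity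
  have hX : (0:ℝ) ≤ (1 + l ^ 2) ^ (-(1/2) : ℝ) * (1 + (l - a) ^ 2) ^ (-ρ) := by positivity
  -- term 2 auxiliary: the shifted convolution integrand
  obtain ⟨hint9, hbd9⟩ := H9 (a - l)
  have hcomp : (fun m : ℝ => (1 + (l - m) ^ 2) ^ (-(9/2) : ℝ) * (1 + (m - a) ^ 2) ^ (-β)) =
      fun m : ℝ => (1 + (m - l) ^ 2) ^ (-(9/2) : ℝ) * (1 + (m - l - (a - l)) ^ 2) ^ (-β) := by
    funext m
    rw [show 1 + (l - m) ^ 2 = 1 + (m - l) ^ 2 by ring, show m - a = m - l - (a - l) by ring]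
  have hintG : Integrable (fun m : ℝ =>
      (1 + (l - m) ^ 2) ^ (-(9/2) : ℝ) * (1 + (m - a) ^ 2) ^ (-β)) := by
    rw [hcomp]; exact hint9.comp_sub_right l
  have hbdG : (∫ m : ℝ, (1 + (l - m) ^ 2) ^ (-(9/2) : ℝ) * (1 + (m - a) ^ 2) ^ (-β)) ≤
      K9 * (1 + (l - a) ^ 2) ^ (-ρ) := by
    rw [hcomp]
    rw [show (∫ m : ℝ, (1 + (m - l) ^ 2) ^ (-(9/2) : ℝ) * (1 + (m - l - (a - l)) ^ 2) ^ (-β)) =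
        ∫ μ : ℝ, (1 + μ ^ 2) ^ (-(9/2) : ℝ) * (1 + (μ - (a - l)) ^ 2) ^ (-β) from
      integral_sub_right_eq_self
        (fun μ : ℝ => (1 + μ ^ 2) ^ (-(9/2) : ℝ) * (1 + (μ - (a - l)) ^ 2) ^ (-β)) l]
    rw [show 1 + (l - a) ^ 2 = 1 + (a - l) ^ 2 by ring]
    exact hbd9
  -- pointwise bound for term 2
  have hptw2 : ∀ m : ℝ, (1 + m ^ 2) ^ (-(1/2) : ℝ) * (1 + (l - m) ^ 2) ^ (-(5:ℝ)) *
      (1 + (m - a) ^ 2) ^ (-β) ≤ 2 ^ ((1:ℝ)/2) * (1 + l ^ 2) ^ (-(1/2) : ℝ) *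
        ((1 + (l - m) ^ 2) ^ (-(9/2) : ℝ) * (1 + (m - a) ^ 2) ^ (-β)) := by
    intro m
    have hum : (0:ℝ) < 1 + m ^ 2 := by positivity
    have hulm : (0:ℝ) < 1 + (l - m) ^ 2 := by positivity
    have pe := aux_pe (1/2) m (l - m) (by norm_num)
    rw [show m + (l - m) = l by ring] at pe
    have e9 : (1 + (l - m) ^ 2) ^ ((1:ℝ)/2) * (1 + (l - m) ^ 2) ^ (-(5:ℝ)) =
        (1 + (l - m) ^ 2) ^ (-(9/2) : ℝ) := by
      rw [← Real.rpow_add hulm]; norm_num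
    calc (1 + m ^ 2) ^ (-(1/2) : ℝ) * (1 + (l - m) ^ 2) ^ (-(5:ℝ)) * (1 + (m - a) ^ 2) ^ (-β)
        ≤ 2 ^ ((1:ℝ)/2) * (1 + l ^ 2) ^ (-(1/2) : ℝ) * (1 + (l - m) ^ 2) ^ ((1:ℝ)/2) *
          (1 + (l - m) ^ 2) ^ (-(5:ℝ)) * (1 + (m - a) ^ 2) ^ (-β) := by
          have h1 : (0:ℝ) ≤ (1 + (l - m) ^ 2) ^ (-(5:ℝ)) := Real.rpow_nonneg hulm.le _
          have h2 : (0:ℝ) ≤ (1 + (m - a) ^ 2) ^ (-β) := Real.rpow_nonneg (by positivity) _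
          exact mul_le_mul_of_nonneg_right (mul_le_mul_of_nonneg_right pe h1) h2
      _ = 2 ^ ((1:ℝ)/2) * (1 + l ^ 2) ^ (-(1/2) : ℝ) *
          ((1 + (l - m) ^ 2) ^ (-(9/2) : ℝ) * (1 + (m - a) ^ 2) ^ (-β)) := by
          rw [← e9]; ring
  -- integrability of the two terms
  obtain ⟨hint1, hbd1⟩ := H1 a
  have hT1 : Integrable (fun m : ℝ => (1 + l ^ 2) ^ (-(5:ℝ)) *
      ((1 + m ^ 2) ^ (-(1/2) : ℝ) * (1 + (m - a) ^ 2) ^ (-β))) := hint1.const_mul _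
  have hT2bnd : Integrable (fun m : ℝ => 2 ^ ((1:ℝ)/2) * (1 + l ^ 2) ^ (-(1/2) : ℝ) *
      ((1 + (l - m) ^ 2) ^ (-(9/2) : ℝ) * (1 + (m - a) ^ 2) ^ (-β))) := hintG.const_mul _
  have hT2 : Integrable (fun m : ℝ => (1 + m ^ 2) ^ (-(1/2) : ℝ) *
      (1 + (l - m) ^ 2) ^ (-(5:ℝ)) * (1 + (m - a) ^ 2) ^ (-β)) := by
    refine hT2bnd.mono ?_ (Filter.Eventually.of_forall fun m => ?_)
    · apply Measurable.aestronglyMeasurable; fun_prop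
    · rw [Real.norm_eq_abs, Real.norm_eq_abs, abs_of_nonneg (by positivity),
        abs_of_nonneg (by positivity)]
      exact hptw2 m
  -- split the integral
  have hsplit : (fun m : ℝ => (1 + m ^ 2) ^ (-(1 / 2) : ℝ) *
      ((1 + l ^ 2) ^ (-(5 : ℝ)) + (1 + (l - m) ^ 2) ^ (-(5 : ℝ))) *
      (1 + (m - a) ^ 2) ^ (-β)) =
      fun m : ℝ => (1 + l ^ 2) ^ (-(5:ℝ)) *
        ((1 + m ^ 2) ^ (-(1/2) : ℝ) * (1 + (m - a) ^ 2) ^ (-β)) +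
        (1 + m ^ 2) ^ (-(1/2) : ℝ) * (1 + (l - m) ^ 2) ^ (-(5:ℝ)) *
          (1 + (m - a) ^ 2) ^ (-β) := by
    funext m; ring
  rw [hsplit, integral_add hT1 hT2]
  -- bound term 1
  have bnd1 : (∫ m : ℝ, (1 + l ^ 2) ^ (-(5:ℝ)) *
      ((1 + m ^ 2) ^ (-(1/2) : ℝ) * (1 + (m - a) ^ 2) ^ (-β))) ≤
      K1 * 2 ^ ρ * ((1 + l ^ 2) ^ (-(1/2) : ℝ) * (1 + (l - a) ^ 2) ^ (-ρ)) := by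
    rw [integral_const_mul]
    have step1 : (1 + l ^ 2) ^ (-(5:ℝ)) *
        (∫ m : ℝ, (1 + m ^ 2) ^ (-(1/2) : ℝ) * (1 + (m - a) ^ 2) ^ (-β)) ≤
        (1 + l ^ 2) ^ (-(5:ℝ)) * (K1 * (1 + a ^ 2) ^ (-ρ)) :=
      mul_le_mul_of_nonneg_left hbd1 (Real.rpow_nonneg hul.le _)
    have pe := aux_pe ρ a (-l) hρ0
    rw [show a + -l = -(l - a) by ring, neg_sq, neg_sq] at pe
    have step2 : (1 + l ^ 2) ^ (-(5:ℝ)) * (K1 * (1 + a ^ 2) ^ (-ρ)) ≤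
        (1 + l ^ 2) ^ (-(5:ℝ)) * (K1 * (2 ^ ρ * (1 + (l - a) ^ 2) ^ (-ρ) * (1 + l ^ 2) ^ ρ)) := by
      have := mul_le_mul_of_nonneg_left pe hK1
      exact mul_le_mul_of_nonneg_left this (Real.rpow_nonneg hul.le _)
    have step3 : (1 + l ^ 2) ^ (-(5:ℝ)) * (K1 * (2 ^ ρ * (1 + (l - a) ^ 2) ^ (-ρ) * (1 + l ^ 2) ^ ρ))
        = K1 * 2 ^ ρ * ((1 + l ^ 2) ^ (-(5:ℝ) + ρ) * (1 + (l - a) ^ 2) ^ (-ρ)) := by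
      rw [Real.rpow_add hul]; ring
    have step4 : (1 + l ^ 2) ^ (-(5:ℝ) + ρ) ≤ (1 + l ^ 2) ^ (-(1/2) : ℝ) := by
      apply Real.rpow_le_rpow_of_exponent_le (by nlinarith)
      rw [hρdef]; linarith
    calc _ ≤ (1 + l ^ 2) ^ (-(5:ℝ)) * (K1 * (1 + a ^ 2) ^ (-ρ)) := step1
      _ ≤ _ := step2
      _ = K1 * 2 ^ ρ * ((1 + l ^ 2) ^ (-(5:ℝ) + ρ) * (1 + (l - a) ^ 2) ^ (-ρ)) := step3
      _ ≤ K1 * 2 ^ ρ * ((1 + l ^ 2) ^ (-(1/2) : ℝ) * (1 + (l - a) ^ 2) ^ (-ρ)) := by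
          have h1 : (0:ℝ) ≤ (1 + (l - a) ^ 2) ^ (-ρ) := Real.rpow_nonneg hula.le _
          have h2 : (0:ℝ) ≤ K1 * 2 ^ ρ := by positivity
          exact mul_le_mul_of_nonneg_left
            (mul_le_mul_of_nonneg_right step4 h1) h2
  -- bound term 2
  have bnd2 : (∫ m : ℝ, (1 + m ^ 2) ^ (-(1/2) : ℝ) * (1 + (l - m) ^ 2) ^ (-(5:ℝ)) *
      (1 + (m - a) ^ 2) ^ (-β)) ≤
      2 ^ ((1:ℝ)/2) * K9 * ((1 + l ^ 2) ^ (-(1/2) : ℝ) * (1 + (l - a) ^ 2) ^ (-ρ)) := by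
    calc (∫ m : ℝ, (1 + m ^ 2) ^ (-(1/2) : ℝ) * (1 + (l - m) ^ 2) ^ (-(5:ℝ)) *
          (1 + (m - a) ^ 2) ^ (-β))
        ≤ ∫ m : ℝ, 2 ^ ((1:ℝ)/2) * (1 + l ^ 2) ^ (-(1/2) : ℝ) *
          ((1 + (l - m) ^ 2) ^ (-(9/2) : ℝ) * (1 + (m - a) ^ 2) ^ (-β)) :=
          integral_mono hT2 hT2bnd hptw2
      _ = 2 ^ ((1:ℝ)/2) * (1 + l ^ 2) ^ (-(1/2) : ℝ) *
          (∫ m : ℝ, (1 + (l - m) ^ 2) ^ (-(9/2) : ℝ) * (1 + (m - a) ^ 2) ^ (-β)) :=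
          integral_const_mul _ _
      _ ≤ 2 ^ ((1:ℝ)/2) * (1 + l ^ 2) ^ (-(1/2) : ℝ) * (K9 * (1 + (l - a) ^ 2) ^ (-ρ)) := by
          exact mul_le_mul_of_nonneg_left hbdG (by positivity)
      _ = 2 ^ ((1:ℝ)/2) * K9 * ((1 + l ^ 2) ^ (-(1/2) : ℝ) * (1 + (l - a) ^ 2) ^ (-ρ)) := by
          ring
  calc _ ≤ K1 * 2 ^ ρ * ((1 + l ^ 2) ^ (-(1/2) : ℝ) * (1 + (l - a) ^ 2) ^ (-ρ)) +
        2 ^ ((1:ℝ)/2) * K9 * ((1 + l ^ 2) ^ (-(1/2) : ℝ) * (1 + (l - a) ^ 2) ^ (-ρ)) :=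
        add_le_add bnd1 bnd2
    _ ≤ (K1 * 2 ^ ρ + 2 ^ ((1:ℝ)/2) * K9 + 1) * (1 + l ^ 2) ^ (-(1/2) : ℝ) *
        (1 + (l - a) ^ 2) ^ (-ρ) := by nlinarith
end

section
/- Let χ be a smooth compactly supported function on ℝ with Fourier transform χ̂, and define for λ, μ ∈ ℝ: K(λ, μ) := ∫_ℝ [ χ̂(λ−σ) χ̂(σ−μ) / (iσ) − χ̂(λ) χ̂(σ−μ) / (iσ) ] dσ (the integral converges absolutely). Then for every B > 1 there exists a constant C_B such that for all λ, μ ∈ ℝ: |K(λ, μ)| ≤ C_B ( ⟨λ⟩^{−B} + ⟨λ − μ⟩^{−B} ) ⟨μ⟩^{−1}. -/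
open MeasureTheory

open MeasureTheory Real Complex SchwartzMap
open scoped FourierTransform

noncomputable section
namespace Stmt17Aux


def toSchwartz (χ : ℝ → ℂ) (hχ : ContDiff ℝ (⊤ : ℕ∞) χ) (hχc : HasCompactSupport χ) :
    SchwartzMap ℝ ℂ where
  toFun := χ
  smooth' := hχ.of_le (by simp)
  decay' := by
    intro k n
    set F : ℝ → ℝ := fun x => ‖x‖ ^ k * ‖iteratedFDeriv ℝ n χ x‖ with hF
    have hcont : Continuous F :=
      (continuous_norm.pow k).mul (hχ.continuous_iteratedFDeriv (by exact_mod_cast le_top)).norm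
    have hsupp : HasCompactSupport F :=
      HasCompactSupport.mul_left ((hχc.iteratedFDeriv n).norm)
    obtain ⟨C, hC⟩ := hsupp.exists_bound_of_continuous hcont
    exact ⟨C, fun x => (le_abs_self _).trans (hC x)⟩

theorem toSchwartz_coe (χ : ℝ → ℂ) (hχ : ContDiff ℝ (⊤ : ℕ∞) χ) (hχc : HasCompactSupport χ) :
    ⇑(fourierTransformCLM ℂ (toSchwartz χ hχ hχc)) = FourierTransform.fourier χ := rfl

/-- polynomial decay in `(1+|x|)` form -/
theorem decay_one_add (φ : SchwartzMap ℝ ℂ) (n : ℕ) :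
    ∃ C, 0 ≤ C ∧ ∀ x : ℝ, ‖φ x‖ * (1 + |x|) ^ n ≤ C := by
  obtain ⟨C0, hC0pos, hC0⟩ := φ.decay 0 0
  obtain ⟨Cn, hCnpos, hCn⟩ := φ.decay n 0
  refine ⟨2 ^ n * (C0 + Cn), by positivity, fun x => ?_⟩
  have h0 := hC0 x
  have hn := hCn x
  rw [norm_iteratedFDeriv_zero] at h0 hn
  simp only [pow_zero, one_mul] at h0
  have hb : (1 + |x|) ^ n ≤ 2 ^ n * (1 + |x| ^ n) := by
    rcases le_total (|x|) 1 with h | h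
    · calc (1 + |x|) ^ n ≤ 2 ^ n := by
            apply pow_le_pow_left₀ (by positivity) (by linarith)
          _ ≤ 2 ^ n * (1 + |x| ^ n) := by nlinarith [pow_nonneg (abs_nonneg x) n, pow_pos (show (0:ℝ) < 2 by norm_num) n]
    · calc (1 + |x|) ^ n ≤ (2 * |x|) ^ n := by
            apply pow_le_pow_left₀ (by positivity) (by linarith)
          _ = 2 ^ n * |x| ^ n := mul_pow 2 _ n
          _ ≤ 2 ^ n * (1 + |x| ^ n) := by nlinarith [pow_pos (show (0:ℝ) < 2 by norm_num) n]
  calc ‖φ x‖ * (1 + |x|) ^ n ≤ ‖φ x‖ * (2 ^ n * (1 + |x| ^ n)) := by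
        exact mul_le_mul_of_nonneg_left hb (norm_nonneg _)
    _ = 2 ^ n * (‖φ x‖ + |x| ^ n * ‖φ x‖) := by ring
    _ ≤ 2 ^ n * (C0 + Cn) := by
        have : |x| ^ n * ‖φ x‖ ≤ Cn := by simpa [Real.norm_eq_abs] using hn
        have h2 : (0:ℝ) ≤ 2 ^ n := by positivity
        nlinarith



theorem peetre (a b : ℝ) : 1 + |a + b| ≤ (1 + |a|) * (1 + |b|) := by
  have h := abs_add_le a b
  nlinarith [abs_nonneg a, abs_nonneg b, abs_mul_abs_self a]

theorem diff_bound (φ : SchwartzMap ℝ ℂ) (n : ℕ) :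
    ∃ C, 0 ≤ C ∧ ∀ l s : ℝ, |s| ≤ 1 →
      ‖φ (l - s) - φ l‖ * (1 + |l|) ^ n ≤ C * |s| := by
  obtain ⟨C, hC0, hC⟩ := decay_one_add (derivCLM ℝ ℂ φ) n
  refine ⟨2 ^ n * C, by positivity, fun l s hs => ?_⟩
  have hlpos : (0:ℝ) < (1 + |l|) ^ n := by positivity
  have hmv : ‖φ (l - s) - φ l‖ ≤ (2 ^ n * C / (1 + |l|) ^ n) * ‖(l - s) - l‖ := by
    refine Convex.norm_image_sub_le_of_norm_deriv_le
      (fun x _ => φ.differentiable.differentiableAt) (fun x hx => ?_)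
      (convex_closedBall l 1) (Metric.mem_closedBall_self zero_le_one) ?_
    · have h1 : ‖deriv (⇑φ) x‖ * (1 + |x|) ^ n ≤ C := by
        simpa [SchwartzMap.derivCLM_apply] using hC x
      have hx1 : |l - x| ≤ 1 := by
        have := hx
        rw [Metric.mem_closedBall, Real.dist_eq] at this
        rwa [abs_sub_comm]
      have h2 : (1 + |l|) ^ n ≤ 2 ^ n * (1 + |x|) ^ n := by
        have : 1 + |l| ≤ 2 * (1 + |x|) := by
          have h3 : |l| ≤ |x| + |l - x| := by
            have := abs_add_le x (l - x); simpa using this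
          nlinarith [abs_nonneg x]
        calc (1 + |l|) ^ n ≤ (2 * (1 + |x|)) ^ n :=
              pow_le_pow_left₀ (by positivity) this n
          _ = 2 ^ n * (1 + |x|) ^ n := mul_pow _ _ _
      rw [le_div_iff₀ hlpos]
      have hxpos : (0:ℝ) < (1 + |x|) ^ n := by positivity
      calc ‖deriv (⇑φ) x‖ * (1 + |l|) ^ n
          ≤ ‖deriv (⇑φ) x‖ * (2 ^ n * (1 + |x|) ^ n) :=
            mul_le_mul_of_nonneg_left h2 (norm_nonneg _)
        _ = 2 ^ n * (‖deriv (⇑φ) x‖ * (1 + |x|) ^ n) := by ring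
        _ ≤ 2 ^ n * C := by nlinarith [pow_pos (show (0:ℝ) < 2 by norm_num) n]
    · rw [Metric.mem_closedBall, Real.dist_eq]
      simpa using hs
  have hnorm : ‖(l - s) - l‖ = |s| := by
    rw [Real.norm_eq_abs]; rw [show (l - s) - l = -s by ring, abs_neg]
  rw [hnorm] at hmv
  calc ‖φ (l - s) - φ l‖ * (1 + |l|) ^ n
      ≤ (2 ^ n * C / (1 + |l|) ^ n * |s|) * (1 + |l|) ^ n :=
        mul_le_mul_of_nonneg_right hmv (le_of_lt hlpos)
    _ = 2 ^ n * C * |s| := by field_simp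


theorem peetre' (a b : ℝ) : 1 + |a + b| ≤ (1 + |a|) * (1 + |b|) := by
  have h := abs_add_le a b
  nlinarith [abs_nonneg a, abs_nonneg b, abs_mul_abs_self a]

set_option maxHeartbeats 2000000 in
theorem key_pointwise (φ : ℝ → ℂ) (n k : ℕ) (hkn : k + 3 ≤ n)
    (C₁ C₂ : ℝ) (hC₁ : 0 ≤ C₁) (hC₂ : 0 ≤ C₂)
    (hdec : ∀ x, ‖φ x‖ * (1 + |x|) ^ n ≤ C₁)
    (hdiff : ∀ l s : ℝ, |s| ≤ 1 → ‖φ (l - s) - φ l‖ * (1 + |l|) ^ n ≤ C₂ * |s|)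
    (l m s : ℝ) :
    ‖φ (l - s) * φ (s - m) / (Complex.I * (s:ℂ)) -
        φ l * φ (s - m) / (Complex.I * (s:ℂ))‖ ≤
      4 ^ n * (C₁ * C₂ + C₁ * C₁ + 1) *
        ((((1 + |l|) ^ k)⁻¹ + ((1 + |l - m|) ^ k)⁻¹) * (1 + |m|)⁻¹) *
        ((if |s| ≤ 1 then 1 else 0) + ((1 + |s - m|) ^ 2)⁻¹) := by
  have hn3 : 3 ≤ n := by omega
  have hkn' : k ≤ n := by omega
  set M : ℝ := 4 ^ n * (C₁ * C₂ + C₁ * C₁ + 1) with hMdef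
  have hM : (0:ℝ) ≤ M := by positivity
  have h4n : (4:ℝ) ≤ 4 ^ n := by
    calc (4:ℝ) = 4 ^ 1 := (pow_one 4).symm
    _ ≤ 4 ^ n := pow_le_pow_right₀ (by norm_num) (by omega)
  have hprod : (0:ℝ) ≤ C₁ * C₂ + C₁ * C₁ + 1 := by positivity
  have hfac := mul_le_mul_of_nonneg_right h4n hprod
  have hM1 : 2 * C₁ * C₂ ≤ M := by rw [hMdef]; nlinarith [mul_nonneg hC₁ hC₂, mul_nonneg hC₁ hC₁]
  have hM2 : 2 * (C₁ * C₁) ≤ M := by rw [hMdef]; nlinarith [mul_nonneg hC₁ hC₂, mul_nonneg hC₁ hC₁]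
  have hel : (0:ℝ) < 1 + |l| := by positivity
  have hel1 : (1:ℝ) ≤ 1 + |l| := by simpa using abs_nonneg l
  have hem1 : (1:ℝ) ≤ 1 + |m| := by simpa using abs_nonneg m
  have hesm1 : (1:ℝ) ≤ 1 + |s - m| := by simpa using abs_nonneg (s - m)
  have helm1 : (1:ℝ) ≤ 1 + |l - m| := by simpa using abs_nonneg (l - m)
  have hels1 : (1:ℝ) ≤ 1 + |l - s| := by simpa using abs_nonneg (l - s)
  have hes1 : (1:ℝ) ≤ 1 + |s| := by simpa using abs_nonneg s
  have hP : (0:ℝ) ≤ (((1 + |l|) ^ k)⁻¹ + ((1 + |l - m|) ^ k)⁻¹) * (1 + |m|)⁻¹ := by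
    positivity
  have hu : (0:ℝ) ≤ (if |s| ≤ 1 then (1:ℝ) else 0) + ((1 + |s - m|) ^ 2)⁻¹ := by
    have h1 : (0:ℝ) ≤ (if |s| ≤ 1 then (1:ℝ) else 0) := by split <;> norm_num
    have h2 : (0:ℝ) ≤ ((1 + |s - m|) ^ 2)⁻¹ := by positivity
    linarith
  -- peetre for m
  have hm : 1 + |m| ≤ (1 + |s|) * (1 + |s - m|) := by
    have h := peetre' s (m - s)
    rw [show s + (m - s) = m by ring, abs_sub_comm m s] at h
    exact h
  have hgoal : φ (l - s) * φ (s - m) / (Complex.I * (s:ℂ)) -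
      φ l * φ (s - m) / (Complex.I * (s:ℂ)) =
      (φ (l - s) - φ l) * φ (s - m) / (Complex.I * (s:ℂ)) := by
    rw [← sub_div, ← sub_mul]
  rw [hgoal]
  rcases eq_or_ne s 0 with rfl | hs0
  · rw [Complex.ofReal_zero, mul_zero, div_zero, norm_zero]
    exact mul_nonneg (mul_nonneg hM hP) hu
  have habs : (0:ℝ) < |s| := abs_pos.2 hs0
  have hnorm : ‖(φ (l - s) - φ l) * φ (s - m) / (Complex.I * (s:ℂ))‖ =
      ‖φ (l - s) - φ l‖ * ‖φ (s - m)‖ / |s| := by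
    rw [norm_div, norm_mul, norm_mul, Complex.norm_I, one_mul, Complex.norm_real,
      Real.norm_eq_abs]
  rw [hnorm]
  set a := ‖φ (l - s) - φ l‖ with hadef
  set b := ‖φ (s - m)‖ with hbdef
  have ha0 : 0 ≤ a := norm_nonneg _
  have hb0 : 0 ≤ b := norm_nonneg _
  have hb : b ≤ C₁ / (1 + |s - m|) ^ n := by
    rw [le_div_iff₀ (by positivity)]; exact hdec (s - m)
  rcases le_or_gt (|s|) 1 with hs1 | hs1
  · -- |s| ≤ 1
    have ha : a ≤ C₂ * |s| / (1 + |l|) ^ n := by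
      rw [le_div_iff₀ (by positivity)]; exact hdiff l s hs1
    have key : a * b / |s| ≤ 2 * C₁ * C₂ * (((1 + |l|) ^ k)⁻¹ * (1 + |m|)⁻¹) := by
      have step1 : a * b / |s| ≤ (C₂ * |s| / (1 + |l|) ^ n) * (C₁ / (1 + |s - m|) ^ n) / |s| := by
        gcongr
      have step2 : (C₂ * |s| / (1 + |l|) ^ n) * (C₁ / (1 + |s - m|) ^ n) / |s| =
          C₁ * C₂ / ((1 + |l|) ^ n * (1 + |s - m|) ^ n) := by
        field_simp
      have hdenom : (1 + |l|) ^ k * (1 + |m|) ≤ 2 * ((1 + |l|) ^ n * (1 + |s - m|) ^ n) := by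
        have e1 : (1 + |l|) ^ k ≤ (1 + |l|) ^ n := pow_le_pow_right₀ hel1 hkn'
        have e2 : 1 + |m| ≤ 2 * (1 + |s - m|) ^ n := by
          have e3 : 1 + |s - m| ≤ (1 + |s - m|) ^ n :=
            le_self_pow₀ hesm1 (by omega)
          nlinarith
        calc (1 + |l|) ^ k * (1 + |m|) ≤ (1 + |l|) ^ n * (2 * (1 + |s - m|) ^ n) := by
              apply mul_le_mul e1 e2 (by positivity) (by positivity)
          _ = 2 * ((1 + |l|) ^ n * (1 + |s - m|) ^ n) := by ring
      have step3 : C₁ * C₂ / ((1 + |l|) ^ n * (1 + |s - m|) ^ n) ≤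
          2 * C₁ * C₂ * (((1 + |l|) ^ k)⁻¹ * (1 + |m|)⁻¹) := by
        rw [← mul_inv, ← div_eq_mul_inv]
        rw [div_le_div_iff₀ (by positivity) (by positivity)]
        calc C₁ * C₂ * ((1 + |l|) ^ k * (1 + |m|))
            ≤ C₁ * C₂ * (2 * ((1 + |l|) ^ n * (1 + |s - m|) ^ n)) :=
              mul_le_mul_of_nonneg_left hdenom (mul_nonneg hC₁ hC₂)
          _ = 2 * C₁ * C₂ * ((1 + |l|) ^ n * (1 + |s - m|) ^ n) := by ring
      calc a * b / |s| ≤ _ := step1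
        _ = _ := step2
        _ ≤ _ := step3
    rw [if_pos hs1]
    have hu1 : (1:ℝ) ≤ 1 + ((1 + |s - m|) ^ 2)⁻¹ := by
      have : (0:ℝ) ≤ ((1 + |s - m|) ^ 2)⁻¹ := by positivity
      linarith
    calc a * b / |s| ≤ 2 * C₁ * C₂ * (((1 + |l|) ^ k)⁻¹ * (1 + |m|)⁻¹) := key
      _ ≤ M * ((((1 + |l|) ^ k)⁻¹ + ((1 + |l - m|) ^ k)⁻¹) * (1 + |m|)⁻¹) := by
          exact mul_le_mul hM1 (mul_le_mul_of_nonneg_right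
            (le_add_of_nonneg_right (by positivity)) (by positivity)) (by positivity) hM
      _ ≤ M * ((((1 + |l|) ^ k)⁻¹ + ((1 + |l - m|) ^ k)⁻¹) * (1 + |m|)⁻¹) *
          (1 + ((1 + |s - m|) ^ 2)⁻¹) :=
          le_mul_of_one_le_right (mul_nonneg hM hP) hu1
  · -- 1 < |s|
    rw [if_neg (not_le.2 hs1)]
    have hsinv : |s|⁻¹ ≤ 2 / (1 + |s|) := by
      rw [inv_eq_one_div, div_le_div_iff₀ habs (by positivity)]
      linarith
    have ha : a ≤ ‖φ (l - s)‖ + ‖φ l‖ := norm_sub_le _ _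
    have hb1 : ‖φ (l - s)‖ ≤ C₁ / (1 + |l - s|) ^ n := by
      rw [le_div_iff₀ (by positivity)]; exact hdec (l - s)
    have hb2 : ‖φ l‖ ≤ C₁ / (1 + |l|) ^ n := by
      rw [le_div_iff₀ (by positivity)]; exact hdec l
    have split : a * b / |s| = a * b * |s|⁻¹ := by rw [div_eq_mul_inv]
    have T : a * b * |s|⁻¹ ≤
        (C₁ / (1 + |l - s|) ^ n + C₁ / (1 + |l|) ^ n) * (C₁ / (1 + |s - m|) ^ n) *
          (2 / (1 + |s|)) := by
      apply mul_le_mul (mul_le_mul (ha.trans (by gcongr)) hb hb0 (by positivity)) hsinv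
        (by positivity) (by positivity)
    have Teq : (C₁ / (1 + |l - s|) ^ n + C₁ / (1 + |l|) ^ n) * (C₁ / (1 + |s - m|) ^ n) *
          (2 / (1 + |s|)) =
        C₁ / (1 + |l - s|) ^ n * (C₁ / (1 + |s - m|) ^ n) * (2 / (1 + |s|)) +
        C₁ / (1 + |l|) ^ n * (C₁ / (1 + |s - m|) ^ n) * (2 / (1 + |s|)) := by ring
    have U1 : C₁ / (1 + |l - s|) ^ n * (C₁ / (1 + |s - m|) ^ n) * (2 / (1 + |s|)) =
        2 * (C₁ * C₁) / ((1 + |l - s|) ^ n * (1 + |s - m|) ^ n * (1 + |s|)) := by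
      rw [div_mul_div_comm, div_mul_div_comm]; ring
    have U2 : C₁ / (1 + |l|) ^ n * (C₁ / (1 + |s - m|) ^ n) * (2 / (1 + |s|)) =
        2 * (C₁ * C₁) / ((1 + |l|) ^ n * (1 + |s - m|) ^ n * (1 + |s|)) := by
      rw [div_mul_div_comm, div_mul_div_comm]; ring
    -- denominator comparisons
    have d2 : (1 + |l|) ^ k * (1 + |m|) * (1 + |s - m|) ^ 2 ≤
        (1 + |l|) ^ n * (1 + |s - m|) ^ n * (1 + |s|) := by
      have e1 : (1 + |l|) ^ k ≤ (1 + |l|) ^ n := pow_le_pow_right₀ hel1 hkn'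
      calc (1 + |l|) ^ k * (1 + |m|) * (1 + |s - m|) ^ 2
          ≤ (1 + |l|) ^ n * ((1 + |s|) * (1 + |s - m|)) * (1 + |s - m|) ^ 2 := by
            apply mul_le_mul (mul_le_mul e1 hm (by positivity) (by positivity)) le_rfl
              (by positivity) (by positivity)
        _ = (1 + |l|) ^ n * (1 + |s - m|) ^ 3 * (1 + |s|) := by ring
        _ ≤ (1 + |l|) ^ n * (1 + |s - m|) ^ n * (1 + |s|) := by
            apply mul_le_mul_of_nonneg_right _ (by positivity)
            apply mul_le_mul_of_nonneg_left (pow_le_pow_right₀ hesm1 hn3) (by positivity)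
    have d1 : (1 + |l - m|) ^ k * (1 + |m|) * (1 + |s - m|) ^ 2 ≤
        (1 + |l - s|) ^ n * (1 + |s - m|) ^ n * (1 + |s|) := by
      have p1 : (1 + |l - m|) ^ k ≤ (1 + |l - s|) ^ k * (1 + |s - m|) ^ k := by
        rw [← mul_pow]
        apply pow_le_pow_left₀ (by positivity)
        have h := peetre' (l - s) (s - m)
        rw [show (l - s) + (s - m) = l - m by ring] at h
        exact h
      calc (1 + |l - m|) ^ k * (1 + |m|) * (1 + |s - m|) ^ 2
          ≤ ((1 + |l - s|) ^ k * (1 + |s - m|) ^ k) * ((1 + |s|) * (1 + |s - m|)) *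
              (1 + |s - m|) ^ 2 := by
            apply mul_le_mul (mul_le_mul p1 hm (by positivity) (by positivity)) le_rfl
              (by positivity) (by positivity)
        _ = (1 + |l - s|) ^ k * (1 + |s - m|) ^ (k + 3) * (1 + |s|) := by ring
        _ ≤ (1 + |l - s|) ^ n * (1 + |s - m|) ^ n * (1 + |s|) := by
            apply mul_le_mul_of_nonneg_right _ (by positivity)
            apply mul_le_mul (pow_le_pow_right₀ hels1 hkn') (pow_le_pow_right₀ hesm1 hkn)
              (by positivity) (by positivity)
    have T1 : 2 * (C₁ * C₁) / ((1 + |l - s|) ^ n * (1 + |s - m|) ^ n * (1 + |s|)) ≤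
        2 * (C₁ * C₁) / ((1 + |l - m|) ^ k * (1 + |m|) * (1 + |s - m|) ^ 2) := by
      gcongr
    have T2 : 2 * (C₁ * C₁) / ((1 + |l|) ^ n * (1 + |s - m|) ^ n * (1 + |s|)) ≤
        2 * (C₁ * C₁) / ((1 + |l|) ^ k * (1 + |m|) * (1 + |s - m|) ^ 2) := by
      gcongr
    have Vsum : 2 * (C₁ * C₁) / ((1 + |l - m|) ^ k * (1 + |m|) * (1 + |s - m|) ^ 2) +
        2 * (C₁ * C₁) / ((1 + |l|) ^ k * (1 + |m|) * (1 + |s - m|) ^ 2) ≤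
        M * ((((1 + |l|) ^ k)⁻¹ + ((1 + |l - m|) ^ k)⁻¹) * (1 + |m|)⁻¹) *
          (0 + ((1 + |s - m|) ^ 2)⁻¹) := by
      have r1 : 2 * (C₁ * C₁) / ((1 + |l - m|) ^ k * (1 + |m|) * (1 + |s - m|) ^ 2) =
          2 * (C₁ * C₁) * (((1 + |l - m|) ^ k)⁻¹ * (1 + |m|)⁻¹ * ((1 + |s - m|) ^ 2)⁻¹) := by
        rw [div_eq_mul_inv, mul_inv, mul_inv]
      have r2 : 2 * (C₁ * C₁) / ((1 + |l|) ^ k * (1 + |m|) * (1 + |s - m|) ^ 2) =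
          2 * (C₁ * C₁) * (((1 + |l|) ^ k)⁻¹ * (1 + |m|)⁻¹ * ((1 + |s - m|) ^ 2)⁻¹) := by
        rw [div_eq_mul_inv, mul_inv, mul_inv]
      rw [r1, r2]
      calc 2 * (C₁ * C₁) * (((1 + |l - m|) ^ k)⁻¹ * (1 + |m|)⁻¹ * ((1 + |s - m|) ^ 2)⁻¹) +
            2 * (C₁ * C₁) * (((1 + |l|) ^ k)⁻¹ * (1 + |m|)⁻¹ * ((1 + |s - m|) ^ 2)⁻¹)
          = 2 * (C₁ * C₁) * (((((1 + |l|) ^ k)⁻¹ + ((1 + |l - m|) ^ k)⁻¹) * (1 + |m|)⁻¹) *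
              ((1 + |s - m|) ^ 2)⁻¹) := by ring
        _ ≤ M * (((((1 + |l|) ^ k)⁻¹ + ((1 + |l - m|) ^ k)⁻¹) * (1 + |m|)⁻¹) *
              ((1 + |s - m|) ^ 2)⁻¹) :=
            mul_le_mul_of_nonneg_right hM2 (by positivity)
        _ = M * ((((1 + |l|) ^ k)⁻¹ + ((1 + |l - m|) ^ k)⁻¹) * (1 + |m|)⁻¹) *
            (0 + ((1 + |s - m|) ^ 2)⁻¹) := by ring
    calc a * b / |s| = a * b * |s|⁻¹ := split
      _ ≤ _ := T
      _ = _ := Teq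
      _ ≤ 2 * (C₁ * C₁) / ((1 + |l - m|) ^ k * (1 + |m|) * (1 + |s - m|) ^ 2) +
          2 * (C₁ * C₁) / ((1 + |l|) ^ k * (1 + |m|) * (1 + |s - m|) ^ 2) := by
        rw [U1, U2] at Teq ⊢
        exact add_le_add T1 T2
      _ ≤ _ := Vsum


theorem ind_eq : (fun s : ℝ => if |s| ≤ 1 then (1:ℝ) else 0) =
    Set.indicator (Set.Icc (-1) 1) (fun _ => (1:ℝ)) := by
  funext s
  by_cases h : |s| ≤ 1
  · rw [if_pos h, Set.indicator_of_mem (by rwa [Set.mem_Icc, ← abs_le])]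
  · rw [if_neg h, Set.indicator_of_notMem (by rwa [Set.mem_Icc, ← abs_le])]

theorem ind_integrable : Integrable (fun s : ℝ => if |s| ≤ 1 then (1:ℝ) else 0) := by
  rw [ind_eq]
  rw [integrable_indicator_iff measurableSet_Icc]
  exact integrableOn_const measure_Icc_lt_top.ne

theorem ind_integral : ∫ s : ℝ, (if |s| ≤ 1 then (1:ℝ) else 0) = 2 := by
  rw [ind_eq, integral_indicator measurableSet_Icc, setIntegral_const, smul_eq_mul, mul_one,
    Real.volume_real_Icc]
  norm_num

theorem inv_sq_le (x : ℝ) : ((1 + |x|) ^ 2)⁻¹ ≤ (1 + x ^ 2)⁻¹ := by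
  have h : 1 + x ^ 2 ≤ (1 + |x|) ^ 2 := by nlinarith [abs_nonneg x, abs_mul_abs_self x, _root_.sq_abs x]
  exact inv_anti₀ (by positivity) h

theorem inv_cont (m : ℝ) : Continuous (fun s : ℝ => ((1 + |s - m|) ^ 2)⁻¹) := by
  apply Continuous.inv₀
  · exact (continuous_const.add ((continuous_id.sub continuous_const).abs)).pow 2
  · intro x; positivity

theorem inv_integrable (m : ℝ) : Integrable (fun s : ℝ => ((1 + |s - m|) ^ 2)⁻¹) := by
  apply Integrable.mono (integrable_inv_one_add_sq.comp_sub_right m)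
    (inv_cont m).aestronglyMeasurable
  filter_upwards with s
  rw [Real.norm_eq_abs, Real.norm_eq_abs, _root_.abs_of_nonneg (show (0:ℝ) ≤ ((1 + |s - m|) ^ 2)⁻¹ by positivity),
    _root_.abs_of_nonneg (show (0:ℝ) ≤ (1 + (s - m) ^ 2)⁻¹ by positivity)]
  exact inv_sq_le (s - m)

theorem inv_integral_le (m : ℝ) : ∫ s : ℝ, ((1 + |s - m|) ^ 2)⁻¹ ≤ 4 := by
  have h1 : ∫ s : ℝ, ((1 + |s - m|) ^ 2)⁻¹ ≤ ∫ s : ℝ, (1 + (s - m) ^ 2)⁻¹ := by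
    apply integral_mono (inv_integrable m) (integrable_inv_one_add_sq.comp_sub_right m)
    intro s
    exact inv_sq_le (s - m)
  have h2 : ∫ s : ℝ, (1 + (s - m) ^ 2)⁻¹ = π := by
    rw [integral_sub_right_eq_self (fun x : ℝ => (1 + x ^ 2)⁻¹) m]
    exact integral_univ_inv_one_add_sq
  linarith [Real.pi_le_four]

theorem u_integrable (m : ℝ) :
    Integrable (fun s : ℝ => (if |s| ≤ 1 then (1:ℝ) else 0) + ((1 + |s - m|) ^ 2)⁻¹) :=
  ind_integrable.add (inv_integrable m)

theorem u_integral_le (m : ℝ) :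
    ∫ s : ℝ, ((if |s| ≤ 1 then (1:ℝ) else 0) + ((1 + |s - m|) ^ 2)⁻¹) ≤ 6 := by
  rw [integral_add ind_integrable (inv_integrable m), ind_integral]
  linarith [inv_integral_le m]

theorem rpow_inv_le (x : ℝ) (k : ℕ) (B : ℝ) (hB0 : 0 ≤ B) (hBk : B ≤ k) :
    ((1 + |x|) ^ k)⁻¹ ≤ (1 + x ^ 2) ^ (-B / 2) := by
  have hb1 : (1:ℝ) ≤ 1 + |x| := by simpa using abs_nonneg x
  have hb0 : (0:ℝ) ≤ 1 + |x| := by linarith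
  have hx0 : (0:ℝ) ≤ 1 + x ^ 2 := by positivity
  have key : (1 + x ^ 2) ^ (B / 2) ≤ (1 + |x|) ^ k := by
    calc (1 + x ^ 2) ^ (B / 2) ≤ ((1 + |x|) ^ (2:ℕ)) ^ (B / 2) := by
          apply Real.rpow_le_rpow hx0 _ (by linarith)
          nlinarith [abs_nonneg x, _root_.sq_abs x]
      _ = (1 + |x|) ^ B := by
          rw [← Real.rpow_natCast (1 + |x|) 2, ← Real.rpow_mul hb0]
          norm_num
          rw [show 2 * (B / 2) = B by ring]
      _ ≤ (1 + |x|) ^ (k:ℝ) := Real.rpow_le_rpow_of_exponent_le hb1 hBk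
      _ = (1 + |x|) ^ k := Real.rpow_natCast _ k
  have hpos : (0:ℝ) < (1 + x ^ 2) ^ (B / 2) := Real.rpow_pos_of_pos (by positivity) _
  rw [show -B / 2 = -(B / 2) by ring, Real.rpow_neg hx0]
  exact inv_anti₀ hpos key


theorem bound_aux (φ : ℝ → ℂ) (hcont : Continuous φ) (n k : ℕ) (hkn : k + 3 ≤ n)
    (C₁ C₂ : ℝ) (hC₁ : 0 ≤ C₁) (hC₂ : 0 ≤ C₂)
    (hdec : ∀ x, ‖φ x‖ * (1 + |x|) ^ n ≤ C₁)
    (hdiff : ∀ l s : ℝ, |s| ≤ 1 → ‖φ (l - s) - φ l‖ * (1 + |l|) ^ n ≤ C₂ * |s|)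
    (l m : ℝ) :
    Integrable (fun s : ℝ => φ (l - s) * φ (s - m) / (Complex.I * (s:ℂ)) -
        φ l * φ (s - m) / (Complex.I * (s:ℂ))) ∧
    ‖∫ s : ℝ, (φ (l - s) * φ (s - m) / (Complex.I * (s:ℂ)) -
        φ l * φ (s - m) / (Complex.I * (s:ℂ)))‖ ≤
      4 ^ n * (C₁ * C₂ + C₁ * C₁ + 1) *
        ((((1 + |l|) ^ k)⁻¹ + ((1 + |l - m|) ^ k)⁻¹) * (1 + |m|)⁻¹) * 6 := by
  have hMP : (0:ℝ) ≤ 4 ^ n * (C₁ * C₂ + C₁ * C₁ + 1) *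
      ((((1 + |l|) ^ k)⁻¹ + ((1 + |l - m|) ^ k)⁻¹) * (1 + |m|)⁻¹) := by positivity
  have hmeas : AEStronglyMeasurable (fun s : ℝ =>
      φ (l - s) * φ (s - m) / (Complex.I * (s:ℂ)) -
        φ l * φ (s - m) / (Complex.I * (s:ℂ))) volume := by
    have m1 : Measurable fun s : ℝ => φ (l - s) :=
      (hcont.comp (continuous_const.sub continuous_id)).measurable
    have m2 : Measurable fun s : ℝ => φ (s - m) :=
      (hcont.comp (continuous_id.sub continuous_const)).measurable
    have m3 : Measurable fun s : ℝ => Complex.I * (s:ℂ) :=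
      (continuous_const.mul Complex.continuous_ofReal).measurable
    exact (((m1.mul m2).div m3).sub ((measurable_const.mul m2).div m3)).aestronglyMeasurable
  have hbound := key_pointwise φ n k hkn C₁ C₂ hC₁ hC₂ hdec hdiff l m
  have hdom : Integrable (fun s : ℝ =>
      4 ^ n * (C₁ * C₂ + C₁ * C₁ + 1) *
        ((((1 + |l|) ^ k)⁻¹ + ((1 + |l - m|) ^ k)⁻¹) * (1 + |m|)⁻¹) *
        ((if |s| ≤ 1 then 1 else 0) + ((1 + |s - m|) ^ 2)⁻¹)) :=
    (u_integrable m).const_mul _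
  have hint : Integrable (fun s : ℝ =>
      φ (l - s) * φ (s - m) / (Complex.I * (s:ℂ)) -
        φ l * φ (s - m) / (Complex.I * (s:ℂ))) :=
    Integrable.mono' hdom hmeas (Filter.Eventually.of_forall hbound)
  refine ⟨hint, ?_⟩
  calc ‖∫ s : ℝ, (φ (l - s) * φ (s - m) / (Complex.I * (s:ℂ)) -
        φ l * φ (s - m) / (Complex.I * (s:ℂ)))‖
      ≤ ∫ s : ℝ, ‖φ (l - s) * φ (s - m) / (Complex.I * (s:ℂ)) -
        φ l * φ (s - m) / (Complex.I * (s:ℂ))‖ := norm_integral_le_integral_norm _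
    _ ≤ ∫ s : ℝ, (4 ^ n * (C₁ * C₂ + C₁ * C₁ + 1) *
        ((((1 + |l|) ^ k)⁻¹ + ((1 + |l - m|) ^ k)⁻¹) * (1 + |m|)⁻¹) *
        ((if |s| ≤ 1 then 1 else 0) + ((1 + |s - m|) ^ 2)⁻¹)) :=
      integral_mono hint.norm hdom hbound
    _ = 4 ^ n * (C₁ * C₂ + C₁ * C₁ + 1) *
        ((((1 + |l|) ^ k)⁻¹ + ((1 + |l - m|) ^ k)⁻¹) * (1 + |m|)⁻¹) *
        ∫ s : ℝ, ((if |s| ≤ 1 then 1 else 0) + ((1 + |s - m|) ^ 2)⁻¹) :=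
      integral_const_mul _ _
    _ ≤ _ := mul_le_mul_of_nonneg_left (u_integral_le m) hMP


end Stmt17Aux
end


open Stmt17Aux

/-- **Kernel bound for the time-truncated Duhamel operator.**
Let `χ` be smooth and compactly supported, `χ̂` its Fourier transform, and
`K(λ,μ) = ∫ [χ̂(λ−σ)χ̂(σ−μ)/(iσ) − χ̂(λ)χ̂(σ−μ)/(iσ)] dσ` (absolutely convergent).
Then for every `B > 1`, `|K(λ,μ)| ≤ C_B (⟨λ⟩^{−B} + ⟨λ−μ⟩^{−B}) ⟨μ⟩^{−1}`. -/
theorem stmt17 (χ : ℝ → ℂ) (hχ : ContDiff ℝ (⊤ : ℕ∞) χ) (hχc : HasCompactSupport χ) :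
    (∀ l m : ℝ, Integrable (fun s : ℝ =>
        FourierTransform.fourier χ (l - s) * FourierTransform.fourier χ (s - m) /
            (Complex.I * (s : ℂ)) -
          FourierTransform.fourier χ l * FourierTransform.fourier χ (s - m) /
            (Complex.I * (s : ℂ)))) ∧
    ∀ B : ℝ, 1 < B → ∃ C > 0, ∀ l m : ℝ,
      ‖∫ s : ℝ,
          (FourierTransform.fourier χ (l - s) * FourierTransform.fourier χ (s - m) /
              (Complex.I * (s : ℂ)) -
            FourierTransform.fourier χ l * FourierTransform.fourier χ (s - m) /
              (Complex.I * (s : ℂ)))‖ ≤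
        C * ((1 + l ^ 2) ^ (-B / 2) + (1 + (l - m) ^ 2) ^ (-B / 2)) *
          (1 + m ^ 2) ^ (-(1 / 2) : ℝ) := by
  have hcoe := toSchwartz_coe χ hχ hχc
  set Φ : SchwartzMap ℝ ℂ := fourierTransformCLM ℂ (toSchwartz χ hχ hχc) with hΦ
  have hcont : Continuous (FourierTransform.fourier χ) := hcoe ▸ Φ.continuous
  constructor
  · intro l m
    obtain ⟨C₁, hC₁, hdec⟩ := decay_one_add Φ 4
    obtain ⟨C₂, hC₂, hdiff⟩ := diff_bound Φ 4
    rw [hcoe] at hdec hdiff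
    exact (bound_aux (FourierTransform.fourier χ) hcont 4 1 (by norm_num)
      C₁ C₂ hC₁ hC₂ hdec hdiff l m).1
  · intro B hB
    have hB0 : (0:ℝ) ≤ B := by linarith
    set k : ℕ := ⌈B⌉₊ with hk
    have hBk : B ≤ (k:ℝ) := Nat.le_ceil B
    set n : ℕ := k + 3 with hn
    obtain ⟨C₁, hC₁, hdec⟩ := decay_one_add Φ n
    obtain ⟨C₂, hC₂, hdiff⟩ := diff_bound Φ n
    rw [hcoe] at hdec hdiff
    have hX : (0:ℝ) < C₁ * C₂ + C₁ * C₁ + 1 := by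
      nlinarith [mul_nonneg hC₁ hC₂, mul_nonneg hC₁ hC₁]
    refine ⟨6 * (4 ^ n * (C₁ * C₂ + C₁ * C₁ + 1)),
      mul_pos (by norm_num) (mul_pos (pow_pos (by norm_num) n) hX), fun l m => ?_⟩
    have h := (bound_aux (FourierTransform.fourier χ) hcont n k (le_refl _)
      C₁ C₂ hC₁ hC₂ hdec hdiff l m).2
    refine h.trans ?_
    have h1 := rpow_inv_le l k B hB0 hBk
    have h2 := rpow_inv_le (l - m) k B hB0 hBk
    have h3 : (1 + |m|)⁻¹ ≤ (1 + m ^ 2) ^ (-(1 / 2) : ℝ) := by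
      have := rpow_inv_le m 1 1 (by norm_num) (by norm_num)
      rw [pow_one] at this
      convert this using 2
      norm_num
    calc 4 ^ n * (C₁ * C₂ + C₁ * C₁ + 1) *
          ((((1 + |l|) ^ k)⁻¹ + ((1 + |l - m|) ^ k)⁻¹) * (1 + |m|)⁻¹) * 6
        ≤ 4 ^ n * (C₁ * C₂ + C₁ * C₁ + 1) *
          (((1 + l ^ 2) ^ (-B / 2) + (1 + (l - m) ^ 2) ^ (-B / 2)) *
            (1 + m ^ 2) ^ (-(1 / 2) : ℝ)) * 6 := by
          gcongr
      _ = 6 * (4 ^ n * (C₁ * C₂ + C₁ * C₁ + 1)) *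
          ((1 + l ^ 2) ^ (-B / 2) + (1 + (l - m) ^ 2) ^ (-B / 2)) *
          (1 + m ^ 2) ^ (-(1 / 2) : ℝ) := by ring
end
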